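/- arXiv:1706.08381 — 4 statements merged into one kernel-verified Lean document; each statement's English description precedes it below -/
import Mathlib

section
/- Let f be a polynomial over ℂ of degree 7, and for 1 ≤ ρ ≤ 6 let φ_ρ denote the average of f over the multiset of the (7−ρ) roots of the ρ-th derivative f^(ρ) (counted with multiplicity). Then 37·φ₁ − 150·φ₃ + 200·φ₄ − 135·φ₅ + 48·φ₆ = 0. -/
open Polynomial

set_option maxHeartbeats 4000000
set_option maxRecDepth 100000
set_option linter.unreachableTactic false
set_option linter.unusedTactic false
set_option linter.unnecessarySeqFocus false

private lemma septic_aux1 (a0 a1 a2 a3 a4 a5 a6 a7 L x1 x2 x3 x4 x5 x6 : ℂ)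
    (h0 : 1*a1 = L*(x1*x2*x3*x4*x5*x6))
    (h1 : 2*a2 = L*((-1)*x1*x2*x3*x4*x5 + (-1)*x1*x2*x3*x4*x6 + (-1)*x1*x2*x3*x5*x6 + (-1)*x1*x2*x4*x5*x6 + (-1)*x1*x3*x4*x5*x6 + (-1)*x2*x3*x4*x5*x6))
    (h2 : 3*a3 = L*(x1*x2*x3*x4 + x1*x2*x3*x5 + x1*x2*x3*x6 + x1*x2*x4*x5 + x1*x2*x4*x6 + x1*x2*x5*x6 + x1*x3*x4*x5 + x1*x3*x4*x6 + x1*x3*x5*x6 + x1*x4*x5*x6 + x2*x3*x4*x5 + x2*x3*x4*x6 + x2*x3*x5*x6 + x2*x4*x5*x6 + x3*x4*x5*x6))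
    (h3 : 4*a4 = L*((-1)*x1*x2*x3 + (-1)*x1*x2*x4 + (-1)*x1*x2*x5 + (-1)*x1*x2*x6 + (-1)*x1*x3*x4 + (-1)*x1*x3*x5 + (-1)*x1*x3*x6 + (-1)*x1*x4*x5 + (-1)*x1*x4*x6 + (-1)*x1*x5*x6 + (-1)*x2*x3*x4 + (-1)*x2*x3*x5 + (-1)*x2*x3*x6 + (-1)*x2*x4*x5 + (-1)*x2*x4*x6 + (-1)*x2*x5*x6 + (-1)*x3*x4*x5 + (-1)*x3*x4*x6 + (-1)*x3*x5*x6 + (-1)*x4*x5*x6))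
    (h4 : 5*a5 = L*(x1*x2 + x1*x3 + x1*x4 + x1*x5 + x1*x6 + x2*x3 + x2*x4 + x2*x5 + x2*x6 + x3*x4 + x3*x5 + x3*x6 + x4*x5 + x4*x6 + x5*x6))
    (h5 : 6*a6 = L*((-1)*x1 + (-1)*x2 + (-1)*x3 + (-1)*x4 + (-1)*x5 + (-1)*x6))
    (h6 : 7*a7 = L*(1))
    : a7^7*((a0 + a1*x1^1 + a2*x1^2 + a3*x1^3 + a4*x1^4 + a5*x1^5 + a6*x1^6 + a7*x1^7) + (a0 + a1*x2^1 + a2*x2^2 + a3*x2^3 + a4*x2^4 + a5*x2^5 + a6*x2^6 + a7*x2^7) + (a0 + a1*x3^1 + a2*x3^2 + a3*x3^3 + a4*x3^4 + a5*x3^5 + a6*x3^6 + a7*x3^7) + (a0 + a1*x4^1 + a2*x4^2 + a3*x4^3 + a4*x4^4 + a5*x4^5 + a6*x4^6 + a7*x4^7) + (a0 + a1*x5^1 + a2*x5^2 + a3*x5^3 + a4*x5^4 + a5*x5^5 + a6*x5^6 + a7*x5^7) + (a0 + a1*x6^1 + a2*x6^2 + a3*x6^3 + a4*x6^4 + a5*x6^5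 + a6*x6^6 + a7*x6^7)) = 6*a0*a7^7 + (-6/7)*a1*a6*a7^6 + (-10/7)*a2*a5*a7^6 + (36/49)*a2*a6^2*a7^5 + (-12/7)*a3*a4*a7^6 + (90/49)*a3*a5*a6*a7^5 + (-216/343)*a3*a6^3*a7^4 + (-720/343)*a4*a5*a6^2*a7^4 + (50/49)*a4*a5^2*a7^5 + (1296/2401)*a4*a6^4*a7^3 + (48/49)*a4^2*a6*a7^5 + (-7776/16807)*a5*a6^5*a7^2 + (2700/2401)*a5^2*a6^3*a7^3 + (-250/343)*a5^3*a6*a7^4 + (46656/823543)*a6^7*a7 := by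
  linear_combination ((6/49)*a6*a7^6 + (1/7)*a7^7*x1 + (1/7)*a7^7*x2 + (1/7)*a7^7*x3 + (1/7)*a7^7*x4 + (1/7)*a7^7*x5 + (1/7)*a7^7*x6)*h0 + ((10/49)*a5*a7^6 + (1/49)*a6*a7^6*x1 + (1/49)*a6*a7^6*x2 + (1/49)*a6*a7^6*x3 + (1/49)*a6*a7^6*x4 + (1/49)*a6*a7^6*x5 + (1/49)*a6*a7^6*x6 + (-30/343)*a6^2*a7^5 + (1/7)*a7^7*x1^2 + (1/7)*a7^7*x2^2 + (1/7)*a7^7*x3^2 + (1/7)*a7^7*x4^2 + (1/7)*a7^7*x5^2 + (1/7)*a7^7*x6^2)*h1 + ((12/49)*a4*a7^6 + (-80/343)*a5*a6*a7^5 + (1/49)*a6*a7^6*x1^2 + (1/49)*a6*a7^6*x2^2 + (1/49)*a6*a7^6*x3^2 + (1/49)*a6*a7^6*x4^2 + (1/49)*a6*a7^6*x5^2 + (1/49)*a6*a7^6*x6^2 + (180/2401)*a6^3*a7^4 + (1/7)*a7^7*x1^3 + (1/7)*a7^7*x2^3 + (1/7)*a7^7*x3^3 + (1/7)*a7^7*x4^3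 + (1/7)*a7^7*x5^3 + (1/7)*a7^7*x6^3)*h2 + ((12/49)*a3*a7^6 + (-12/49)*a4*a6*a7^5 + (90/343)*a5*a6^2*a7^4 + (-50/343)*a5^2*a7^5 + (1/49)*a6*a7^6*x1^3 + (1/49)*a6*a7^6*x2^3 + (1/49)*a6*a7^6*x3^3 + (1/49)*a6*a7^6*x4^3 + (1/49)*a6*a7^6*x5^3 + (1/49)*a6*a7^6*x6^3 + (-1080/16807)*a6^4*a7^3 + (1/7)*a7^7*x1^4 + (1/7)*a7^7*x2^4 + (1/7)*a7^7*x3^4 + (1/7)*a7^7*x4^4 + (1/7)*a7^7*x5^4 + (1/7)*a7^7*x6^4)*h3 + ((10/49)*a2*a7^6 + (-78/343)*a3*a6*a7^5 + (-30/343)*a4*a5*a7^5 + (72/343)*a4*a6^2*a7^4 + (-6/49)*a4*a7^6*x1*x2 + (-6/49)*a4*a7^6*x1*x3 + (-6/49)*a4*a7^6*x1*x4 + (-6/49)*a4*a7^6*x1*x5 + (-6/49)*a4*a7^6*x1*x6 + (-6/49)*a4*a7^6*x2*x3 + (-6/49)*a4*a7^6*x2*x4 + (-6/49)*a4*a7^6*x2*x5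 + (-6/49)*a4*a7^6*x2*x6 + (-6/49)*a4*a7^6*x3*x4 + (-6/49)*a4*a7^6*x3*x5 + (-6/49)*a4*a7^6*x3*x6 + (-6/49)*a4*a7^6*x4*x5 + (-6/49)*a4*a7^6*x4*x6 + (-6/49)*a4*a7^6*x5*x6 + (10/49)*a5*a6*a7^5*x1*x2 + (10/49)*a5*a6*a7^5*x1*x3 + (10/49)*a5*a6*a7^5*x1*x4 + (10/49)*a5*a6*a7^5*x1*x5 + (10/49)*a5*a6*a7^5*x1*x6 + (10/49)*a5*a6*a7^5*x2*x3 + (10/49)*a5*a6*a7^5*x2*x4 + (10/49)*a5*a6*a7^5*x2*x5 + (10/49)*a5*a6*a7^5*x2*x6 + (10/49)*a5*a6*a7^5*x3*x4 + (10/49)*a5*a6*a7^5*x3*x5 + (10/49)*a5*a6*a7^5*x3*x6 + (10/49)*a5*a6*a7^5*x4*x5 + (10/49)*a5*a6*a7^5*x4*x6 + (10/49)*a5*a6*a7^5*x5*x6 + (-540/2401)*a5*a6^3*a7^3 + (10/49)*a5*a7^6*x1*x2*x3 + (10/49)*a5*a7^6*x1*x2*x4 + (10/49)*a5*a7^6*x1*x2*x5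 + (10/49)*a5*a7^6*x1*x2*x6 + (10/49)*a5*a7^6*x1*x3*x4 + (10/49)*a5*a7^6*x1*x3*x5 + (10/49)*a5*a7^6*x1*x3*x6 + (10/49)*a5*a7^6*x1*x4*x5 + (10/49)*a5*a7^6*x1*x4*x6 + (10/49)*a5*a7^6*x1*x5*x6 + (10/49)*a5*a7^6*x2*x3*x4 + (10/49)*a5*a7^6*x2*x3*x5 + (10/49)*a5*a7^6*x2*x3*x6 + (10/49)*a5*a7^6*x2*x4*x5 + (10/49)*a5*a7^6*x2*x4*x6 + (10/49)*a5*a7^6*x2*x5*x6 + (10/49)*a5*a7^6*x3*x4*x5 + (10/49)*a5*a7^6*x3*x4*x6 + (10/49)*a5*a7^6*x3*x5*x6 + (10/49)*a5*a7^6*x4*x5*x6 + (50/343)*a5^2*a6*a7^4 + (1/49)*a6*a7^6*x1^4 + (1/49)*a6*a7^6*x2^4 + (1/49)*a6*a7^6*x3^4 + (1/49)*a6*a7^6*x4^4 + (1/49)*a6*a7^6*x5^4 + (1/49)*a6*a7^6*x6^4 + (-30/343)*a6^2*a7^5*x1*x2*x3 + (-30/343)*a6^2*a7^5*x1*x2*x4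 + (-30/343)*a6^2*a7^5*x1*x2*x5 + (-30/343)*a6^2*a7^5*x1*x2*x6 + (-30/343)*a6^2*a7^5*x1*x3*x4 + (-30/343)*a6^2*a7^5*x1*x3*x5 + (-30/343)*a6^2*a7^5*x1*x3*x6 + (-30/343)*a6^2*a7^5*x1*x4*x5 + (-30/343)*a6^2*a7^5*x1*x4*x6 + (-30/343)*a6^2*a7^5*x1*x5*x6 + (-30/343)*a6^2*a7^5*x2*x3*x4 + (-30/343)*a6^2*a7^5*x2*x3*x5 + (-30/343)*a6^2*a7^5*x2*x3*x6 + (-30/343)*a6^2*a7^5*x2*x4*x5 + (-30/343)*a6^2*a7^5*x2*x4*x6 + (-30/343)*a6^2*a7^5*x2*x5*x6 + (-30/343)*a6^2*a7^5*x3*x4*x5 + (-30/343)*a6^2*a7^5*x3*x4*x6 + (-30/343)*a6^2*a7^5*x3*x5*x6 + (-30/343)*a6^2*a7^5*x4*x5*x6 + (-180/2401)*a6^3*a7^4*x1*x2 + (-180/2401)*a6^3*a7^4*x1*x3 + (-180/2401)*a6^3*a7^4*x1*x4 + (-180/2401)*a6^3*a7^4*x1*x5 + (-180/2401)*a6^3*a7^4*x1*x6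 + (-180/2401)*a6^3*a7^4*x2*x3 + (-180/2401)*a6^3*a7^4*x2*x4 + (-180/2401)*a6^3*a7^4*x2*x5 + (-180/2401)*a6^3*a7^4*x2*x6 + (-180/2401)*a6^3*a7^4*x3*x4 + (-180/2401)*a6^3*a7^4*x3*x5 + (-180/2401)*a6^3*a7^4*x3*x6 + (-180/2401)*a6^3*a7^4*x4*x5 + (-180/2401)*a6^3*a7^4*x4*x6 + (-180/2401)*a6^3*a7^4*x5*x6 + (6480/117649)*a6^5*a7^2 + (1/7)*a7^7*x1^5 + (1/7)*a7^7*x2^5 + (1/7)*a7^7*x3^5 + (1/7)*a7^7*x4^5 + (1/7)*a7^7*x5^5 + (1/7)*a7^7*x6^5)*h4 + ((6/49)*a1*a7^6 + (-32/343)*a2*a6*a7^5 + (5/49)*a2*a7^6*x1 + (5/49)*a2*a7^6*x2 + (5/49)*a2*a7^6*x3 + (5/49)*a2*a7^6*x4 + (5/49)*a2*a7^6*x5 + (5/49)*a2*a7^6*x6 + (-27/343)*a3*a6*a7^5*x1 + (-27/343)*a3*a6*a7^5*x2 + (-27/343)*a3*a6*a7^5*x3 + (-27/343)*a3*a6*a7^5*x4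 + (-27/343)*a3*a6*a7^5*x5 + (-27/343)*a3*a6*a7^5*x6 + (162/2401)*a3*a6^2*a7^4 + (-4/49)*a3*a7^6*x1*x2 + (-4/49)*a3*a7^6*x1*x3 + (-4/49)*a3*a7^6*x1*x4 + (-4/49)*a3*a7^6*x1*x5 + (-4/49)*a3*a7^6*x1*x6 + (4/49)*a3*a7^6*x1^2 + (-4/49)*a3*a7^6*x2*x3 + (-4/49)*a3*a7^6*x2*x4 + (-4/49)*a3*a7^6*x2*x5 + (-4/49)*a3*a7^6*x2*x6 + (4/49)*a3*a7^6*x2^2 + (-4/49)*a3*a7^6*x3*x4 + (-4/49)*a3*a7^6*x3*x5 + (-4/49)*a3*a7^6*x3*x6 + (4/49)*a3*a7^6*x3^2 + (-4/49)*a3*a7^6*x4*x5 + (-4/49)*a3*a7^6*x4*x6 + (4/49)*a3*a7^6*x4^2 + (-4/49)*a3*a7^6*x5*x6 + (4/49)*a3*a7^6*x5^2 + (4/49)*a3*a7^6*x6^2 + (40/343)*a4*a6*a7^5*x1*x2 + (40/343)*a4*a6*a7^5*x1*x3 + (40/343)*a4*a6*a7^5*x1*x4 + (40/343)*a4*a6*a7^5*x1*x5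 + (40/343)*a4*a6*a7^5*x1*x6 + (-22/343)*a4*a6*a7^5*x1^2 + (40/343)*a4*a6*a7^5*x2*x3 + (40/343)*a4*a6*a7^5*x2*x4 + (40/343)*a4*a6*a7^5*x2*x5 + (40/343)*a4*a6*a7^5*x2*x6 + (-22/343)*a4*a6*a7^5*x2^2 + (40/343)*a4*a6*a7^5*x3*x4 + (40/343)*a4*a6*a7^5*x3*x5 + (40/343)*a4*a6*a7^5*x3*x6 + (-22/343)*a4*a6*a7^5*x3^2 + (40/343)*a4*a6*a7^5*x4*x5 + (40/343)*a4*a6*a7^5*x4*x6 + (-22/343)*a4*a6*a7^5*x4^2 + (40/343)*a4*a6*a7^5*x5*x6 + (-22/343)*a4*a6*a7^5*x5^2 + (-22/343)*a4*a6*a7^5*x6^2 + (132/2401)*a4*a6^2*a7^4*x1 + (132/2401)*a4*a6^2*a7^4*x2 + (132/2401)*a4*a6^2*a7^4*x3 + (132/2401)*a4*a6^2*a7^4*x4 + (132/2401)*a4*a6^2*a7^4*x5 + (132/2401)*a4*a6^2*a7^4*x6 + (-792/16807)*a4*a6^3*a7^3 + (-6/49)*a4*a7^6*x1*x2*x3 +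 (-6/49)*a4*a7^6*x1*x2*x4 + (-6/49)*a4*a7^6*x1*x2*x5 + (-6/49)*a4*a7^6*x1*x2*x6 + (-3/49)*a4*a7^6*x1*x2^2 + (-6/49)*a4*a7^6*x1*x3*x4 + (-6/49)*a4*a7^6*x1*x3*x5 + (-6/49)*a4*a7^6*x1*x3*x6 + (-3/49)*a4*a7^6*x1*x3^2 + (-6/49)*a4*a7^6*x1*x4*x5 + (-6/49)*a4*a7^6*x1*x4*x6 + (-3/49)*a4*a7^6*x1*x4^2 + (-6/49)*a4*a7^6*x1*x5*x6 + (-3/49)*a4*a7^6*x1*x5^2 + (-3/49)*a4*a7^6*x1*x6^2 + (-3/49)*a4*a7^6*x1^2*x2 + (-3/49)*a4*a7^6*x1^2*x3 + (-3/49)*a4*a7^6*x1^2*x4 + (-3/49)*a4*a7^6*x1^2*x5 + (-3/49)*a4*a7^6*x1^2*x6 + (3/49)*a4*a7^6*x1^3 + (-6/49)*a4*a7^6*x2*x3*x4 + (-6/49)*a4*a7^6*x2*x3*x5 + (-6/49)*a4*a7^6*x2*x3*x6 + (-3/49)*a4*a7^6*x2*x3^2 + (-6/49)*a4*a7^6*x2*x4*x5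 + (-6/49)*a4*a7^6*x2*x4*x6 + (-3/49)*a4*a7^6*x2*x4^2 + (-6/49)*a4*a7^6*x2*x5*x6 + (-3/49)*a4*a7^6*x2*x5^2 + (-3/49)*a4*a7^6*x2*x6^2 + (-3/49)*a4*a7^6*x2^2*x3 + (-3/49)*a4*a7^6*x2^2*x4 + (-3/49)*a4*a7^6*x2^2*x5 + (-3/49)*a4*a7^6*x2^2*x6 + (3/49)*a4*a7^6*x2^3 + (-6/49)*a4*a7^6*x3*x4*x5 + (-6/49)*a4*a7^6*x3*x4*x6 + (-3/49)*a4*a7^6*x3*x4^2 + (-6/49)*a4*a7^6*x3*x5*x6 + (-3/49)*a4*a7^6*x3*x5^2 + (-3/49)*a4*a7^6*x3*x6^2 + (-3/49)*a4*a7^6*x3^2*x4 + (-3/49)*a4*a7^6*x3^2*x5 + (-3/49)*a4*a7^6*x3^2*x6 + (3/49)*a4*a7^6*x3^3 + (-6/49)*a4*a7^6*x4*x5*x6 + (-3/49)*a4*a7^6*x4*x5^2 + (-3/49)*a4*a7^6*x4*x6^2 + (-3/49)*a4*a7^6*x4^2*x5 + (-3/49)*a4*a7^6*x4^2*x6 +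 (3/49)*a4*a7^6*x4^3 + (-3/49)*a4*a7^6*x5*x6^2 + (-3/49)*a4*a7^6*x5^2*x6 + (3/49)*a4*a7^6*x5^3 + (3/49)*a4*a7^6*x6^3 + (58/343)*a5*a6*a7^5*x1*x2*x3 + (58/343)*a5*a6*a7^5*x1*x2*x4 + (58/343)*a5*a6*a7^5*x1*x2*x5 + (58/343)*a5*a6*a7^5*x1*x2*x6 + (29/343)*a5*a6*a7^5*x1*x2^2 + (58/343)*a5*a6*a7^5*x1*x3*x4 + (58/343)*a5*a6*a7^5*x1*x3*x5 + (58/343)*a5*a6*a7^5*x1*x3*x6 + (29/343)*a5*a6*a7^5*x1*x3^2 + (58/343)*a5*a6*a7^5*x1*x4*x5 + (58/343)*a5*a6*a7^5*x1*x4*x6 + (29/343)*a5*a6*a7^5*x1*x4^2 + (58/343)*a5*a6*a7^5*x1*x5*x6 + (29/343)*a5*a6*a7^5*x1*x5^2 + (29/343)*a5*a6*a7^5*x1*x6^2 + (29/343)*a5*a6*a7^5*x1^2*x2 + (29/343)*a5*a6*a7^5*x1^2*x3 + (29/343)*a5*a6*a7^5*x1^2*x4 + (29/343)*a5*a6*a7^5*x1^2*x5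 + (29/343)*a5*a6*a7^5*x1^2*x6 + (-17/343)*a5*a6*a7^5*x1^3 + (58/343)*a5*a6*a7^5*x2*x3*x4 + (58/343)*a5*a6*a7^5*x2*x3*x5 + (58/343)*a5*a6*a7^5*x2*x3*x6 + (29/343)*a5*a6*a7^5*x2*x3^2 + (58/343)*a5*a6*a7^5*x2*x4*x5 + (58/343)*a5*a6*a7^5*x2*x4*x6 + (29/343)*a5*a6*a7^5*x2*x4^2 + (58/343)*a5*a6*a7^5*x2*x5*x6 + (29/343)*a5*a6*a7^5*x2*x5^2 + (29/343)*a5*a6*a7^5*x2*x6^2 + (29/343)*a5*a6*a7^5*x2^2*x3 + (29/343)*a5*a6*a7^5*x2^2*x4 + (29/343)*a5*a6*a7^5*x2^2*x5 + (29/343)*a5*a6*a7^5*x2^2*x6 + (-17/343)*a5*a6*a7^5*x2^3 + (58/343)*a5*a6*a7^5*x3*x4*x5 + (58/343)*a5*a6*a7^5*x3*x4*x6 + (29/343)*a5*a6*a7^5*x3*x4^2 + (58/343)*a5*a6*a7^5*x3*x5*x6 + (29/343)*a5*a6*a7^5*x3*x5^2 + (29/343)*a5*a6*a7^5*x3*x6^2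 + (29/343)*a5*a6*a7^5*x3^2*x4 + (29/343)*a5*a6*a7^5*x3^2*x5 + (29/343)*a5*a6*a7^5*x3^2*x6 + (-17/343)*a5*a6*a7^5*x3^3 + (58/343)*a5*a6*a7^5*x4*x5*x6 + (29/343)*a5*a6*a7^5*x4*x5^2 + (29/343)*a5*a6*a7^5*x4*x6^2 + (29/343)*a5*a6*a7^5*x4^2*x5 + (29/343)*a5*a6*a7^5*x4^2*x6 + (-17/343)*a5*a6*a7^5*x4^3 + (29/343)*a5*a6*a7^5*x5*x6^2 + (29/343)*a5*a6*a7^5*x5^2*x6 + (-17/343)*a5*a6*a7^5*x5^3 + (-17/343)*a5*a6*a7^5*x6^3 + (-276/2401)*a5*a6^2*a7^4*x1*x2 + (-276/2401)*a5*a6^2*a7^4*x1*x3 + (-276/2401)*a5*a6^2*a7^4*x1*x4 + (-276/2401)*a5*a6^2*a7^4*x1*x5 + (-276/2401)*a5*a6^2*a7^4*x1*x6 + (102/2401)*a5*a6^2*a7^4*x1^2 + (-276/2401)*a5*a6^2*a7^4*x2*x3 + (-276/2401)*a5*a6^2*a7^4*x2*x4 + (-276/2401)*a5*a6^2*a7^4*x2*x5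 + (-276/2401)*a5*a6^2*a7^4*x2*x6 + (102/2401)*a5*a6^2*a7^4*x2^2 + (-276/2401)*a5*a6^2*a7^4*x3*x4 + (-276/2401)*a5*a6^2*a7^4*x3*x5 + (-276/2401)*a5*a6^2*a7^4*x3*x6 + (102/2401)*a5*a6^2*a7^4*x3^2 + (-276/2401)*a5*a6^2*a7^4*x4*x5 + (-276/2401)*a5*a6^2*a7^4*x4*x6 + (102/2401)*a5*a6^2*a7^4*x4^2 + (-276/2401)*a5*a6^2*a7^4*x5*x6 + (102/2401)*a5*a6^2*a7^4*x5^2 + (102/2401)*a5*a6^2*a7^4*x6^2 + (-612/16807)*a5*a6^3*a7^3*x1 + (-612/16807)*a5*a6^3*a7^3*x2 + (-612/16807)*a5*a6^3*a7^3*x3 + (-612/16807)*a5*a6^3*a7^3*x4 + (-612/16807)*a5*a6^3*a7^3*x5 + (-612/16807)*a5*a6^3*a7^3*x6 + (3672/117649)*a5*a6^4*a7^2 + (18/49)*a5*a7^6*x1*x2*x3*x4 + (18/49)*a5*a7^6*x1*x2*x3*x5 + (18/49)*a5*a7^6*x1*x2*x3*x6 + (4/49)*a5*a7^6*x1*x2*x3^2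 + (18/49)*a5*a7^6*x1*x2*x4*x5 + (18/49)*a5*a7^6*x1*x2*x4*x6 + (4/49)*a5*a7^6*x1*x2*x4^2 + (18/49)*a5*a7^6*x1*x2*x5*x6 + (4/49)*a5*a7^6*x1*x2*x5^2 + (4/49)*a5*a7^6*x1*x2*x6^2 + (4/49)*a5*a7^6*x1*x2^2*x3 + (4/49)*a5*a7^6*x1*x2^2*x4 + (4/49)*a5*a7^6*x1*x2^2*x5 + (4/49)*a5*a7^6*x1*x2^2*x6 + (-2/49)*a5*a7^6*x1*x2^3 + (18/49)*a5*a7^6*x1*x3*x4*x5 + (18/49)*a5*a7^6*x1*x3*x4*x6 + (4/49)*a5*a7^6*x1*x3*x4^2 + (18/49)*a5*a7^6*x1*x3*x5*x6 + (4/49)*a5*a7^6*x1*x3*x5^2 + (4/49)*a5*a7^6*x1*x3*x6^2 + (4/49)*a5*a7^6*x1*x3^2*x4 + (4/49)*a5*a7^6*x1*x3^2*x5 + (4/49)*a5*a7^6*x1*x3^2*x6 + (-2/49)*a5*a7^6*x1*x3^3 + (18/49)*a5*a7^6*x1*x4*x5*x6 + (4/49)*a5*a7^6*x1*x4*x5^2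 + (4/49)*a5*a7^6*x1*x4*x6^2 + (4/49)*a5*a7^6*x1*x4^2*x5 + (4/49)*a5*a7^6*x1*x4^2*x6 + (-2/49)*a5*a7^6*x1*x4^3 + (4/49)*a5*a7^6*x1*x5*x6^2 + (4/49)*a5*a7^6*x1*x5^2*x6 + (-2/49)*a5*a7^6*x1*x5^3 + (-2/49)*a5*a7^6*x1*x6^3 + (4/49)*a5*a7^6*x1^2*x2*x3 + (4/49)*a5*a7^6*x1^2*x2*x4 + (4/49)*a5*a7^6*x1^2*x2*x5 + (4/49)*a5*a7^6*x1^2*x2*x6 + (2/49)*a5*a7^6*x1^2*x2^2 + (4/49)*a5*a7^6*x1^2*x3*x4 + (4/49)*a5*a7^6*x1^2*x3*x5 + (4/49)*a5*a7^6*x1^2*x3*x6 + (2/49)*a5*a7^6*x1^2*x3^2 + (4/49)*a5*a7^6*x1^2*x4*x5 + (4/49)*a5*a7^6*x1^2*x4*x6 + (2/49)*a5*a7^6*x1^2*x4^2 + (4/49)*a5*a7^6*x1^2*x5*x6 + (2/49)*a5*a7^6*x1^2*x5^2 + (2/49)*a5*a7^6*x1^2*x6^2 + (-2/49)*a5*a7^6*x1^3*x2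 + (-2/49)*a5*a7^6*x1^3*x3 + (-2/49)*a5*a7^6*x1^3*x4 + (-2/49)*a5*a7^6*x1^3*x5 + (-2/49)*a5*a7^6*x1^3*x6 + (2/49)*a5*a7^6*x1^4 + (18/49)*a5*a7^6*x2*x3*x4*x5 + (18/49)*a5*a7^6*x2*x3*x4*x6 + (4/49)*a5*a7^6*x2*x3*x4^2 + (18/49)*a5*a7^6*x2*x3*x5*x6 + (4/49)*a5*a7^6*x2*x3*x5^2 + (4/49)*a5*a7^6*x2*x3*x6^2 + (4/49)*a5*a7^6*x2*x3^2*x4 + (4/49)*a5*a7^6*x2*x3^2*x5 + (4/49)*a5*a7^6*x2*x3^2*x6 + (-2/49)*a5*a7^6*x2*x3^3 + (18/49)*a5*a7^6*x2*x4*x5*x6 + (4/49)*a5*a7^6*x2*x4*x5^2 + (4/49)*a5*a7^6*x2*x4*x6^2 + (4/49)*a5*a7^6*x2*x4^2*x5 + (4/49)*a5*a7^6*x2*x4^2*x6 + (-2/49)*a5*a7^6*x2*x4^3 + (4/49)*a5*a7^6*x2*x5*x6^2 + (4/49)*a5*a7^6*x2*x5^2*x6 + (-2/49)*a5*a7^6*x2*x5^3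 + (-2/49)*a5*a7^6*x2*x6^3 + (4/49)*a5*a7^6*x2^2*x3*x4 + (4/49)*a5*a7^6*x2^2*x3*x5 + (4/49)*a5*a7^6*x2^2*x3*x6 + (2/49)*a5*a7^6*x2^2*x3^2 + (4/49)*a5*a7^6*x2^2*x4*x5 + (4/49)*a5*a7^6*x2^2*x4*x6 + (2/49)*a5*a7^6*x2^2*x4^2 + (4/49)*a5*a7^6*x2^2*x5*x6 + (2/49)*a5*a7^6*x2^2*x5^2 + (2/49)*a5*a7^6*x2^2*x6^2 + (-2/49)*a5*a7^6*x2^3*x3 + (-2/49)*a5*a7^6*x2^3*x4 + (-2/49)*a5*a7^6*x2^3*x5 + (-2/49)*a5*a7^6*x2^3*x6 + (2/49)*a5*a7^6*x2^4 + (18/49)*a5*a7^6*x3*x4*x5*x6 + (4/49)*a5*a7^6*x3*x4*x5^2 + (4/49)*a5*a7^6*x3*x4*x6^2 + (4/49)*a5*a7^6*x3*x4^2*x5 + (4/49)*a5*a7^6*x3*x4^2*x6 + (-2/49)*a5*a7^6*x3*x4^3 + (4/49)*a5*a7^6*x3*x5*x6^2 + (4/49)*a5*a7^6*x3*x5^2*x6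 + (-2/49)*a5*a7^6*x3*x5^3 + (-2/49)*a5*a7^6*x3*x6^3 + (4/49)*a5*a7^6*x3^2*x4*x5 + (4/49)*a5*a7^6*x3^2*x4*x6 + (2/49)*a5*a7^6*x3^2*x4^2 + (4/49)*a5*a7^6*x3^2*x5*x6 + (2/49)*a5*a7^6*x3^2*x5^2 + (2/49)*a5*a7^6*x3^2*x6^2 + (-2/49)*a5*a7^6*x3^3*x4 + (-2/49)*a5*a7^6*x3^3*x5 + (-2/49)*a5*a7^6*x3^3*x6 + (2/49)*a5*a7^6*x3^4 + (4/49)*a5*a7^6*x4*x5*x6^2 + (4/49)*a5*a7^6*x4*x5^2*x6 + (-2/49)*a5*a7^6*x4*x5^3 + (-2/49)*a5*a7^6*x4*x6^3 + (4/49)*a5*a7^6*x4^2*x5*x6 + (2/49)*a5*a7^6*x4^2*x5^2 + (2/49)*a5*a7^6*x4^2*x6^2 + (-2/49)*a5*a7^6*x4^3*x5 + (-2/49)*a5*a7^6*x4^3*x6 + (2/49)*a5*a7^6*x4^4 + (-2/49)*a5*a7^6*x5*x6^3 + (2/49)*a5*a7^6*x5^2*x6^2 + (-2/49)*a5*a7^6*x5^3*x6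 + (2/49)*a5*a7^6*x5^4 + (2/49)*a5*a7^6*x6^4 + (1/49)*a6*a7^6*x1^5 + (1/49)*a6*a7^6*x2^5 + (1/49)*a6*a7^6*x3^5 + (1/49)*a6*a7^6*x4^5 + (1/49)*a6*a7^6*x5^5 + (1/49)*a6*a7^6*x6^5 + (-54/343)*a6^2*a7^5*x1*x2*x3*x4 + (-54/343)*a6^2*a7^5*x1*x2*x3*x5 + (-54/343)*a6^2*a7^5*x1*x2*x3*x6 + (-12/343)*a6^2*a7^5*x1*x2*x3^2 + (-54/343)*a6^2*a7^5*x1*x2*x4*x5 + (-54/343)*a6^2*a7^5*x1*x2*x4*x6 + (-12/343)*a6^2*a7^5*x1*x2*x4^2 + (-54/343)*a6^2*a7^5*x1*x2*x5*x6 + (-12/343)*a6^2*a7^5*x1*x2*x5^2 + (-12/343)*a6^2*a7^5*x1*x2*x6^2 + (-12/343)*a6^2*a7^5*x1*x2^2*x3 + (-12/343)*a6^2*a7^5*x1*x2^2*x4 + (-12/343)*a6^2*a7^5*x1*x2^2*x5 + (-12/343)*a6^2*a7^5*x1*x2^2*x6 + (6/343)*a6^2*a7^5*x1*x2^3 + (-54/343)*a6^2*a7^5*x1*x3*x4*x5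 + (-54/343)*a6^2*a7^5*x1*x3*x4*x6 + (-12/343)*a6^2*a7^5*x1*x3*x4^2 + (-54/343)*a6^2*a7^5*x1*x3*x5*x6 + (-12/343)*a6^2*a7^5*x1*x3*x5^2 + (-12/343)*a6^2*a7^5*x1*x3*x6^2 + (-12/343)*a6^2*a7^5*x1*x3^2*x4 + (-12/343)*a6^2*a7^5*x1*x3^2*x5 + (-12/343)*a6^2*a7^5*x1*x3^2*x6 + (6/343)*a6^2*a7^5*x1*x3^3 + (-54/343)*a6^2*a7^5*x1*x4*x5*x6 + (-12/343)*a6^2*a7^5*x1*x4*x5^2 + (-12/343)*a6^2*a7^5*x1*x4*x6^2 + (-12/343)*a6^2*a7^5*x1*x4^2*x5 + (-12/343)*a6^2*a7^5*x1*x4^2*x6 + (6/343)*a6^2*a7^5*x1*x4^3 + (-12/343)*a6^2*a7^5*x1*x5*x6^2 + (-12/343)*a6^2*a7^5*x1*x5^2*x6 + (6/343)*a6^2*a7^5*x1*x5^3 + (6/343)*a6^2*a7^5*x1*x6^3 + (-12/343)*a6^2*a7^5*x1^2*x2*x3 + (-12/343)*a6^2*a7^5*x1^2*x2*x4 + (-12/343)*a6^2*a7^5*x1^2*x2*x5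 + (-12/343)*a6^2*a7^5*x1^2*x2*x6 + (-6/343)*a6^2*a7^5*x1^2*x2^2 + (-12/343)*a6^2*a7^5*x1^2*x3*x4 + (-12/343)*a6^2*a7^5*x1^2*x3*x5 + (-12/343)*a6^2*a7^5*x1^2*x3*x6 + (-6/343)*a6^2*a7^5*x1^2*x3^2 + (-12/343)*a6^2*a7^5*x1^2*x4*x5 + (-12/343)*a6^2*a7^5*x1^2*x4*x6 + (-6/343)*a6^2*a7^5*x1^2*x4^2 + (-12/343)*a6^2*a7^5*x1^2*x5*x6 + (-6/343)*a6^2*a7^5*x1^2*x5^2 + (-6/343)*a6^2*a7^5*x1^2*x6^2 + (6/343)*a6^2*a7^5*x1^3*x2 + (6/343)*a6^2*a7^5*x1^3*x3 + (6/343)*a6^2*a7^5*x1^3*x4 + (6/343)*a6^2*a7^5*x1^3*x5 + (6/343)*a6^2*a7^5*x1^3*x6 + (-6/343)*a6^2*a7^5*x1^4 + (-54/343)*a6^2*a7^5*x2*x3*x4*x5 + (-54/343)*a6^2*a7^5*x2*x3*x4*x6 + (-12/343)*a6^2*a7^5*x2*x3*x4^2 + (-54/343)*a6^2*a7^5*x2*x3*x5*x6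 + (-12/343)*a6^2*a7^5*x2*x3*x5^2 + (-12/343)*a6^2*a7^5*x2*x3*x6^2 + (-12/343)*a6^2*a7^5*x2*x3^2*x4 + (-12/343)*a6^2*a7^5*x2*x3^2*x5 + (-12/343)*a6^2*a7^5*x2*x3^2*x6 + (6/343)*a6^2*a7^5*x2*x3^3 + (-54/343)*a6^2*a7^5*x2*x4*x5*x6 + (-12/343)*a6^2*a7^5*x2*x4*x5^2 + (-12/343)*a6^2*a7^5*x2*x4*x6^2 + (-12/343)*a6^2*a7^5*x2*x4^2*x5 + (-12/343)*a6^2*a7^5*x2*x4^2*x6 + (6/343)*a6^2*a7^5*x2*x4^3 + (-12/343)*a6^2*a7^5*x2*x5*x6^2 + (-12/343)*a6^2*a7^5*x2*x5^2*x6 + (6/343)*a6^2*a7^5*x2*x5^3 + (6/343)*a6^2*a7^5*x2*x6^3 + (-12/343)*a6^2*a7^5*x2^2*x3*x4 + (-12/343)*a6^2*a7^5*x2^2*x3*x5 + (-12/343)*a6^2*a7^5*x2^2*x3*x6 + (-6/343)*a6^2*a7^5*x2^2*x3^2 + (-12/343)*a6^2*a7^5*x2^2*x4*x5 + (-12/343)*a6^2*a7^5*x2^2*x4*x6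 + (-6/343)*a6^2*a7^5*x2^2*x4^2 + (-12/343)*a6^2*a7^5*x2^2*x5*x6 + (-6/343)*a6^2*a7^5*x2^2*x5^2 + (-6/343)*a6^2*a7^5*x2^2*x6^2 + (6/343)*a6^2*a7^5*x2^3*x3 + (6/343)*a6^2*a7^5*x2^3*x4 + (6/343)*a6^2*a7^5*x2^3*x5 + (6/343)*a6^2*a7^5*x2^3*x6 + (-6/343)*a6^2*a7^5*x2^4 + (-54/343)*a6^2*a7^5*x3*x4*x5*x6 + (-12/343)*a6^2*a7^5*x3*x4*x5^2 + (-12/343)*a6^2*a7^5*x3*x4*x6^2 + (-12/343)*a6^2*a7^5*x3*x4^2*x5 + (-12/343)*a6^2*a7^5*x3*x4^2*x6 + (6/343)*a6^2*a7^5*x3*x4^3 + (-12/343)*a6^2*a7^5*x3*x5*x6^2 + (-12/343)*a6^2*a7^5*x3*x5^2*x6 + (6/343)*a6^2*a7^5*x3*x5^3 + (6/343)*a6^2*a7^5*x3*x6^3 + (-12/343)*a6^2*a7^5*x3^2*x4*x5 + (-12/343)*a6^2*a7^5*x3^2*x4*x6 + (-6/343)*a6^2*a7^5*x3^2*x4^2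 + (-12/343)*a6^2*a7^5*x3^2*x5*x6 + (-6/343)*a6^2*a7^5*x3^2*x5^2 + (-6/343)*a6^2*a7^5*x3^2*x6^2 + (6/343)*a6^2*a7^5*x3^3*x4 + (6/343)*a6^2*a7^5*x3^3*x5 + (6/343)*a6^2*a7^5*x3^3*x6 + (-6/343)*a6^2*a7^5*x3^4 + (-12/343)*a6^2*a7^5*x4*x5*x6^2 + (-12/343)*a6^2*a7^5*x4*x5^2*x6 + (6/343)*a6^2*a7^5*x4*x5^3 + (6/343)*a6^2*a7^5*x4*x6^3 + (-12/343)*a6^2*a7^5*x4^2*x5*x6 + (-6/343)*a6^2*a7^5*x4^2*x5^2 + (-6/343)*a6^2*a7^5*x4^2*x6^2 + (6/343)*a6^2*a7^5*x4^3*x5 + (6/343)*a6^2*a7^5*x4^3*x6 + (-6/343)*a6^2*a7^5*x4^4 + (6/343)*a6^2*a7^5*x5*x6^3 + (-6/343)*a6^2*a7^5*x5^2*x6^2 + (6/343)*a6^2*a7^5*x5^3*x6 + (-6/343)*a6^2*a7^5*x5^4 + (-6/343)*a6^2*a7^5*x6^4 + (-144/2401)*a6^3*a7^4*x1*x2*x3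 + (-144/2401)*a6^3*a7^4*x1*x2*x4 + (-144/2401)*a6^3*a7^4*x1*x2*x5 + (-144/2401)*a6^3*a7^4*x1*x2*x6 + (-72/2401)*a6^3*a7^4*x1*x2^2 + (-144/2401)*a6^3*a7^4*x1*x3*x4 + (-144/2401)*a6^3*a7^4*x1*x3*x5 + (-144/2401)*a6^3*a7^4*x1*x3*x6 + (-72/2401)*a6^3*a7^4*x1*x3^2 + (-144/2401)*a6^3*a7^4*x1*x4*x5 + (-144/2401)*a6^3*a7^4*x1*x4*x6 + (-72/2401)*a6^3*a7^4*x1*x4^2 + (-144/2401)*a6^3*a7^4*x1*x5*x6 + (-72/2401)*a6^3*a7^4*x1*x5^2 + (-72/2401)*a6^3*a7^4*x1*x6^2 + (-72/2401)*a6^3*a7^4*x1^2*x2 + (-72/2401)*a6^3*a7^4*x1^2*x3 + (-72/2401)*a6^3*a7^4*x1^2*x4 + (-72/2401)*a6^3*a7^4*x1^2*x5 + (-72/2401)*a6^3*a7^4*x1^2*x6 + (36/2401)*a6^3*a7^4*x1^3 + (-144/2401)*a6^3*a7^4*x2*x3*x4 + (-144/2401)*a6^3*a7^4*x2*x3*x5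 + (-144/2401)*a6^3*a7^4*x2*x3*x6 + (-72/2401)*a6^3*a7^4*x2*x3^2 + (-144/2401)*a6^3*a7^4*x2*x4*x5 + (-144/2401)*a6^3*a7^4*x2*x4*x6 + (-72/2401)*a6^3*a7^4*x2*x4^2 + (-144/2401)*a6^3*a7^4*x2*x5*x6 + (-72/2401)*a6^3*a7^4*x2*x5^2 + (-72/2401)*a6^3*a7^4*x2*x6^2 + (-72/2401)*a6^3*a7^4*x2^2*x3 + (-72/2401)*a6^3*a7^4*x2^2*x4 + (-72/2401)*a6^3*a7^4*x2^2*x5 + (-72/2401)*a6^3*a7^4*x2^2*x6 + (36/2401)*a6^3*a7^4*x2^3 + (-144/2401)*a6^3*a7^4*x3*x4*x5 + (-144/2401)*a6^3*a7^4*x3*x4*x6 + (-72/2401)*a6^3*a7^4*x3*x4^2 + (-144/2401)*a6^3*a7^4*x3*x5*x6 + (-72/2401)*a6^3*a7^4*x3*x5^2 + (-72/2401)*a6^3*a7^4*x3*x6^2 + (-72/2401)*a6^3*a7^4*x3^2*x4 + (-72/2401)*a6^3*a7^4*x3^2*x5 + (-72/2401)*a6^3*a7^4*x3^2*x6 + (36/2401)*a6^3*a7^4*x3^3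 + (-144/2401)*a6^3*a7^4*x4*x5*x6 + (-72/2401)*a6^3*a7^4*x4*x5^2 + (-72/2401)*a6^3*a7^4*x4*x6^2 + (-72/2401)*a6^3*a7^4*x4^2*x5 + (-72/2401)*a6^3*a7^4*x4^2*x6 + (36/2401)*a6^3*a7^4*x4^3 + (-72/2401)*a6^3*a7^4*x5*x6^2 + (-72/2401)*a6^3*a7^4*x5^2*x6 + (36/2401)*a6^3*a7^4*x5^3 + (36/2401)*a6^3*a7^4*x6^3 + (648/16807)*a6^4*a7^3*x1*x2 + (648/16807)*a6^4*a7^3*x1*x3 + (648/16807)*a6^4*a7^3*x1*x4 + (648/16807)*a6^4*a7^3*x1*x5 + (648/16807)*a6^4*a7^3*x1*x6 + (-216/16807)*a6^4*a7^3*x1^2 + (648/16807)*a6^4*a7^3*x2*x3 + (648/16807)*a6^4*a7^3*x2*x4 + (648/16807)*a6^4*a7^3*x2*x5 + (648/16807)*a6^4*a7^3*x2*x6 + (-216/16807)*a6^4*a7^3*x2^2 + (648/16807)*a6^4*a7^3*x3*x4 + (648/16807)*a6^4*a7^3*x3*x5 + (648/16807)*a6^4*a7^3*x3*x6 + (-216/16807)*a6^4*a7^3*x3^2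 + (648/16807)*a6^4*a7^3*x4*x5 + (648/16807)*a6^4*a7^3*x4*x6 + (-216/16807)*a6^4*a7^3*x4^2 + (648/16807)*a6^4*a7^3*x5*x6 + (-216/16807)*a6^4*a7^3*x5^2 + (-216/16807)*a6^4*a7^3*x6^2 + (1296/117649)*a6^5*a7^2*x1 + (1296/117649)*a6^5*a7^2*x2 + (1296/117649)*a6^5*a7^2*x3 + (1296/117649)*a6^5*a7^2*x4 + (1296/117649)*a6^5*a7^2*x5 + (1296/117649)*a6^5*a7^2*x6 + (-7776/823543)*a6^6*a7 + (1/7)*a7^7*x1^6 + (1/7)*a7^7*x2^6 + (1/7)*a7^7*x3^6 + (1/7)*a7^7*x4^6 + (1/7)*a7^7*x5^6 + (1/7)*a7^7*x6^6)*h5 + ((6/49)*a1*a7^6*x1 + (6/49)*a1*a7^6*x2 + (6/49)*a1*a7^6*x3 + (6/49)*a1*a7^6*x4 + (6/49)*a1*a7^6*x5 + (6/49)*a1*a7^6*x6 + (-32/343)*a2*a6*a7^5*x1 + (-32/343)*a2*a6*a7^5*x2 + (-32/343)*a2*a6*a7^5*x3 + (-32/343)*a2*a6*a7^5*x4 + (-32/343)*a2*a6*a7^5*x5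 + (-32/343)*a2*a6*a7^5*x6 + (5/49)*a2*a7^6*x1^2 + (5/49)*a2*a7^6*x2^2 + (5/49)*a2*a7^6*x3^2 + (5/49)*a2*a7^6*x4^2 + (5/49)*a2*a7^6*x5^2 + (5/49)*a2*a7^6*x6^2 + (24/343)*a3*a6*a7^5*x1*x2 + (24/343)*a3*a6*a7^5*x1*x3 + (24/343)*a3*a6*a7^5*x1*x4 + (24/343)*a3*a6*a7^5*x1*x5 + (24/343)*a3*a6*a7^5*x1*x6 + (-27/343)*a3*a6*a7^5*x1^2 + (24/343)*a3*a6*a7^5*x2*x3 + (24/343)*a3*a6*a7^5*x2*x4 + (24/343)*a3*a6*a7^5*x2*x5 + (24/343)*a3*a6*a7^5*x2*x6 + (-27/343)*a3*a6*a7^5*x2^2 + (24/343)*a3*a6*a7^5*x3*x4 + (24/343)*a3*a6*a7^5*x3*x5 + (24/343)*a3*a6*a7^5*x3*x6 + (-27/343)*a3*a6*a7^5*x3^2 + (24/343)*a3*a6*a7^5*x4*x5 + (24/343)*a3*a6*a7^5*x4*x6 + (-27/343)*a3*a6*a7^5*x4^2 + (24/343)*a3*a6*a7^5*x5*x6 +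 (-27/343)*a3*a6*a7^5*x5^2 + (-27/343)*a3*a6*a7^5*x6^2 + (162/2401)*a3*a6^2*a7^4*x1 + (162/2401)*a3*a6^2*a7^4*x2 + (162/2401)*a3*a6^2*a7^4*x3 + (162/2401)*a3*a6^2*a7^4*x4 + (162/2401)*a3*a6^2*a7^4*x5 + (162/2401)*a3*a6^2*a7^4*x6 + (4/49)*a3*a7^6*x1^3 + (4/49)*a3*a7^6*x2^3 + (4/49)*a3*a7^6*x3^3 + (4/49)*a3*a7^6*x4^3 + (4/49)*a3*a7^6*x5^3 + (4/49)*a3*a7^6*x6^3 + (30/343)*a4*a5*a7^5*x1*x2 + (30/343)*a4*a5*a7^5*x1*x3 + (30/343)*a4*a5*a7^5*x1*x4 + (30/343)*a4*a5*a7^5*x1*x5 + (30/343)*a4*a5*a7^5*x1*x6 + (30/343)*a4*a5*a7^5*x2*x3 + (30/343)*a4*a5*a7^5*x2*x4 + (30/343)*a4*a5*a7^5*x2*x5 + (30/343)*a4*a5*a7^5*x2*x6 + (30/343)*a4*a5*a7^5*x3*x4 + (30/343)*a4*a5*a7^5*x3*x5 + (30/343)*a4*a5*a7^5*x3*x6 +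 (30/343)*a4*a5*a7^5*x4*x5 + (30/343)*a4*a5*a7^5*x4*x6 + (30/343)*a4*a5*a7^5*x5*x6 + (36/343)*a4*a6*a7^5*x1*x2*x3 + (36/343)*a4*a6*a7^5*x1*x2*x4 + (36/343)*a4*a6*a7^5*x1*x2*x5 + (36/343)*a4*a6*a7^5*x1*x2*x6 + (18/343)*a4*a6*a7^5*x1*x2^2 + (36/343)*a4*a6*a7^5*x1*x3*x4 + (36/343)*a4*a6*a7^5*x1*x3*x5 + (36/343)*a4*a6*a7^5*x1*x3*x6 + (18/343)*a4*a6*a7^5*x1*x3^2 + (36/343)*a4*a6*a7^5*x1*x4*x5 + (36/343)*a4*a6*a7^5*x1*x4*x6 + (18/343)*a4*a6*a7^5*x1*x4^2 + (36/343)*a4*a6*a7^5*x1*x5*x6 + (18/343)*a4*a6*a7^5*x1*x5^2 + (18/343)*a4*a6*a7^5*x1*x6^2 + (18/343)*a4*a6*a7^5*x1^2*x2 + (18/343)*a4*a6*a7^5*x1^2*x3 + (18/343)*a4*a6*a7^5*x1^2*x4 + (18/343)*a4*a6*a7^5*x1^2*x5 + (18/343)*a4*a6*a7^5*x1^2*x6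 + (-22/343)*a4*a6*a7^5*x1^3 + (36/343)*a4*a6*a7^5*x2*x3*x4 + (36/343)*a4*a6*a7^5*x2*x3*x5 + (36/343)*a4*a6*a7^5*x2*x3*x6 + (18/343)*a4*a6*a7^5*x2*x3^2 + (36/343)*a4*a6*a7^5*x2*x4*x5 + (36/343)*a4*a6*a7^5*x2*x4*x6 + (18/343)*a4*a6*a7^5*x2*x4^2 + (36/343)*a4*a6*a7^5*x2*x5*x6 + (18/343)*a4*a6*a7^5*x2*x5^2 + (18/343)*a4*a6*a7^5*x2*x6^2 + (18/343)*a4*a6*a7^5*x2^2*x3 + (18/343)*a4*a6*a7^5*x2^2*x4 + (18/343)*a4*a6*a7^5*x2^2*x5 + (18/343)*a4*a6*a7^5*x2^2*x6 + (-22/343)*a4*a6*a7^5*x2^3 + (36/343)*a4*a6*a7^5*x3*x4*x5 + (36/343)*a4*a6*a7^5*x3*x4*x6 + (18/343)*a4*a6*a7^5*x3*x4^2 + (36/343)*a4*a6*a7^5*x3*x5*x6 + (18/343)*a4*a6*a7^5*x3*x5^2 + (18/343)*a4*a6*a7^5*x3*x6^2 + (18/343)*a4*a6*a7^5*x3^2*x4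 + (18/343)*a4*a6*a7^5*x3^2*x5 + (18/343)*a4*a6*a7^5*x3^2*x6 + (-22/343)*a4*a6*a7^5*x3^3 + (36/343)*a4*a6*a7^5*x4*x5*x6 + (18/343)*a4*a6*a7^5*x4*x5^2 + (18/343)*a4*a6*a7^5*x4*x6^2 + (18/343)*a4*a6*a7^5*x4^2*x5 + (18/343)*a4*a6*a7^5*x4^2*x6 + (-22/343)*a4*a6*a7^5*x4^3 + (18/343)*a4*a6*a7^5*x5*x6^2 + (18/343)*a4*a6*a7^5*x5^2*x6 + (-22/343)*a4*a6*a7^5*x5^3 + (-22/343)*a4*a6*a7^5*x6^3 + (-240/2401)*a4*a6^2*a7^4*x1*x2 + (-240/2401)*a4*a6^2*a7^4*x1*x3 + (-240/2401)*a4*a6^2*a7^4*x1*x4 + (-240/2401)*a4*a6^2*a7^4*x1*x5 + (-240/2401)*a4*a6^2*a7^4*x1*x6 + (132/2401)*a4*a6^2*a7^4*x1^2 + (-240/2401)*a4*a6^2*a7^4*x2*x3 + (-240/2401)*a4*a6^2*a7^4*x2*x4 + (-240/2401)*a4*a6^2*a7^4*x2*x5 + (-240/2401)*a4*a6^2*a7^4*x2*x6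 + (132/2401)*a4*a6^2*a7^4*x2^2 + (-240/2401)*a4*a6^2*a7^4*x3*x4 + (-240/2401)*a4*a6^2*a7^4*x3*x5 + (-240/2401)*a4*a6^2*a7^4*x3*x6 + (132/2401)*a4*a6^2*a7^4*x3^2 + (-240/2401)*a4*a6^2*a7^4*x4*x5 + (-240/2401)*a4*a6^2*a7^4*x4*x6 + (132/2401)*a4*a6^2*a7^4*x4^2 + (-240/2401)*a4*a6^2*a7^4*x5*x6 + (132/2401)*a4*a6^2*a7^4*x5^2 + (132/2401)*a4*a6^2*a7^4*x6^2 + (-792/16807)*a4*a6^3*a7^3*x1 + (-792/16807)*a4*a6^3*a7^3*x2 + (-792/16807)*a4*a6^3*a7^3*x3 + (-792/16807)*a4*a6^3*a7^3*x4 + (-792/16807)*a4*a6^3*a7^3*x5 + (-792/16807)*a4*a6^3*a7^3*x6 + (3/49)*a4*a7^6*x1^4 + (3/49)*a4*a7^6*x2^4 + (3/49)*a4*a7^6*x3^4 + (3/49)*a4*a7^6*x4^4 + (3/49)*a4*a7^6*x5^4 + (3/49)*a4*a7^6*x6^4 + (-108/343)*a5*a6*a7^5*x1*x2*x3*x4 +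 (-108/343)*a5*a6*a7^5*x1*x2*x3*x5 + (-108/343)*a5*a6*a7^5*x1*x2*x3*x6 + (-24/343)*a5*a6*a7^5*x1*x2*x3^2 + (-108/343)*a5*a6*a7^5*x1*x2*x4*x5 + (-108/343)*a5*a6*a7^5*x1*x2*x4*x6 + (-24/343)*a5*a6*a7^5*x1*x2*x4^2 + (-108/343)*a5*a6*a7^5*x1*x2*x5*x6 + (-24/343)*a5*a6*a7^5*x1*x2*x5^2 + (-24/343)*a5*a6*a7^5*x1*x2*x6^2 + (-24/343)*a5*a6*a7^5*x1*x2^2*x3 + (-24/343)*a5*a6*a7^5*x1*x2^2*x4 + (-24/343)*a5*a6*a7^5*x1*x2^2*x5 + (-24/343)*a5*a6*a7^5*x1*x2^2*x6 + (12/343)*a5*a6*a7^5*x1*x2^3 + (-108/343)*a5*a6*a7^5*x1*x3*x4*x5 + (-108/343)*a5*a6*a7^5*x1*x3*x4*x6 + (-24/343)*a5*a6*a7^5*x1*x3*x4^2 + (-108/343)*a5*a6*a7^5*x1*x3*x5*x6 + (-24/343)*a5*a6*a7^5*x1*x3*x5^2 + (-24/343)*a5*a6*a7^5*x1*x3*x6^2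 + (-24/343)*a5*a6*a7^5*x1*x3^2*x4 + (-24/343)*a5*a6*a7^5*x1*x3^2*x5 + (-24/343)*a5*a6*a7^5*x1*x3^2*x6 + (12/343)*a5*a6*a7^5*x1*x3^3 + (-108/343)*a5*a6*a7^5*x1*x4*x5*x6 + (-24/343)*a5*a6*a7^5*x1*x4*x5^2 + (-24/343)*a5*a6*a7^5*x1*x4*x6^2 + (-24/343)*a5*a6*a7^5*x1*x4^2*x5 + (-24/343)*a5*a6*a7^5*x1*x4^2*x6 + (12/343)*a5*a6*a7^5*x1*x4^3 + (-24/343)*a5*a6*a7^5*x1*x5*x6^2 + (-24/343)*a5*a6*a7^5*x1*x5^2*x6 + (12/343)*a5*a6*a7^5*x1*x5^3 + (12/343)*a5*a6*a7^5*x1*x6^3 + (-24/343)*a5*a6*a7^5*x1^2*x2*x3 + (-24/343)*a5*a6*a7^5*x1^2*x2*x4 + (-24/343)*a5*a6*a7^5*x1^2*x2*x5 + (-24/343)*a5*a6*a7^5*x1^2*x2*x6 + (-12/343)*a5*a6*a7^5*x1^2*x2^2 + (-24/343)*a5*a6*a7^5*x1^2*x3*x4 + (-24/343)*a5*a6*a7^5*x1^2*x3*x5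 + (-24/343)*a5*a6*a7^5*x1^2*x3*x6 + (-12/343)*a5*a6*a7^5*x1^2*x3^2 + (-24/343)*a5*a6*a7^5*x1^2*x4*x5 + (-24/343)*a5*a6*a7^5*x1^2*x4*x6 + (-12/343)*a5*a6*a7^5*x1^2*x4^2 + (-24/343)*a5*a6*a7^5*x1^2*x5*x6 + (-12/343)*a5*a6*a7^5*x1^2*x5^2 + (-12/343)*a5*a6*a7^5*x1^2*x6^2 + (12/343)*a5*a6*a7^5*x1^3*x2 + (12/343)*a5*a6*a7^5*x1^3*x3 + (12/343)*a5*a6*a7^5*x1^3*x4 + (12/343)*a5*a6*a7^5*x1^3*x5 + (12/343)*a5*a6*a7^5*x1^3*x6 + (-17/343)*a5*a6*a7^5*x1^4 + (-108/343)*a5*a6*a7^5*x2*x3*x4*x5 + (-108/343)*a5*a6*a7^5*x2*x3*x4*x6 + (-24/343)*a5*a6*a7^5*x2*x3*x4^2 + (-108/343)*a5*a6*a7^5*x2*x3*x5*x6 + (-24/343)*a5*a6*a7^5*x2*x3*x5^2 + (-24/343)*a5*a6*a7^5*x2*x3*x6^2 + (-24/343)*a5*a6*a7^5*x2*x3^2*x4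 + (-24/343)*a5*a6*a7^5*x2*x3^2*x5 + (-24/343)*a5*a6*a7^5*x2*x3^2*x6 + (12/343)*a5*a6*a7^5*x2*x3^3 + (-108/343)*a5*a6*a7^5*x2*x4*x5*x6 + (-24/343)*a5*a6*a7^5*x2*x4*x5^2 + (-24/343)*a5*a6*a7^5*x2*x4*x6^2 + (-24/343)*a5*a6*a7^5*x2*x4^2*x5 + (-24/343)*a5*a6*a7^5*x2*x4^2*x6 + (12/343)*a5*a6*a7^5*x2*x4^3 + (-24/343)*a5*a6*a7^5*x2*x5*x6^2 + (-24/343)*a5*a6*a7^5*x2*x5^2*x6 + (12/343)*a5*a6*a7^5*x2*x5^3 + (12/343)*a5*a6*a7^5*x2*x6^3 + (-24/343)*a5*a6*a7^5*x2^2*x3*x4 + (-24/343)*a5*a6*a7^5*x2^2*x3*x5 + (-24/343)*a5*a6*a7^5*x2^2*x3*x6 + (-12/343)*a5*a6*a7^5*x2^2*x3^2 + (-24/343)*a5*a6*a7^5*x2^2*x4*x5 + (-24/343)*a5*a6*a7^5*x2^2*x4*x6 + (-12/343)*a5*a6*a7^5*x2^2*x4^2 + (-24/343)*a5*a6*a7^5*x2^2*x5*x6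 + (-12/343)*a5*a6*a7^5*x2^2*x5^2 + (-12/343)*a5*a6*a7^5*x2^2*x6^2 + (12/343)*a5*a6*a7^5*x2^3*x3 + (12/343)*a5*a6*a7^5*x2^3*x4 + (12/343)*a5*a6*a7^5*x2^3*x5 + (12/343)*a5*a6*a7^5*x2^3*x6 + (-17/343)*a5*a6*a7^5*x2^4 + (-108/343)*a5*a6*a7^5*x3*x4*x5*x6 + (-24/343)*a5*a6*a7^5*x3*x4*x5^2 + (-24/343)*a5*a6*a7^5*x3*x4*x6^2 + (-24/343)*a5*a6*a7^5*x3*x4^2*x5 + (-24/343)*a5*a6*a7^5*x3*x4^2*x6 + (12/343)*a5*a6*a7^5*x3*x4^3 + (-24/343)*a5*a6*a7^5*x3*x5*x6^2 + (-24/343)*a5*a6*a7^5*x3*x5^2*x6 + (12/343)*a5*a6*a7^5*x3*x5^3 + (12/343)*a5*a6*a7^5*x3*x6^3 + (-24/343)*a5*a6*a7^5*x3^2*x4*x5 + (-24/343)*a5*a6*a7^5*x3^2*x4*x6 + (-12/343)*a5*a6*a7^5*x3^2*x4^2 + (-24/343)*a5*a6*a7^5*x3^2*x5*x6 + (-12/343)*a5*a6*a7^5*x3^2*x5^2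 + (-12/343)*a5*a6*a7^5*x3^2*x6^2 + (12/343)*a5*a6*a7^5*x3^3*x4 + (12/343)*a5*a6*a7^5*x3^3*x5 + (12/343)*a5*a6*a7^5*x3^3*x6 + (-17/343)*a5*a6*a7^5*x3^4 + (-24/343)*a5*a6*a7^5*x4*x5*x6^2 + (-24/343)*a5*a6*a7^5*x4*x5^2*x6 + (12/343)*a5*a6*a7^5*x4*x5^3 + (12/343)*a5*a6*a7^5*x4*x6^3 + (-24/343)*a5*a6*a7^5*x4^2*x5*x6 + (-12/343)*a5*a6*a7^5*x4^2*x5^2 + (-12/343)*a5*a6*a7^5*x4^2*x6^2 + (12/343)*a5*a6*a7^5*x4^3*x5 + (12/343)*a5*a6*a7^5*x4^3*x6 + (-17/343)*a5*a6*a7^5*x4^4 + (12/343)*a5*a6*a7^5*x5*x6^3 + (-12/343)*a5*a6*a7^5*x5^2*x6^2 + (12/343)*a5*a6*a7^5*x5^3*x6 + (-17/343)*a5*a6*a7^5*x5^4 + (-17/343)*a5*a6*a7^5*x6^4 + (-198/2401)*a5*a6^2*a7^4*x1*x2*x3 + (-198/2401)*a5*a6^2*a7^4*x1*x2*x4 +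 (-198/2401)*a5*a6^2*a7^4*x1*x2*x5 + (-198/2401)*a5*a6^2*a7^4*x1*x2*x6 + (-174/2401)*a5*a6^2*a7^4*x1*x2^2 + (-198/2401)*a5*a6^2*a7^4*x1*x3*x4 + (-198/2401)*a5*a6^2*a7^4*x1*x3*x5 + (-198/2401)*a5*a6^2*a7^4*x1*x3*x6 + (-174/2401)*a5*a6^2*a7^4*x1*x3^2 + (-198/2401)*a5*a6^2*a7^4*x1*x4*x5 + (-198/2401)*a5*a6^2*a7^4*x1*x4*x6 + (-174/2401)*a5*a6^2*a7^4*x1*x4^2 + (-198/2401)*a5*a6^2*a7^4*x1*x5*x6 + (-174/2401)*a5*a6^2*a7^4*x1*x5^2 + (-174/2401)*a5*a6^2*a7^4*x1*x6^2 + (-174/2401)*a5*a6^2*a7^4*x1^2*x2 + (-174/2401)*a5*a6^2*a7^4*x1^2*x3 + (-174/2401)*a5*a6^2*a7^4*x1^2*x4 + (-174/2401)*a5*a6^2*a7^4*x1^2*x5 + (-174/2401)*a5*a6^2*a7^4*x1^2*x6 + (102/2401)*a5*a6^2*a7^4*x1^3 + (-198/2401)*a5*a6^2*a7^4*x2*x3*x4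 + (-198/2401)*a5*a6^2*a7^4*x2*x3*x5 + (-198/2401)*a5*a6^2*a7^4*x2*x3*x6 + (-174/2401)*a5*a6^2*a7^4*x2*x3^2 + (-198/2401)*a5*a6^2*a7^4*x2*x4*x5 + (-198/2401)*a5*a6^2*a7^4*x2*x4*x6 + (-174/2401)*a5*a6^2*a7^4*x2*x4^2 + (-198/2401)*a5*a6^2*a7^4*x2*x5*x6 + (-174/2401)*a5*a6^2*a7^4*x2*x5^2 + (-174/2401)*a5*a6^2*a7^4*x2*x6^2 + (-174/2401)*a5*a6^2*a7^4*x2^2*x3 + (-174/2401)*a5*a6^2*a7^4*x2^2*x4 + (-174/2401)*a5*a6^2*a7^4*x2^2*x5 + (-174/2401)*a5*a6^2*a7^4*x2^2*x6 + (102/2401)*a5*a6^2*a7^4*x2^3 + (-198/2401)*a5*a6^2*a7^4*x3*x4*x5 + (-198/2401)*a5*a6^2*a7^4*x3*x4*x6 + (-174/2401)*a5*a6^2*a7^4*x3*x4^2 + (-198/2401)*a5*a6^2*a7^4*x3*x5*x6 + (-174/2401)*a5*a6^2*a7^4*x3*x5^2 + (-174/2401)*a5*a6^2*a7^4*x3*x6^2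 + (-174/2401)*a5*a6^2*a7^4*x3^2*x4 + (-174/2401)*a5*a6^2*a7^4*x3^2*x5 + (-174/2401)*a5*a6^2*a7^4*x3^2*x6 + (102/2401)*a5*a6^2*a7^4*x3^3 + (-198/2401)*a5*a6^2*a7^4*x4*x5*x6 + (-174/2401)*a5*a6^2*a7^4*x4*x5^2 + (-174/2401)*a5*a6^2*a7^4*x4*x6^2 + (-174/2401)*a5*a6^2*a7^4*x4^2*x5 + (-174/2401)*a5*a6^2*a7^4*x4^2*x6 + (102/2401)*a5*a6^2*a7^4*x4^3 + (-174/2401)*a5*a6^2*a7^4*x5*x6^2 + (-174/2401)*a5*a6^2*a7^4*x5^2*x6 + (102/2401)*a5*a6^2*a7^4*x5^3 + (102/2401)*a5*a6^2*a7^4*x6^3 + (2556/16807)*a5*a6^3*a7^3*x1*x2 + (2556/16807)*a5*a6^3*a7^3*x1*x3 + (2556/16807)*a5*a6^3*a7^3*x1*x4 + (2556/16807)*a5*a6^3*a7^3*x1*x5 + (2556/16807)*a5*a6^3*a7^3*x1*x6 + (-612/16807)*a5*a6^3*a7^3*x1^2 + (2556/16807)*a5*a6^3*a7^3*x2*x3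 + (2556/16807)*a5*a6^3*a7^3*x2*x4 + (2556/16807)*a5*a6^3*a7^3*x2*x5 + (2556/16807)*a5*a6^3*a7^3*x2*x6 + (-612/16807)*a5*a6^3*a7^3*x2^2 + (2556/16807)*a5*a6^3*a7^3*x3*x4 + (2556/16807)*a5*a6^3*a7^3*x3*x5 + (2556/16807)*a5*a6^3*a7^3*x3*x6 + (-612/16807)*a5*a6^3*a7^3*x3^2 + (2556/16807)*a5*a6^3*a7^3*x4*x5 + (2556/16807)*a5*a6^3*a7^3*x4*x6 + (-612/16807)*a5*a6^3*a7^3*x4^2 + (2556/16807)*a5*a6^3*a7^3*x5*x6 + (-612/16807)*a5*a6^3*a7^3*x5^2 + (-612/16807)*a5*a6^3*a7^3*x6^2 + (3672/117649)*a5*a6^4*a7^2*x1 + (3672/117649)*a5*a6^4*a7^2*x2 + (3672/117649)*a5*a6^4*a7^2*x3 + (3672/117649)*a5*a6^4*a7^2*x4 + (3672/117649)*a5*a6^4*a7^2*x5 + (3672/117649)*a5*a6^4*a7^2*x6 + (2/49)*a5*a7^6*x1^5 + (2/49)*a5*a7^6*x2^5 + (2/49)*a5*a7^6*x3^5 + (2/49)*a5*a7^6*x4^5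 + (2/49)*a5*a7^6*x5^5 + (2/49)*a5*a7^6*x6^5 + (-50/343)*a5^2*a6*a7^4*x1*x2 + (-50/343)*a5^2*a6*a7^4*x1*x3 + (-50/343)*a5^2*a6*a7^4*x1*x4 + (-50/343)*a5^2*a6*a7^4*x1*x5 + (-50/343)*a5^2*a6*a7^4*x1*x6 + (-50/343)*a5^2*a6*a7^4*x2*x3 + (-50/343)*a5^2*a6*a7^4*x2*x4 + (-50/343)*a5^2*a6*a7^4*x2*x5 + (-50/343)*a5^2*a6*a7^4*x2*x6 + (-50/343)*a5^2*a6*a7^4*x3*x4 + (-50/343)*a5^2*a6*a7^4*x3*x5 + (-50/343)*a5^2*a6*a7^4*x3*x6 + (-50/343)*a5^2*a6*a7^4*x4*x5 + (-50/343)*a5^2*a6*a7^4*x4*x6 + (-50/343)*a5^2*a6*a7^4*x5*x6 + (-50/343)*a5^2*a7^5*x1*x2*x3 + (-50/343)*a5^2*a7^5*x1*x2*x4 + (-50/343)*a5^2*a7^5*x1*x2*x5 + (-50/343)*a5^2*a7^5*x1*x2*x6 + (-50/343)*a5^2*a7^5*x1*x3*x4 + (-50/343)*a5^2*a7^5*x1*x3*x5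 + (-50/343)*a5^2*a7^5*x1*x3*x6 + (-50/343)*a5^2*a7^5*x1*x4*x5 + (-50/343)*a5^2*a7^5*x1*x4*x6 + (-50/343)*a5^2*a7^5*x1*x5*x6 + (-50/343)*a5^2*a7^5*x2*x3*x4 + (-50/343)*a5^2*a7^5*x2*x3*x5 + (-50/343)*a5^2*a7^5*x2*x3*x6 + (-50/343)*a5^2*a7^5*x2*x4*x5 + (-50/343)*a5^2*a7^5*x2*x4*x6 + (-50/343)*a5^2*a7^5*x2*x5*x6 + (-50/343)*a5^2*a7^5*x3*x4*x5 + (-50/343)*a5^2*a7^5*x3*x4*x6 + (-50/343)*a5^2*a7^5*x3*x5*x6 + (-50/343)*a5^2*a7^5*x4*x5*x6 + (1/49)*a6*a7^6*x1^6 + (1/49)*a6*a7^6*x2^6 + (1/49)*a6*a7^6*x3^6 + (1/49)*a6*a7^6*x4^6 + (1/49)*a6*a7^6*x5^6 + (1/49)*a6*a7^6*x6^6 + (-6/343)*a6^2*a7^5*x1^5 + (-6/343)*a6^2*a7^5*x2^5 + (-6/343)*a6^2*a7^5*x3^5 + (-6/343)*a6^2*a7^5*x4^5 + (-6/343)*a6^2*a7^5*x5^5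 + (-6/343)*a6^2*a7^5*x6^5 + (324/2401)*a6^3*a7^4*x1*x2*x3*x4 + (324/2401)*a6^3*a7^4*x1*x2*x3*x5 + (324/2401)*a6^3*a7^4*x1*x2*x3*x6 + (72/2401)*a6^3*a7^4*x1*x2*x3^2 + (324/2401)*a6^3*a7^4*x1*x2*x4*x5 + (324/2401)*a6^3*a7^4*x1*x2*x4*x6 + (72/2401)*a6^3*a7^4*x1*x2*x4^2 + (324/2401)*a6^3*a7^4*x1*x2*x5*x6 + (72/2401)*a6^3*a7^4*x1*x2*x5^2 + (72/2401)*a6^3*a7^4*x1*x2*x6^2 + (72/2401)*a6^3*a7^4*x1*x2^2*x3 + (72/2401)*a6^3*a7^4*x1*x2^2*x4 + (72/2401)*a6^3*a7^4*x1*x2^2*x5 + (72/2401)*a6^3*a7^4*x1*x2^2*x6 + (-36/2401)*a6^3*a7^4*x1*x2^3 + (324/2401)*a6^3*a7^4*x1*x3*x4*x5 + (324/2401)*a6^3*a7^4*x1*x3*x4*x6 + (72/2401)*a6^3*a7^4*x1*x3*x4^2 + (324/2401)*a6^3*a7^4*x1*x3*x5*x6 + (72/2401)*a6^3*a7^4*x1*x3*x5^2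 + (72/2401)*a6^3*a7^4*x1*x3*x6^2 + (72/2401)*a6^3*a7^4*x1*x3^2*x4 + (72/2401)*a6^3*a7^4*x1*x3^2*x5 + (72/2401)*a6^3*a7^4*x1*x3^2*x6 + (-36/2401)*a6^3*a7^4*x1*x3^3 + (324/2401)*a6^3*a7^4*x1*x4*x5*x6 + (72/2401)*a6^3*a7^4*x1*x4*x5^2 + (72/2401)*a6^3*a7^4*x1*x4*x6^2 + (72/2401)*a6^3*a7^4*x1*x4^2*x5 + (72/2401)*a6^3*a7^4*x1*x4^2*x6 + (-36/2401)*a6^3*a7^4*x1*x4^3 + (72/2401)*a6^3*a7^4*x1*x5*x6^2 + (72/2401)*a6^3*a7^4*x1*x5^2*x6 + (-36/2401)*a6^3*a7^4*x1*x5^3 + (-36/2401)*a6^3*a7^4*x1*x6^3 + (72/2401)*a6^3*a7^4*x1^2*x2*x3 + (72/2401)*a6^3*a7^4*x1^2*x2*x4 + (72/2401)*a6^3*a7^4*x1^2*x2*x5 + (72/2401)*a6^3*a7^4*x1^2*x2*x6 + (36/2401)*a6^3*a7^4*x1^2*x2^2 + (72/2401)*a6^3*a7^4*x1^2*x3*x4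 + (72/2401)*a6^3*a7^4*x1^2*x3*x5 + (72/2401)*a6^3*a7^4*x1^2*x3*x6 + (36/2401)*a6^3*a7^4*x1^2*x3^2 + (72/2401)*a6^3*a7^4*x1^2*x4*x5 + (72/2401)*a6^3*a7^4*x1^2*x4*x6 + (36/2401)*a6^3*a7^4*x1^2*x4^2 + (72/2401)*a6^3*a7^4*x1^2*x5*x6 + (36/2401)*a6^3*a7^4*x1^2*x5^2 + (36/2401)*a6^3*a7^4*x1^2*x6^2 + (-36/2401)*a6^3*a7^4*x1^3*x2 + (-36/2401)*a6^3*a7^4*x1^3*x3 + (-36/2401)*a6^3*a7^4*x1^3*x4 + (-36/2401)*a6^3*a7^4*x1^3*x5 + (-36/2401)*a6^3*a7^4*x1^3*x6 + (36/2401)*a6^3*a7^4*x1^4 + (324/2401)*a6^3*a7^4*x2*x3*x4*x5 + (324/2401)*a6^3*a7^4*x2*x3*x4*x6 + (72/2401)*a6^3*a7^4*x2*x3*x4^2 + (324/2401)*a6^3*a7^4*x2*x3*x5*x6 + (72/2401)*a6^3*a7^4*x2*x3*x5^2 + (72/2401)*a6^3*a7^4*x2*x3*x6^2 + (72/2401)*a6^3*a7^4*x2*x3^2*x4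 + (72/2401)*a6^3*a7^4*x2*x3^2*x5 + (72/2401)*a6^3*a7^4*x2*x3^2*x6 + (-36/2401)*a6^3*a7^4*x2*x3^3 + (324/2401)*a6^3*a7^4*x2*x4*x5*x6 + (72/2401)*a6^3*a7^4*x2*x4*x5^2 + (72/2401)*a6^3*a7^4*x2*x4*x6^2 + (72/2401)*a6^3*a7^4*x2*x4^2*x5 + (72/2401)*a6^3*a7^4*x2*x4^2*x6 + (-36/2401)*a6^3*a7^4*x2*x4^3 + (72/2401)*a6^3*a7^4*x2*x5*x6^2 + (72/2401)*a6^3*a7^4*x2*x5^2*x6 + (-36/2401)*a6^3*a7^4*x2*x5^3 + (-36/2401)*a6^3*a7^4*x2*x6^3 + (72/2401)*a6^3*a7^4*x2^2*x3*x4 + (72/2401)*a6^3*a7^4*x2^2*x3*x5 + (72/2401)*a6^3*a7^4*x2^2*x3*x6 + (36/2401)*a6^3*a7^4*x2^2*x3^2 + (72/2401)*a6^3*a7^4*x2^2*x4*x5 + (72/2401)*a6^3*a7^4*x2^2*x4*x6 + (36/2401)*a6^3*a7^4*x2^2*x4^2 + (72/2401)*a6^3*a7^4*x2^2*x5*x6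 + (36/2401)*a6^3*a7^4*x2^2*x5^2 + (36/2401)*a6^3*a7^4*x2^2*x6^2 + (-36/2401)*a6^3*a7^4*x2^3*x3 + (-36/2401)*a6^3*a7^4*x2^3*x4 + (-36/2401)*a6^3*a7^4*x2^3*x5 + (-36/2401)*a6^3*a7^4*x2^3*x6 + (36/2401)*a6^3*a7^4*x2^4 + (324/2401)*a6^3*a7^4*x3*x4*x5*x6 + (72/2401)*a6^3*a7^4*x3*x4*x5^2 + (72/2401)*a6^3*a7^4*x3*x4*x6^2 + (72/2401)*a6^3*a7^4*x3*x4^2*x5 + (72/2401)*a6^3*a7^4*x3*x4^2*x6 + (-36/2401)*a6^3*a7^4*x3*x4^3 + (72/2401)*a6^3*a7^4*x3*x5*x6^2 + (72/2401)*a6^3*a7^4*x3*x5^2*x6 + (-36/2401)*a6^3*a7^4*x3*x5^3 + (-36/2401)*a6^3*a7^4*x3*x6^3 + (72/2401)*a6^3*a7^4*x3^2*x4*x5 + (72/2401)*a6^3*a7^4*x3^2*x4*x6 + (36/2401)*a6^3*a7^4*x3^2*x4^2 + (72/2401)*a6^3*a7^4*x3^2*x5*x6 + (36/2401)*a6^3*a7^4*x3^2*x5^2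 + (36/2401)*a6^3*a7^4*x3^2*x6^2 + (-36/2401)*a6^3*a7^4*x3^3*x4 + (-36/2401)*a6^3*a7^4*x3^3*x5 + (-36/2401)*a6^3*a7^4*x3^3*x6 + (36/2401)*a6^3*a7^4*x3^4 + (72/2401)*a6^3*a7^4*x4*x5*x6^2 + (72/2401)*a6^3*a7^4*x4*x5^2*x6 + (-36/2401)*a6^3*a7^4*x4*x5^3 + (-36/2401)*a6^3*a7^4*x4*x6^3 + (72/2401)*a6^3*a7^4*x4^2*x5*x6 + (36/2401)*a6^3*a7^4*x4^2*x5^2 + (36/2401)*a6^3*a7^4*x4^2*x6^2 + (-36/2401)*a6^3*a7^4*x4^3*x5 + (-36/2401)*a6^3*a7^4*x4^3*x6 + (36/2401)*a6^3*a7^4*x4^4 + (-36/2401)*a6^3*a7^4*x5*x6^3 + (36/2401)*a6^3*a7^4*x5^2*x6^2 + (-36/2401)*a6^3*a7^4*x5^3*x6 + (36/2401)*a6^3*a7^4*x5^4 + (36/2401)*a6^3*a7^4*x6^4 + (864/16807)*a6^4*a7^3*x1*x2*x3 + (864/16807)*a6^4*a7^3*x1*x2*x4 + (864/16807)*a6^4*a7^3*x1*x2*x5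 + (864/16807)*a6^4*a7^3*x1*x2*x6 + (432/16807)*a6^4*a7^3*x1*x2^2 + (864/16807)*a6^4*a7^3*x1*x3*x4 + (864/16807)*a6^4*a7^3*x1*x3*x5 + (864/16807)*a6^4*a7^3*x1*x3*x6 + (432/16807)*a6^4*a7^3*x1*x3^2 + (864/16807)*a6^4*a7^3*x1*x4*x5 + (864/16807)*a6^4*a7^3*x1*x4*x6 + (432/16807)*a6^4*a7^3*x1*x4^2 + (864/16807)*a6^4*a7^3*x1*x5*x6 + (432/16807)*a6^4*a7^3*x1*x5^2 + (432/16807)*a6^4*a7^3*x1*x6^2 + (432/16807)*a6^4*a7^3*x1^2*x2 + (432/16807)*a6^4*a7^3*x1^2*x3 + (432/16807)*a6^4*a7^3*x1^2*x4 + (432/16807)*a6^4*a7^3*x1^2*x5 + (432/16807)*a6^4*a7^3*x1^2*x6 + (-216/16807)*a6^4*a7^3*x1^3 + (864/16807)*a6^4*a7^3*x2*x3*x4 + (864/16807)*a6^4*a7^3*x2*x3*x5 + (864/16807)*a6^4*a7^3*x2*x3*x6 + (432/16807)*a6^4*a7^3*x2*x3^2 + (864/16807)*a6^4*a7^3*x2*x4*x5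 + (864/16807)*a6^4*a7^3*x2*x4*x6 + (432/16807)*a6^4*a7^3*x2*x4^2 + (864/16807)*a6^4*a7^3*x2*x5*x6 + (432/16807)*a6^4*a7^3*x2*x5^2 + (432/16807)*a6^4*a7^3*x2*x6^2 + (432/16807)*a6^4*a7^3*x2^2*x3 + (432/16807)*a6^4*a7^3*x2^2*x4 + (432/16807)*a6^4*a7^3*x2^2*x5 + (432/16807)*a6^4*a7^3*x2^2*x6 + (-216/16807)*a6^4*a7^3*x2^3 + (864/16807)*a6^4*a7^3*x3*x4*x5 + (864/16807)*a6^4*a7^3*x3*x4*x6 + (432/16807)*a6^4*a7^3*x3*x4^2 + (864/16807)*a6^4*a7^3*x3*x5*x6 + (432/16807)*a6^4*a7^3*x3*x5^2 + (432/16807)*a6^4*a7^3*x3*x6^2 + (432/16807)*a6^4*a7^3*x3^2*x4 + (432/16807)*a6^4*a7^3*x3^2*x5 + (432/16807)*a6^4*a7^3*x3^2*x6 + (-216/16807)*a6^4*a7^3*x3^3 + (864/16807)*a6^4*a7^3*x4*x5*x6 + (432/16807)*a6^4*a7^3*x4*x5^2 + (432/16807)*a6^4*a7^3*x4*x6^2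 + (432/16807)*a6^4*a7^3*x4^2*x5 + (432/16807)*a6^4*a7^3*x4^2*x6 + (-216/16807)*a6^4*a7^3*x4^3 + (432/16807)*a6^4*a7^3*x5*x6^2 + (432/16807)*a6^4*a7^3*x5^2*x6 + (-216/16807)*a6^4*a7^3*x5^3 + (-216/16807)*a6^4*a7^3*x6^3 + (-3888/117649)*a6^5*a7^2*x1*x2 + (-3888/117649)*a6^5*a7^2*x1*x3 + (-3888/117649)*a6^5*a7^2*x1*x4 + (-3888/117649)*a6^5*a7^2*x1*x5 + (-3888/117649)*a6^5*a7^2*x1*x6 + (1296/117649)*a6^5*a7^2*x1^2 + (-3888/117649)*a6^5*a7^2*x2*x3 + (-3888/117649)*a6^5*a7^2*x2*x4 + (-3888/117649)*a6^5*a7^2*x2*x5 + (-3888/117649)*a6^5*a7^2*x2*x6 + (1296/117649)*a6^5*a7^2*x2^2 + (-3888/117649)*a6^5*a7^2*x3*x4 + (-3888/117649)*a6^5*a7^2*x3*x5 + (-3888/117649)*a6^5*a7^2*x3*x6 + (1296/117649)*a6^5*a7^2*x3^2 + (-3888/117649)*a6^5*a7^2*x4*x5 + (-3888/117649)*a6^5*a7^2*x4*x6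 + (1296/117649)*a6^5*a7^2*x4^2 + (-3888/117649)*a6^5*a7^2*x5*x6 + (1296/117649)*a6^5*a7^2*x5^2 + (1296/117649)*a6^5*a7^2*x6^2 + (-7776/823543)*a6^6*a7*x1 + (-7776/823543)*a6^6*a7*x2 + (-7776/823543)*a6^6*a7*x3 + (-7776/823543)*a6^6*a7*x4 + (-7776/823543)*a6^6*a7*x5 + (-7776/823543)*a6^6*a7*x6 + (1/7)*a7^7*x1^7 + (1/7)*a7^7*x2^7 + (1/7)*a7^7*x3^7 + (1/7)*a7^7*x4^7 + (1/7)*a7^7*x5^7 + (1/7)*a7^7*x6^7)*h6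

private lemma septic_aux3 (a0 a1 a2 a3 a4 a5 a6 a7 L x1 x2 x3 x4 : ℂ)
    (h0 : 6*a3 = L*(x1*x2*x3*x4))
    (h1 : 24*a4 = L*((-1)*x1*x2*x3 + (-1)*x1*x2*x4 + (-1)*x1*x3*x4 + (-1)*x2*x3*x4))
    (h2 : 60*a5 = L*(x1*x2 + x1*x3 + x1*x4 + x2*x3 + x2*x4 + x3*x4))
    (h3 : 120*a6 = L*((-1)*x1 + (-1)*x2 + (-1)*x3 + (-1)*x4))
    (h4 : 210*a7 = L*(1))
    : a7^7*((a0 + a1*x1^1 + a2*x1^2 + a3*x1^3 + a4*x1^4 + a5*x1^5 + a6*x1^6 + a7*x1^7) + (a0 + a1*x2^1 + a2*x2^2 + a3*x2^3 + a4*x2^4 + a5*x2^5 + a6*x2^6 + a7*x2^7) + (a0 + a1*x3^1 + a2*x3^2 + a3*x3^3 + a4*x3^4 + a5*x3^5 + a6*x3^6 + a7*x3^7) + (a0 + a1*x4^1 + a2*x4^2 + a3*x4^3 + a4*x4^4 + a5*x4^5 + a6*x4^6 + a7*x4^7)) = 4*a0*a7^7 + (-4/7)*a1*a6*a7^6 +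 (-4/7)*a2*a5*a7^6 + (16/49)*a2*a6^2*a7^5 + (-76/175)*a3*a4*a7^6 + (136/245)*a3*a5*a6*a7^5 + (-352/1715)*a3*a6^3*a7^4 + (-192/343)*a4*a5*a6^2*a7^4 + (64/245)*a4*a5^2*a7^5 + (256/1715)*a4*a6^4*a7^3 + (304/1225)*a4^2*a6*a7^5 + (-2048/16807)*a5*a6^5*a7^2 + (704/2401)*a5^2*a6^3*a7^3 + (-64/343)*a5^3*a6*a7^4 + (12288/823543)*a6^7*a7 := by
  linear_combination ((62/3675)*a4*a7^6 + (-52/5145)*a5*a6*a7^5 + (1/294)*a5*a7^6*x1 + (1/294)*a5*a7^6*x2 + (1/294)*a5*a7^6*x3 + (1/294)*a5*a7^6*x4 + (1/490)*a6*a7^6*x1^2 + (1/490)*a6*a7^6*x2^2 + (1/490)*a6*a7^6*x3^2 + (1/490)*a6*a7^6*x4^2 + (-2/1715)*a6^2*a7^5*x1 + (-2/1715)*a6^2*a7^5*x2 + (-2/1715)*a6^2*a7^5*x3 + (-2/1715)*a6^2*a7^5*x4 + (32/12005)*a6^3*a7^4 + (1/210)*a7^7*x1^3 + (1/210)*a7^7*x2^3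 + (1/210)*a7^7*x3^3 + (1/210)*a7^7*x4^3)*h0 + ((17/1225)*a3*a7^6 + (-68/8575)*a4*a6*a7^5 + (31/7350)*a4*a7^6*x1 + (31/7350)*a4*a7^6*x2 + (31/7350)*a4*a7^6*x3 + (31/7350)*a4*a7^6*x4 + (-13/5145)*a5*a6*a7^5*x1 + (-13/5145)*a5*a6*a7^5*x2 + (-13/5145)*a5*a6*a7^5*x3 + (-13/5145)*a5*a6*a7^5*x4 + (64/12005)*a5*a6^2*a7^4 + (1/294)*a5*a7^6*x1^2 + (1/294)*a5*a7^6*x2^2 + (1/294)*a5*a7^6*x3^2 + (1/294)*a5*a7^6*x4^2 + (-1/343)*a5^2*a7^5 + (1/490)*a6*a7^6*x1^3 + (1/490)*a6*a7^6*x2^3 + (1/490)*a6*a7^6*x3^3 + (1/490)*a6*a7^6*x4^3 + (-2/1715)*a6^2*a7^5*x1^2 + (-2/1715)*a6^2*a7^5*x2^2 + (-2/1715)*a6^2*a7^5*x3^2 + (-2/1715)*a6^2*a7^5*x4^2 + (8/12005)*a6^3*a7^4*x1 + (8/12005)*a6^3*a7^4*x2 + (8/12005)*a6^3*a7^4*x3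 + (8/12005)*a6^3*a7^4*x4 + (-96/84035)*a6^4*a7^3 + (1/210)*a7^7*x1^4 + (1/210)*a7^7*x2^4 + (1/210)*a7^7*x3^4 + (1/210)*a7^7*x4^4)*h1 + ((1/105)*a2*a7^6 + (-69/8575)*a3*a6*a7^5 + (-82/25725)*a4*a5*a7^5 + (288/60025)*a4*a6^2*a7^4 + (31/7350)*a4*a7^6*x1^2 + (31/7350)*a4*a7^6*x2^2 + (31/7350)*a4*a7^6*x3^2 + (31/7350)*a4*a7^6*x4^2 + (-13/5145)*a5*a6*a7^5*x1^2 + (-13/5145)*a5*a6*a7^5*x2^2 + (-13/5145)*a5*a6*a7^5*x3^2 + (-13/5145)*a5*a6*a7^5*x4^2 + (-288/84035)*a5*a6^3*a7^3 + (1/294)*a5*a7^6*x1^3 + (1/294)*a5*a7^6*x2^3 + (1/294)*a5*a7^6*x3^3 + (1/294)*a5*a7^6*x4^3 + (16/5145)*a5^2*a6*a7^4 + (1/490)*a6*a7^6*x1^4 + (1/490)*a6*a7^6*x2^4 + (1/490)*a6*a7^6*x3^4 + (1/490)*a6*a7^6*x4^4 + (-2/1715)*a6^2*a7^5*x1^3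 + (-2/1715)*a6^2*a7^5*x2^3 + (-2/1715)*a6^2*a7^5*x3^3 + (-2/1715)*a6^2*a7^5*x4^3 + (8/12005)*a6^3*a7^4*x1^2 + (8/12005)*a6^3*a7^4*x2^2 + (8/12005)*a6^3*a7^4*x3^2 + (8/12005)*a6^3*a7^4*x4^2 + (384/588245)*a6^5*a7^2 + (1/210)*a7^7*x1^5 + (1/210)*a7^7*x2^5 + (1/210)*a7^7*x3^5 + (1/210)*a7^7*x4^5)*h2 + ((1/210)*a1*a7^6 + (-2/735)*a2*a6*a7^5 + (1/210)*a2*a7^6*x1 + (1/210)*a2*a7^6*x2 + (1/210)*a2*a7^6*x3 + (1/210)*a2*a7^6*x4 + (-1/10290)*a3*a5*a7^5 + (-139/51450)*a3*a6*a7^5*x1 + (-139/51450)*a3*a6*a7^5*x2 + (-139/51450)*a3*a6*a7^5*x3 + (-139/51450)*a3*a6*a7^5*x4 + (284/180075)*a3*a6^2*a7^4 + (-17/3675)*a3*a7^6*x1*x2 + (-17/3675)*a3*a7^6*x1*x3 + (-17/3675)*a3*a7^6*x1*x4 + (17/3675)*a3*a7^6*x1^2 + (-17/3675)*a3*a7^6*x2*x3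 + (-17/3675)*a3*a7^6*x2*x4 + (17/3675)*a3*a7^6*x2^2 + (-17/3675)*a3*a7^6*x3*x4 + (17/3675)*a3*a7^6*x3^2 + (17/3675)*a3*a7^6*x4^2 + (72/60025)*a4*a5*a6*a7^4 + (-41/25725)*a4*a5*a7^5*x1 + (-41/25725)*a4*a5*a7^5*x2 + (-41/25725)*a4*a5*a7^5*x3 + (-41/25725)*a4*a5*a7^5*x4 + (68/25725)*a4*a6*a7^5*x1*x2 + (68/25725)*a4*a6*a7^5*x1*x3 + (68/25725)*a4*a6*a7^5*x1*x4 + (-68/25725)*a4*a6*a7^5*x1^2 + (68/25725)*a4*a6*a7^5*x2*x3 + (68/25725)*a4*a6*a7^5*x2*x4 + (-68/25725)*a4*a6*a7^5*x2^2 + (68/25725)*a4*a6*a7^5*x3*x4 + (-68/25725)*a4*a6*a7^5*x3^2 + (-68/25725)*a4*a6*a7^5*x4^2 + (296/180075)*a4*a6^2*a7^4*x1 + (296/180075)*a4*a6^2*a7^4*x2 + (296/180075)*a4*a6^2*a7^4*x3 + (296/180075)*a4*a6^2*a7^4*x4 + (-256/252105)*a4*a6^3*a7^3 + (31/7350)*a4*a7^6*x1^3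 + (31/7350)*a4*a7^6*x2^3 + (31/7350)*a4*a7^6*x3^3 + (31/7350)*a4*a7^6*x4^3 + (-62/128625)*a4^2*a7^5 + (-13/5145)*a5*a6*a7^5*x1^3 + (-13/5145)*a5*a6*a7^5*x2^3 + (-13/5145)*a5*a6*a7^5*x3^3 + (-13/5145)*a5*a6*a7^5*x4^3 + (-64/36015)*a5*a6^2*a7^4*x1*x2 + (-64/36015)*a5*a6^2*a7^4*x1*x3 + (-64/36015)*a5*a6^2*a7^4*x1*x4 + (64/36015)*a5*a6^2*a7^4*x1^2 + (-64/36015)*a5*a6^2*a7^4*x2*x3 + (-64/36015)*a5*a6^2*a7^4*x2*x4 + (64/36015)*a5*a6^2*a7^4*x2^2 + (-64/36015)*a5*a6^2*a7^4*x3*x4 + (64/36015)*a5*a6^2*a7^4*x3^2 + (64/36015)*a5*a6^2*a7^4*x4^2 + (-304/252105)*a5*a6^3*a7^3*x1 + (-304/252105)*a5*a6^3*a7^3*x2 + (-304/252105)*a5*a6^3*a7^3*x3 + (-304/252105)*a5*a6^3*a7^3*x4 + (1216/1764735)*a5*a6^4*a7^2 + (1/294)*a5*a7^6*x1^4 + (1/294)*a5*a7^6*x2^4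 + (1/294)*a5*a7^6*x3^4 + (1/294)*a5*a7^6*x4^4 + (46/36015)*a5^2*a6*a7^4*x1 + (46/36015)*a5^2*a6*a7^4*x2 + (46/36015)*a5^2*a6*a7^4*x3 + (46/36015)*a5^2*a6*a7^4*x4 + (-184/252105)*a5^2*a6^2*a7^3 + (1/1029)*a5^2*a7^5*x1*x2 + (1/1029)*a5^2*a7^5*x1*x3 + (1/1029)*a5^2*a7^5*x1*x4 + (-1/1029)*a5^2*a7^5*x1^2 + (1/1029)*a5^2*a7^5*x2*x3 + (1/1029)*a5^2*a7^5*x2*x4 + (-1/1029)*a5^2*a7^5*x2^2 + (1/1029)*a5^2*a7^5*x3*x4 + (-1/1029)*a5^2*a7^5*x3^2 + (-1/1029)*a5^2*a7^5*x4^2 + (1/490)*a6*a7^6*x1^5 + (1/490)*a6*a7^6*x2^5 + (1/490)*a6*a7^6*x3^5 + (1/490)*a6*a7^6*x4^5 + (-2/1715)*a6^2*a7^5*x1^4 + (-2/1715)*a6^2*a7^5*x2^4 + (-2/1715)*a6^2*a7^5*x3^4 + (-2/1715)*a6^2*a7^5*x4^4 + (8/12005)*a6^3*a7^4*x1^3 +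 (8/12005)*a6^3*a7^4*x2^3 + (8/12005)*a6^3*a7^4*x3^3 + (8/12005)*a6^3*a7^4*x4^3 + (32/84035)*a6^4*a7^3*x1*x2 + (32/84035)*a6^4*a7^3*x1*x3 + (32/84035)*a6^4*a7^3*x1*x4 + (-32/84035)*a6^4*a7^3*x1^2 + (32/84035)*a6^4*a7^3*x2*x3 + (32/84035)*a6^4*a7^3*x2*x4 + (-32/84035)*a6^4*a7^3*x2^2 + (32/84035)*a6^4*a7^3*x3*x4 + (-32/84035)*a6^4*a7^3*x3^2 + (-32/84035)*a6^4*a7^3*x4^2 + (128/588245)*a6^5*a7^2*x1 + (128/588245)*a6^5*a7^2*x2 + (128/588245)*a6^5*a7^2*x3 + (128/588245)*a6^5*a7^2*x4 + (-512/4117715)*a6^6*a7 + (1/210)*a7^7*x1^6 + (1/210)*a7^7*x2^6 + (1/210)*a7^7*x3^6 + (1/210)*a7^7*x4^6)*h3 + ((1/210)*a1*a7^6*x1 + (1/210)*a1*a7^6*x2 + (1/210)*a1*a7^6*x3 + (1/210)*a1*a7^6*x4 + (-2/735)*a2*a6*a7^5*x1 + (-2/735)*a2*a6*a7^5*x2 +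 (-2/735)*a2*a6*a7^5*x3 + (-2/735)*a2*a6*a7^5*x4 + (1/210)*a2*a7^6*x1^2 + (1/210)*a2*a7^6*x2^2 + (1/210)*a2*a7^6*x3^2 + (1/210)*a2*a7^6*x4^2 + (-1/10290)*a3*a5*a7^5*x1 + (-1/10290)*a3*a5*a7^5*x2 + (-1/10290)*a3*a5*a7^5*x3 + (-1/10290)*a3*a5*a7^5*x4 + (68/25725)*a3*a6*a7^5*x1*x2 + (68/25725)*a3*a6*a7^5*x1*x3 + (68/25725)*a3*a6*a7^5*x1*x4 + (-139/51450)*a3*a6*a7^5*x1^2 + (68/25725)*a3*a6*a7^5*x2*x3 + (68/25725)*a3*a6*a7^5*x2*x4 + (-139/51450)*a3*a6*a7^5*x2^2 + (68/25725)*a3*a6*a7^5*x3*x4 + (-139/51450)*a3*a6*a7^5*x3^2 + (-139/51450)*a3*a6*a7^5*x4^2 + (284/180075)*a3*a6^2*a7^4*x1 + (284/180075)*a3*a6^2*a7^4*x2 + (284/180075)*a3*a6^2*a7^4*x3 + (284/180075)*a3*a6^2*a7^4*x4 + (17/3675)*a3*a7^6*x1^3 + (17/3675)*a3*a7^6*x2^3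 + (17/3675)*a3*a7^6*x3^3 + (17/3675)*a3*a7^6*x4^3 + (72/60025)*a4*a5*a6*a7^4*x1 + (72/60025)*a4*a5*a6*a7^4*x2 + (72/60025)*a4*a5*a6*a7^4*x3 + (72/60025)*a4*a5*a6*a7^4*x4 + (-41/25725)*a4*a5*a7^5*x1^2 + (-41/25725)*a4*a5*a7^5*x2^2 + (-41/25725)*a4*a5*a7^5*x3^2 + (-41/25725)*a4*a5*a7^5*x4^2 + (-68/25725)*a4*a6*a7^5*x1^3 + (-68/25725)*a4*a6*a7^5*x2^3 + (-68/25725)*a4*a6*a7^5*x3^3 + (-68/25725)*a4*a6*a7^5*x4^3 + (-272/180075)*a4*a6^2*a7^4*x1*x2 + (-272/180075)*a4*a6^2*a7^4*x1*x3 + (-272/180075)*a4*a6^2*a7^4*x1*x4 + (296/180075)*a4*a6^2*a7^4*x1^2 + (-272/180075)*a4*a6^2*a7^4*x2*x3 + (-272/180075)*a4*a6^2*a7^4*x2*x4 + (296/180075)*a4*a6^2*a7^4*x2^2 + (-272/180075)*a4*a6^2*a7^4*x3*x4 + (296/180075)*a4*a6^2*a7^4*x3^2 + (296/180075)*a4*a6^2*a7^4*x4^2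 + (-256/252105)*a4*a6^3*a7^3*x1 + (-256/252105)*a4*a6^3*a7^3*x2 + (-256/252105)*a4*a6^3*a7^3*x3 + (-256/252105)*a4*a6^3*a7^3*x4 + (31/7350)*a4*a7^6*x1^4 + (31/7350)*a4*a7^6*x2^4 + (31/7350)*a4*a7^6*x3^4 + (31/7350)*a4*a7^6*x4^4 + (-62/128625)*a4^2*a7^5*x1 + (-62/128625)*a4^2*a7^5*x2 + (-62/128625)*a4^2*a7^5*x3 + (-62/128625)*a4^2*a7^5*x4 + (-13/5145)*a5*a6*a7^5*x1^4 + (-13/5145)*a5*a6*a7^5*x2^4 + (-13/5145)*a5*a6*a7^5*x3^4 + (-13/5145)*a5*a6*a7^5*x4^4 + (64/36015)*a5*a6^2*a7^4*x1^3 + (64/36015)*a5*a6^2*a7^4*x2^3 + (64/36015)*a5*a6^2*a7^4*x3^3 + (64/36015)*a5*a6^2*a7^4*x4^3 + (256/252105)*a5*a6^3*a7^3*x1*x2 + (256/252105)*a5*a6^3*a7^3*x1*x3 + (256/252105)*a5*a6^3*a7^3*x1*x4 + (-304/252105)*a5*a6^3*a7^3*x1^2 + (256/252105)*a5*a6^3*a7^3*x2*x3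 + (256/252105)*a5*a6^3*a7^3*x2*x4 + (-304/252105)*a5*a6^3*a7^3*x2^2 + (256/252105)*a5*a6^3*a7^3*x3*x4 + (-304/252105)*a5*a6^3*a7^3*x3^2 + (-304/252105)*a5*a6^3*a7^3*x4^2 + (1216/1764735)*a5*a6^4*a7^2*x1 + (1216/1764735)*a5*a6^4*a7^2*x2 + (1216/1764735)*a5*a6^4*a7^2*x3 + (1216/1764735)*a5*a6^4*a7^2*x4 + (1/294)*a5*a7^6*x1^5 + (1/294)*a5*a7^6*x2^5 + (1/294)*a5*a7^6*x3^5 + (1/294)*a5*a7^6*x4^5 + (-4/7203)*a5^2*a6*a7^4*x1*x2 + (-4/7203)*a5^2*a6*a7^4*x1*x3 + (-4/7203)*a5^2*a6*a7^4*x1*x4 + (46/36015)*a5^2*a6*a7^4*x1^2 + (-4/7203)*a5^2*a6*a7^4*x2*x3 + (-4/7203)*a5^2*a6*a7^4*x2*x4 + (46/36015)*a5^2*a6*a7^4*x2^2 + (-4/7203)*a5^2*a6*a7^4*x3*x4 + (46/36015)*a5^2*a6*a7^4*x3^2 + (46/36015)*a5^2*a6*a7^4*x4^2 + (-184/252105)*a5^2*a6^2*a7^3*x1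 + (-184/252105)*a5^2*a6^2*a7^3*x2 + (-184/252105)*a5^2*a6^2*a7^3*x3 + (-184/252105)*a5^2*a6^2*a7^3*x4 + (-1/1029)*a5^2*a7^5*x1^3 + (-1/1029)*a5^2*a7^5*x2^3 + (-1/1029)*a5^2*a7^5*x3^3 + (-1/1029)*a5^2*a7^5*x4^3 + (1/490)*a6*a7^6*x1^6 + (1/490)*a6*a7^6*x2^6 + (1/490)*a6*a7^6*x3^6 + (1/490)*a6*a7^6*x4^6 + (-2/1715)*a6^2*a7^5*x1^5 + (-2/1715)*a6^2*a7^5*x2^5 + (-2/1715)*a6^2*a7^5*x3^5 + (-2/1715)*a6^2*a7^5*x4^5 + (8/12005)*a6^3*a7^4*x1^4 + (8/12005)*a6^3*a7^4*x2^4 + (8/12005)*a6^3*a7^4*x3^4 + (8/12005)*a6^3*a7^4*x4^4 + (-32/84035)*a6^4*a7^3*x1^3 + (-32/84035)*a6^4*a7^3*x2^3 + (-32/84035)*a6^4*a7^3*x3^3 + (-32/84035)*a6^4*a7^3*x4^3 + (-128/588245)*a6^5*a7^2*x1*x2 + (-128/588245)*a6^5*a7^2*x1*x3 + (-128/588245)*a6^5*a7^2*x1*x4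 + (128/588245)*a6^5*a7^2*x1^2 + (-128/588245)*a6^5*a7^2*x2*x3 + (-128/588245)*a6^5*a7^2*x2*x4 + (128/588245)*a6^5*a7^2*x2^2 + (-128/588245)*a6^5*a7^2*x3*x4 + (128/588245)*a6^5*a7^2*x3^2 + (128/588245)*a6^5*a7^2*x4^2 + (-512/4117715)*a6^6*a7*x1 + (-512/4117715)*a6^6*a7*x2 + (-512/4117715)*a6^6*a7*x3 + (-512/4117715)*a6^6*a7*x4 + (1/210)*a7^7*x1^7 + (1/210)*a7^7*x2^7 + (1/210)*a7^7*x3^7 + (1/210)*a7^7*x4^7)*h4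

private lemma septic_aux4 (a0 a1 a2 a3 a4 a5 a6 a7 L x1 x2 x3 : ℂ)
    (h0 : 24*a4 = L*((-1)*x1*x2*x3))
    (h1 : 120*a5 = L*(x1*x2 + x1*x3 + x2*x3))
    (h2 : 360*a6 = L*((-1)*x1 + (-1)*x2 + (-1)*x3))
    (h3 : 840*a7 = L*(1))
    : a7^7*((a0 + a1*x1^1 + a2*x1^2 + a3*x1^3 + a4*x1^4 + a5*x1^5 + a6*x1^6 + a7*x1^7) + (a0 + a1*x2^1 + a2*x2^2 + a3*x2^3 + a4*x2^4 + a5*x2^5 + a6*x2^6 + a7*x2^7) + (a0 + a1*x3^1 + a2*x3^2 + a3*x3^3 + a4*x3^4 + a5*x3^5 + a6*x3^6 + a7*x3^7)) = 3*a0*a7^7 + (-3/7)*a1*a6*a7^6 + (-2/7)*a2*a5*a7^6 + (9/49)*a2*a6^2*a7^5 + (-3/35)*a3*a4*a7^6 + (9/49)*a3*a5*a6*a7^5 + (-27/343)*a3*a6^3*a7^4 + (-234/1715)*a4*a5*a6^2*a7^4 + (2/35)*a4*a5^2*a7^5 + (486/12005)*a4*a6^4*a7^3 + (12/245)*a4^2*a6*a7^5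 + (-486/16807)*a5*a6^5*a7^2 + (162/2401)*a5^2*a6^3*a7^3 + (-2/49)*a5^3*a6*a7^4 + (2916/823543)*a6^7*a7 := by
  linear_combination ((1/280)*a3*a7^6 + (-53/34300)*a4*a6*a7^5 + (17/14700)*a4*a7^6*x1 + (17/14700)*a4*a7^6*x2 + (17/14700)*a4*a7^6*x3 + (-11/20580)*a5*a6*a7^5*x1 + (-11/20580)*a5*a6*a7^5*x2 + (-11/20580)*a5*a6*a7^5*x3 + (39/48020)*a5*a6^2*a7^4 + (1/980)*a5*a7^6*x1^2 + (1/980)*a5*a7^6*x2^2 + (1/980)*a5*a7^6*x3^2 + (-3/6860)*a5^2*a7^5 + (1/1470)*a6*a7^6*x1^3 + (1/1470)*a6*a7^6*x2^3 + (1/1470)*a6*a7^6*x3^3 + (-1/3430)*a6^2*a7^5*x1^2 + (-1/3430)*a6^2*a7^5*x2^2 + (-1/3430)*a6^2*a7^5*x3^2 + (3/24010)*a6^3*a7^4*x1 + (3/24010)*a6^3*a7^4*x2 + (3/24010)*a6^3*a7^4*x3 + (-27/168070)*a6^4*a7^3 + (1/840)*a7^7*x1^4 + (1/840)*a7^7*x2^4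 + (1/840)*a7^7*x3^4)*h0 + ((1/420)*a2*a7^6 + (-1/980)*a3*a6*a7^5 + (1/840)*a3*a7^6*x1 + (1/840)*a3*a7^6*x2 + (1/840)*a3*a7^6*x3 + (-2/5145)*a4*a5*a7^5 + (-53/102900)*a4*a6*a7^5*x1 + (-53/102900)*a4*a6*a7^5*x2 + (-53/102900)*a4*a6*a7^5*x3 + (11/24010)*a4*a6^2*a7^4 + (17/14700)*a4*a7^6*x1^2 + (17/14700)*a4*a7^6*x2^2 + (17/14700)*a4*a7^6*x3^2 + (-11/20580)*a5*a6*a7^5*x1^2 + (-11/20580)*a5*a6*a7^5*x2^2 + (-11/20580)*a5*a6*a7^5*x3^2 + (13/48020)*a5*a6^2*a7^4*x1 + (13/48020)*a5*a6^2*a7^4*x2 + (13/48020)*a5*a6^2*a7^4*x3 + (-9/33614)*a5*a6^3*a7^3 + (1/980)*a5*a7^6*x1^3 + (1/980)*a5*a7^6*x2^3 + (1/980)*a5*a7^6*x3^3 + (2/7203)*a5^2*a6*a7^4 + (-1/6860)*a5^2*a7^5*x1 + (-1/6860)*a5^2*a7^5*x2 + (-1/6860)*a5^2*a7^5*x3 +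 (1/1470)*a6*a7^6*x1^4 + (1/1470)*a6*a7^6*x2^4 + (1/1470)*a6*a7^6*x3^4 + (-1/3430)*a6^2*a7^5*x1^3 + (-1/3430)*a6^2*a7^5*x2^3 + (-1/3430)*a6^2*a7^5*x3^3 + (3/24010)*a6^3*a7^4*x1^2 + (3/24010)*a6^3*a7^4*x2^2 + (3/24010)*a6^3*a7^4*x3^2 + (-9/168070)*a6^4*a7^3*x1 + (-9/168070)*a6^4*a7^3*x2 + (-9/168070)*a6^4*a7^3*x3 + (27/588245)*a6^5*a7^2 + (1/840)*a7^7*x1^5 + (1/840)*a7^7*x2^5 + (1/840)*a7^7*x3^5)*h1 + ((1/840)*a1*a7^6 + (-1/1960)*a2*a6*a7^5 + (1/840)*a2*a7^6*x1 + (1/840)*a2*a7^6*x2 + (1/840)*a2*a7^6*x3 + (-1/5880)*a3*a5*a7^5 + (-1/1960)*a3*a6*a7^5*x1 + (-1/1960)*a3*a6*a7^5*x2 + (-1/1960)*a3*a6*a7^5*x3 + (3/13720)*a3*a6^2*a7^4 + (1/840)*a3*a7^6*x1^2 + (1/840)*a3*a7^6*x2^2 + (1/840)*a3*a7^6*x3^2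 + (31/180075)*a4*a5*a6*a7^4 + (-1/5145)*a4*a5*a7^5*x1 + (-1/5145)*a4*a5*a7^5*x2 + (-1/5145)*a4*a5*a7^5*x3 + (-53/102900)*a4*a6*a7^5*x1^2 + (-53/102900)*a4*a6*a7^5*x2^2 + (-53/102900)*a4*a6*a7^5*x3^2 + (11/48020)*a4*a6^2*a7^4*x1 + (11/48020)*a4*a6^2*a7^4*x2 + (11/48020)*a4*a6^2*a7^4*x3 + (-171/1680700)*a4*a6^3*a7^3 + (17/14700)*a4*a7^6*x1^3 + (17/14700)*a4*a7^6*x2^3 + (17/14700)*a4*a7^6*x3^3 + (-17/514500)*a4^2*a7^5 + (-11/20580)*a5*a6*a7^5*x1^3 + (-11/20580)*a5*a6*a7^5*x2^3 + (-11/20580)*a5*a6*a7^5*x3^3 + (13/48020)*a5*a6^2*a7^4*x1^2 + (13/48020)*a5*a6^2*a7^4*x2^2 + (13/48020)*a5*a6^2*a7^4*x3^2 + (-9/67228)*a5*a6^3*a7^3*x1 + (-9/67228)*a5*a6^3*a7^3*x2 + (-9/67228)*a5*a6^3*a7^3*x3 + (153/2352980)*a5*a6^4*a7^2 + (1/980)*a5*a7^6*x1^4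 + (1/980)*a5*a7^6*x2^4 + (1/980)*a5*a7^6*x3^4 + (1/7203)*a5^2*a6*a7^4*x1 + (1/7203)*a5^2*a6*a7^4*x2 + (1/7203)*a5^2*a6*a7^4*x3 + (-33/336140)*a5^2*a6^2*a7^3 + (-1/6860)*a5^2*a7^5*x1^2 + (-1/6860)*a5^2*a7^5*x2^2 + (-1/6860)*a5^2*a7^5*x3^2 + (1/48020)*a5^3*a7^4 + (1/1470)*a6*a7^6*x1^5 + (1/1470)*a6*a7^6*x2^5 + (1/1470)*a6*a7^6*x3^5 + (-1/3430)*a6^2*a7^5*x1^4 + (-1/3430)*a6^2*a7^5*x2^4 + (-1/3430)*a6^2*a7^5*x3^4 + (3/24010)*a6^3*a7^4*x1^3 + (3/24010)*a6^3*a7^4*x2^3 + (3/24010)*a6^3*a7^4*x3^3 + (-9/168070)*a6^4*a7^3*x1^2 + (-9/168070)*a6^4*a7^3*x2^2 + (-9/168070)*a6^4*a7^3*x3^2 + (27/1176490)*a6^5*a7^2*x1 + (27/1176490)*a6^5*a7^2*x2 + (27/1176490)*a6^5*a7^2*x3 + (-81/8235430)*a6^6*a7 + (1/840)*a7^7*x1^6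 + (1/840)*a7^7*x2^6 + (1/840)*a7^7*x3^6)*h2 + ((1/840)*a1*a7^6*x1 + (1/840)*a1*a7^6*x2 + (1/840)*a1*a7^6*x3 + (-1/1960)*a2*a6*a7^5*x1 + (-1/1960)*a2*a6*a7^5*x2 + (-1/1960)*a2*a6*a7^5*x3 + (1/840)*a2*a7^6*x1^2 + (1/840)*a2*a7^6*x2^2 + (1/840)*a2*a7^6*x3^2 + (-1/5880)*a3*a5*a7^5*x1 + (-1/5880)*a3*a5*a7^5*x2 + (-1/5880)*a3*a5*a7^5*x3 + (-1/1960)*a3*a6*a7^5*x1^2 + (-1/1960)*a3*a6*a7^5*x2^2 + (-1/1960)*a3*a6*a7^5*x3^2 + (3/13720)*a3*a6^2*a7^4*x1 + (3/13720)*a3*a6^2*a7^4*x2 + (3/13720)*a3*a6^2*a7^4*x3 + (1/840)*a3*a7^6*x1^3 + (1/840)*a3*a7^6*x2^3 + (1/840)*a3*a7^6*x3^3 + (31/180075)*a4*a5*a6*a7^4*x1 + (31/180075)*a4*a5*a6*a7^4*x2 + (31/180075)*a4*a5*a6*a7^4*x3 + (-1/5145)*a4*a5*a7^5*x1^2 +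 (-1/5145)*a4*a5*a7^5*x2^2 + (-1/5145)*a4*a5*a7^5*x3^2 + (-53/102900)*a4*a6*a7^5*x1^3 + (-53/102900)*a4*a6*a7^5*x2^3 + (-53/102900)*a4*a6*a7^5*x3^3 + (11/48020)*a4*a6^2*a7^4*x1^2 + (11/48020)*a4*a6^2*a7^4*x2^2 + (11/48020)*a4*a6^2*a7^4*x3^2 + (-171/1680700)*a4*a6^3*a7^3*x1 + (-171/1680700)*a4*a6^3*a7^3*x2 + (-171/1680700)*a4*a6^3*a7^3*x3 + (17/14700)*a4*a7^6*x1^4 + (17/14700)*a4*a7^6*x2^4 + (17/14700)*a4*a7^6*x3^4 + (-17/514500)*a4^2*a7^5*x1 + (-17/514500)*a4^2*a7^5*x2 + (-17/514500)*a4^2*a7^5*x3 + (-11/20580)*a5*a6*a7^5*x1^4 + (-11/20580)*a5*a6*a7^5*x2^4 + (-11/20580)*a5*a6*a7^5*x3^4 + (13/48020)*a5*a6^2*a7^4*x1^3 + (13/48020)*a5*a6^2*a7^4*x2^3 + (13/48020)*a5*a6^2*a7^4*x3^3 + (-9/67228)*a5*a6^3*a7^3*x1^2 + (-9/67228)*a5*a6^3*a7^3*x2^2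 + (-9/67228)*a5*a6^3*a7^3*x3^2 + (153/2352980)*a5*a6^4*a7^2*x1 + (153/2352980)*a5*a6^4*a7^2*x2 + (153/2352980)*a5*a6^4*a7^2*x3 + (1/980)*a5*a7^6*x1^5 + (1/980)*a5*a7^6*x2^5 + (1/980)*a5*a7^6*x3^5 + (1/7203)*a5^2*a6*a7^4*x1^2 + (1/7203)*a5^2*a6*a7^4*x2^2 + (1/7203)*a5^2*a6*a7^4*x3^2 + (-33/336140)*a5^2*a6^2*a7^3*x1 + (-33/336140)*a5^2*a6^2*a7^3*x2 + (-33/336140)*a5^2*a6^2*a7^3*x3 + (-1/6860)*a5^2*a7^5*x1^3 + (-1/6860)*a5^2*a7^5*x2^3 + (-1/6860)*a5^2*a7^5*x3^3 + (1/48020)*a5^3*a7^4*x1 + (1/48020)*a5^3*a7^4*x2 + (1/48020)*a5^3*a7^4*x3 + (1/1470)*a6*a7^6*x1^6 + (1/1470)*a6*a7^6*x2^6 + (1/1470)*a6*a7^6*x3^6 + (-1/3430)*a6^2*a7^5*x1^5 + (-1/3430)*a6^2*a7^5*x2^5 + (-1/3430)*a6^2*a7^5*x3^5 + (3/24010)*a6^3*a7^4*x1^4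 + (3/24010)*a6^3*a7^4*x2^4 + (3/24010)*a6^3*a7^4*x3^4 + (-9/168070)*a6^4*a7^3*x1^3 + (-9/168070)*a6^4*a7^3*x2^3 + (-9/168070)*a6^4*a7^3*x3^3 + (27/1176490)*a6^5*a7^2*x1^2 + (27/1176490)*a6^5*a7^2*x2^2 + (27/1176490)*a6^5*a7^2*x3^2 + (-81/8235430)*a6^6*a7*x1 + (-81/8235430)*a6^6*a7*x2 + (-81/8235430)*a6^6*a7*x3 + (1/840)*a7^7*x1^7 + (1/840)*a7^7*x2^7 + (1/840)*a7^7*x3^7)*h3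

private lemma septic_aux5 (a0 a1 a2 a3 a4 a5 a6 a7 L x1 x2 : ℂ)
    (h0 : 120*a5 = L*(x1*x2))
    (h1 : 720*a6 = L*((-1)*x1 + (-1)*x2))
    (h2 : 2520*a7 = L*(1))
    : a7^7*((a0 + a1*x1^1 + a2*x1^2 + a3*x1^3 + a4*x1^4 + a5*x1^5 + a6*x1^6 + a7*x1^7) + (a0 + a1*x2^1 + a2*x2^2 + a3*x2^3 + a4*x2^4 + a5*x2^5 + a6*x2^6 + a7*x2^7)) = 2*a0*a7^7 + (-2/7)*a1*a6*a7^6 + (-2/21)*a2*a5*a7^6 + (4/49)*a2*a6^2*a7^5 + (2/49)*a3*a5*a6*a7^5 + (-8/343)*a3*a6^3*a7^4 + (-16/1029)*a4*a5*a6^2*a7^4 + (2/441)*a4*a5^2*a7^5 + (16/2401)*a4*a6^4*a7^3 + (-160/50421)*a5*a6^5*a7^2 + (20/3087)*a5^2*a6^3*a7^3 + (-10/3087)*a5^3*a6*a7^4 + (320/823543)*a6^7*a7 := by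
  linear_combination ((1/1260)*a2*a7^6 + (-1/4410)*a3*a6*a7^5 + (1/2520)*a3*a7^6*x1 + (1/2520)*a3*a7^6*x2 + (-1/26460)*a4*a5*a7^5 + (-1/8820)*a4*a6*a7^5*x1 + (-1/8820)*a4*a6*a7^5*x2 + (1/15435)*a4*a6^2*a7^4 + (1/2520)*a4*a7^6*x1^2 + (1/2520)*a4*a7^6*x2^2 + (-1/8232)*a5*a6*a7^5*x1^2 + (-1/8232)*a5*a6*a7^5*x2^2 + (5/129654)*a5*a6^2*a7^4*x1 + (5/129654)*a5*a6^2*a7^4*x2 + (-11/453789)*a5*a6^3*a7^3 + (1/2646)*a5*a7^6*x1^3 + (1/2646)*a5*a7^6*x2^3 + (17/777924)*a5^2*a6*a7^4 + (-1/55566)*a5^2*a7^5*x1 + (-1/55566)*a5^2*a7^5*x2 + (1/3528)*a6*a7^6*x1^4 + (1/3528)*a6*a7^6*x2^4 + (-1/12348)*a6^2*a7^5*x1^3 + (-1/12348)*a6^2*a7^5*x2^3 + (1/43218)*a6^3*a7^4*x1^2 + (1/43218)*a6^3*a7^4*x2^2 + (-1/151263)*a6^4*a7^3*x1 + (-1/151263)*a6^4*a7^3*x2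 + (4/1058841)*a6^5*a7^2 + (1/2520)*a7^7*x1^5 + (1/2520)*a7^7*x2^5)*h0 + ((1/2520)*a1*a7^6 + (-1/8820)*a2*a6*a7^5 + (1/2520)*a2*a7^6*x1 + (1/2520)*a2*a7^6*x2 + (-1/52920)*a3*a5*a7^5 + (-1/8820)*a3*a6*a7^5*x1 + (-1/8820)*a3*a6*a7^5*x2 + (1/30870)*a3*a6^2*a7^4 + (1/2520)*a3*a7^6*x1^2 + (1/2520)*a3*a7^6*x2^2 + (1/92610)*a4*a5*a6*a7^4 + (-1/52920)*a4*a5*a7^5*x1 + (-1/52920)*a4*a5*a7^5*x2 + (-1/8820)*a4*a6*a7^5*x1^2 + (-1/8820)*a4*a6*a7^5*x2^2 + (1/30870)*a4*a6^2*a7^4*x1 + (1/30870)*a4*a6^2*a7^4*x2 + (-1/108045)*a4*a6^3*a7^3 + (1/2520)*a4*a7^6*x1^3 + (1/2520)*a4*a7^6*x2^3 + (-1/8232)*a5*a6*a7^5*x1^3 + (-1/8232)*a5*a6*a7^5*x2^3 + (5/129654)*a5*a6^2*a7^4*x1^2 + (5/129654)*a5*a6^2*a7^4*x2^2 + (-11/907578)*a5*a6^3*a7^3*x1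 + (-11/907578)*a5*a6^3*a7^3*x2 + (4/1058841)*a5*a6^4*a7^2 + (1/2646)*a5*a7^6*x1^4 + (1/2646)*a5*a7^6*x2^4 + (17/1555848)*a5^2*a6*a7^4*x1 + (17/1555848)*a5^2*a6*a7^4*x2 + (-1/201684)*a5^2*a6^2*a7^3 + (-1/55566)*a5^2*a7^5*x1^2 + (-1/55566)*a5^2*a7^5*x2^2 + (1/1166886)*a5^3*a7^4 + (1/3528)*a6*a7^6*x1^5 + (1/3528)*a6*a7^6*x2^5 + (-1/12348)*a6^2*a7^5*x1^4 + (-1/12348)*a6^2*a7^5*x2^4 + (1/43218)*a6^3*a7^4*x1^3 + (1/43218)*a6^3*a7^4*x2^3 + (-1/151263)*a6^4*a7^3*x1^2 + (-1/151263)*a6^4*a7^3*x2^2 + (2/1058841)*a6^5*a7^2*x1 + (2/1058841)*a6^5*a7^2*x2 + (-4/7411887)*a6^6*a7 + (1/2520)*a7^7*x1^6 + (1/2520)*a7^7*x2^6)*h1 + ((1/2520)*a1*a7^6*x1 + (1/2520)*a1*a7^6*x2 + (-1/8820)*a2*a6*a7^5*x1 + (-1/8820)*a2*a6*a7^5*x2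 + (1/2520)*a2*a7^6*x1^2 + (1/2520)*a2*a7^6*x2^2 + (-1/52920)*a3*a5*a7^5*x1 + (-1/52920)*a3*a5*a7^5*x2 + (-1/8820)*a3*a6*a7^5*x1^2 + (-1/8820)*a3*a6*a7^5*x2^2 + (1/30870)*a3*a6^2*a7^4*x1 + (1/30870)*a3*a6^2*a7^4*x2 + (1/2520)*a3*a7^6*x1^3 + (1/2520)*a3*a7^6*x2^3 + (1/92610)*a4*a5*a6*a7^4*x1 + (1/92610)*a4*a5*a6*a7^4*x2 + (-1/52920)*a4*a5*a7^5*x1^2 + (-1/52920)*a4*a5*a7^5*x2^2 + (-1/8820)*a4*a6*a7^5*x1^3 + (-1/8820)*a4*a6*a7^5*x2^3 + (1/30870)*a4*a6^2*a7^4*x1^2 + (1/30870)*a4*a6^2*a7^4*x2^2 + (-1/108045)*a4*a6^3*a7^3*x1 + (-1/108045)*a4*a6^3*a7^3*x2 + (1/2520)*a4*a7^6*x1^4 + (1/2520)*a4*a7^6*x2^4 + (-1/8232)*a5*a6*a7^5*x1^4 + (-1/8232)*a5*a6*a7^5*x2^4 + (5/129654)*a5*a6^2*a7^4*x1^3 +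 (5/129654)*a5*a6^2*a7^4*x2^3 + (-11/907578)*a5*a6^3*a7^3*x1^2 + (-11/907578)*a5*a6^3*a7^3*x2^2 + (4/1058841)*a5*a6^4*a7^2*x1 + (4/1058841)*a5*a6^4*a7^2*x2 + (1/2646)*a5*a7^6*x1^5 + (1/2646)*a5*a7^6*x2^5 + (17/1555848)*a5^2*a6*a7^4*x1^2 + (17/1555848)*a5^2*a6*a7^4*x2^2 + (-1/201684)*a5^2*a6^2*a7^3*x1 + (-1/201684)*a5^2*a6^2*a7^3*x2 + (-1/55566)*a5^2*a7^5*x1^3 + (-1/55566)*a5^2*a7^5*x2^3 + (1/1166886)*a5^3*a7^4*x1 + (1/1166886)*a5^3*a7^4*x2 + (1/3528)*a6*a7^6*x1^6 + (1/3528)*a6*a7^6*x2^6 + (-1/12348)*a6^2*a7^5*x1^5 + (-1/12348)*a6^2*a7^5*x2^5 + (1/43218)*a6^3*a7^4*x1^4 + (1/43218)*a6^3*a7^4*x2^4 + (-1/151263)*a6^4*a7^3*x1^3 + (-1/151263)*a6^4*a7^3*x2^3 + (2/1058841)*a6^5*a7^2*x1^2 + (2/1058841)*a6^5*a7^2*x2^2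 + (-4/7411887)*a6^6*a7*x1 + (-4/7411887)*a6^6*a7*x2 + (1/2520)*a7^7*x1^7 + (1/2520)*a7^7*x2^7)*h2

private lemma septic_aux6 (a0 a1 a2 a3 a4 a5 a6 a7 L x1 : ℂ)
    (h0 : 720*a6 = L*((-1)*x1))
    (h1 : 5040*a7 = L*(1))
    : a7^7*((a0 + a1*x1^1 + a2*x1^2 + a3*x1^3 + a4*x1^4 + a5*x1^5 + a6*x1^6 + a7*x1^7)) = a0*a7^7 + (-1/7)*a1*a6*a7^6 + (1/49)*a2*a6^2*a7^5 + (-1/343)*a3*a6^3*a7^4 + (1/2401)*a4*a6^4*a7^3 + (-1/16807)*a5*a6^5*a7^2 + (6/823543)*a6^7*a7 := by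
  linear_combination ((1/5040)*a1*a7^6 + (-1/35280)*a2*a6*a7^5 + (1/5040)*a2*a7^6*x1 + (-1/35280)*a3*a6*a7^5*x1 + (1/246960)*a3*a6^2*a7^4 + (1/5040)*a3*a7^6*x1^2 + (-1/35280)*a4*a6*a7^5*x1^2 + (1/246960)*a4*a6^2*a7^4*x1 + (-1/1728720)*a4*a6^3*a7^3 + (1/5040)*a4*a7^6*x1^3 + (-1/35280)*a5*a6*a7^5*x1^3 + (1/246960)*a5*a6^2*a7^4*x1^2 + (-1/1728720)*a5*a6^3*a7^3*x1 + (1/12101040)*a5*a6^4*a7^2 + (1/5040)*a5*a7^6*x1^4 + (1/5880)*a6*a7^6*x1^5 + (-1/41160)*a6^2*a7^5*x1^4 + (1/288120)*a6^3*a7^4*x1^3 + (-1/2016840)*a6^4*a7^3*x1^2 + (1/14117880)*a6^5*a7^2*x1 + (-1/98825160)*a6^6*a7 + (1/5040)*a7^7*x1^6)*h0 + ((1/5040)*a1*a7^6*x1 + (-1/35280)*a2*a6*a7^5*x1 + (1/5040)*a2*a7^6*x1^2 + (-1/35280)*a3*a6*a7^5*x1^2 + (1/246960)*a3*a6^2*a7^4*x1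 + (1/5040)*a3*a7^6*x1^3 + (-1/35280)*a4*a6*a7^5*x1^3 + (1/246960)*a4*a6^2*a7^4*x1^2 + (-1/1728720)*a4*a6^3*a7^3*x1 + (1/5040)*a4*a7^6*x1^4 + (-1/35280)*a5*a6*a7^5*x1^4 + (1/246960)*a5*a6^2*a7^4*x1^3 + (-1/1728720)*a5*a6^3*a7^3*x1^2 + (1/12101040)*a5*a6^4*a7^2*x1 + (1/5040)*a5*a7^6*x1^5 + (1/5880)*a6*a7^6*x1^6 + (-1/41160)*a6^2*a7^5*x1^5 + (1/288120)*a6^3*a7^4*x1^4 + (-1/2016840)*a6^4*a7^3*x1^3 + (1/14117880)*a6^5*a7^2*x1^2 + (-1/98825160)*a6^6*a7*x1 + (1/5040)*a7^7*x1^7)*h1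

private lemma septic_prod1 (x1 x2 x3 x4 x5 x6 : ℂ) : ((X - C x1) * ((X - C x2) * ((X - C x3) * ((X - C x4) * ((X - C x5) * ((X - C x6)))))) : Polynomial ℂ) = X^6 + C ((-1)*x1 + (-1)*x2 + (-1)*x3 + (-1)*x4 + (-1)*x5 + (-1)*x6) * X^5 + C (x1*x2 + x1*x3 + x1*x4 + x1*x5 + x1*x6 + x2*x3 + x2*x4 + x2*x5 + x2*x6 + x3*x4 + x3*x5 + x3*x6 + x4*x5 + x4*x6 + x5*x6) * X^4 + C ((-1)*x1*x2*x3 + (-1)*x1*x2*x4 + (-1)*x1*x2*x5 + (-1)*x1*x2*x6 + (-1)*x1*x3*x4 + (-1)*x1*x3*x5 + (-1)*x1*x3*x6 + (-1)*x1*x4*x5 + (-1)*x1*x4*x6 + (-1)*x1*x5*x6 + (-1)*x2*x3*x4 + (-1)*x2*x3*x5 + (-1)*x2*x3*x6 + (-1)*x2*x4*x5 + (-1)*x2*x4*x6 + (-1)*x2*x5*x6 + (-1)*x3*x4*x5 + (-1)*x3*x4*x6 + (-1)*x3*x5*x6 + (-1)*x4*x5*x6) * X^3 + C (x1*x2*x3*x4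 + x1*x2*x3*x5 + x1*x2*x3*x6 + x1*x2*x4*x5 + x1*x2*x4*x6 + x1*x2*x5*x6 + x1*x3*x4*x5 + x1*x3*x4*x6 + x1*x3*x5*x6 + x1*x4*x5*x6 + x2*x3*x4*x5 + x2*x3*x4*x6 + x2*x3*x5*x6 + x2*x4*x5*x6 + x3*x4*x5*x6) * X^2 + C ((-1)*x1*x2*x3*x4*x5 + (-1)*x1*x2*x3*x4*x6 + (-1)*x1*x2*x3*x5*x6 + (-1)*x1*x2*x4*x5*x6 + (-1)*x1*x3*x4*x5*x6 + (-1)*x2*x3*x4*x5*x6) * X^1 + C (x1*x2*x3*x4*x5*x6) := by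
  simp only [map_add, map_mul, map_neg, map_one]
  ring

private lemma septic_prod3 (x1 x2 x3 x4 : ℂ) : ((X - C x1) * ((X - C x2) * ((X - C x3) * ((X - C x4)))) : Polynomial ℂ) = X^4 + C ((-1)*x1 + (-1)*x2 + (-1)*x3 + (-1)*x4) * X^3 + C (x1*x2 + x1*x3 + x1*x4 + x2*x3 + x2*x4 + x3*x4) * X^2 + C ((-1)*x1*x2*x3 + (-1)*x1*x2*x4 + (-1)*x1*x3*x4 + (-1)*x2*x3*x4) * X^1 + C (x1*x2*x3*x4) := by
  simp only [map_add, map_mul, map_neg, map_one]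
  ring

private lemma septic_prod4 (x1 x2 x3 : ℂ) : ((X - C x1) * ((X - C x2) * ((X - C x3))) : Polynomial ℂ) = X^3 + C ((-1)*x1 + (-1)*x2 + (-1)*x3) * X^2 + C (x1*x2 + x1*x3 + x2*x3) * X^1 + C ((-1)*x1*x2*x3) := by
  simp only [map_add, map_mul, map_neg, map_one]
  ring

private lemma septic_prod5 (x1 x2 : ℂ) : ((X - C x1) * ((X - C x2)) : Polynomial ℂ) = X^2 + C ((-1)*x1 + (-1)*x2) * X^1 + C (x1*x2) := by
  simp only [map_add, map_mul, map_neg, map_one]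
  ring

private lemma exists_cons_of_card_succ {α} (s : Multiset α) (n : ℕ) (h : s.card = n+1) :
    ∃ a t, s = a ::ₘ t ∧ t.card = n := by
  obtain ⟨a, ha⟩ := Multiset.exists_mem_of_ne_zero (s := s) (by rintro rfl; simp at h)
  obtain ⟨t, rfl⟩ := Multiset.exists_cons_of_mem ha
  exact ⟨a, t, rfl, by simpa using h⟩

/-- The average of `f` over the roots of the `ρ`-th derivative of `f`,
counted with multiplicity. -/
noncomputable def phi (f : Polynomial ℂ) (ρ : ℕ) : ℂ :=
  ((derivative^[ρ] f).roots.map (fun x => f.eval x)).sum / ((f.natDegree - ρ : ℕ) : ℂ)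

/-- In any septic, `37·φ₁ − 150·φ₃ + 200·φ₄ − 135·φ₅ + 48·φ₆ = 0`. -/
theorem septic_relation (f : Polynomial ℂ) (hf : f.degree = 7) :
    37 * phi f 1 - 150 * phi f 3 + 200 * phi f 4 - 135 * phi f 5 + 48 * phi f 6 = 0 := by
  have hd : f.natDegree = 7 := natDegree_eq_of_degree_eq_some hf
  have hf0 : f ≠ 0 := fun h => by simp [h] at hf
  have ha7 : f.coeff 7 ≠ 0 := by
    rw [← hd, coeff_natDegree]; exact leadingCoeff_ne_zero.mpr hf0
  -- ρ = 1
  have hg1 : (derivative^[1] f).natDegree = 6 := by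
    refine natDegree_eq_of_le_of_coeff_ne_zero ((natDegree_iterate_derivative f 1).trans (by rw [hd])) ?_
    rw [coeff_iterate_derivative]
    norm_num [hd]
    exact ha7
  have hc1 : (derivative^[1] f).roots.card = 6 := by
    rw [← hg1]
    exact splits_iff_card_roots.mp (IsAlgClosed.splits _)
  obtain ⟨x11, t11, ht11, htc11⟩ := exists_cons_of_card_succ _ 5 (hc1)
  obtain ⟨x12, t12, ht12, htc12⟩ := exists_cons_of_card_succ _ 4 (htc11)
  obtain ⟨x13, t13, ht13, htc13⟩ := exists_cons_of_card_succ _ 3 (htc12)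
  obtain ⟨x14, t14, ht14, htc14⟩ := exists_cons_of_card_succ _ 2 (htc13)
  obtain ⟨x15, t15, ht15, htc15⟩ := exists_cons_of_card_succ _ 1 (htc14)
  obtain ⟨x16, t16, ht16, htc16⟩ := exists_cons_of_card_succ _ 0 (htc15)
  rw [Multiset.card_eq_zero] at htc16
  rw [htc16] at ht16
  have hroots1 : (derivative^[1] f).roots = x11 ::ₘ (x12 ::ₘ (x13 ::ₘ (x14 ::ₘ (x15 ::ₘ (x16 ::ₘ 0))))) := by
    rw [ht11, ht12, ht13, ht14, ht15, ht16]
  have hfac1 := C_leadingCoeff_mul_prod_multiset_X_sub_C (p := derivative^[1] f) (by rw [hc1, hg1])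
  rw [hroots1] at hfac1
  simp only [Multiset.map_cons, Multiset.map_zero, Multiset.prod_cons, Multiset.prod_zero, mul_one] at hfac1
  rw [septic_prod1] at hfac1
  set L1 := (derivative^[1] f).leadingCoeff with hLdef1
  have h1_0 : (1:ℂ)*f.coeff 1 = L1*(x11*x12*x13*x14*x15*x16) := by
    have hcf := congrArg (fun p => Polynomial.coeff p 0) hfac1
    simp only [coeff_iterate_derivative, nsmul_eq_mul, coeff_C_mul, coeff_add, coeff_X_pow, coeff_C, coeff_sub, coeff_X, mul_one, mul_zero, add_zero, zero_add] at hcf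
    norm_num at hcf
    first | linear_combination -hcf | linear_combination hcf | linear_combination 2*hcf | linear_combination -2*hcf
  have h1_1 : (2:ℂ)*f.coeff 2 = L1*((-1)*x11*x12*x13*x14*x15 + (-1)*x11*x12*x13*x14*x16 + (-1)*x11*x12*x13*x15*x16 + (-1)*x11*x12*x14*x15*x16 + (-1)*x11*x13*x14*x15*x16 + (-1)*x12*x13*x14*x15*x16) := by
    have hcf := congrArg (fun p => Polynomial.coeff p 1) hfac1
    simp only [coeff_iterate_derivative, nsmul_eq_mul, coeff_C_mul, coeff_add, coeff_X_pow, coeff_C, coeff_sub, coeff_X, mul_one, mul_zero, add_zero, zero_add] at hcf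
    norm_num at hcf
    first | linear_combination -hcf | linear_combination hcf | linear_combination 2*hcf | linear_combination -2*hcf
  have h1_2 : (3:ℂ)*f.coeff 3 = L1*(x11*x12*x13*x14 + x11*x12*x13*x15 + x11*x12*x13*x16 + x11*x12*x14*x15 + x11*x12*x14*x16 + x11*x12*x15*x16 + x11*x13*x14*x15 + x11*x13*x14*x16 + x11*x13*x15*x16 + x11*x14*x15*x16 + x12*x13*x14*x15 + x12*x13*x14*x16 + x12*x13*x15*x16 + x12*x14*x15*x16 + x13*x14*x15*x16) := by
    have hcf := congrArg (fun p => Polynomial.coeff p 2) hfac1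
    simp only [coeff_iterate_derivative, nsmul_eq_mul, coeff_C_mul, coeff_add, coeff_X_pow, coeff_C, coeff_sub, coeff_X, mul_one, mul_zero, add_zero, zero_add] at hcf
    norm_num at hcf
    first | linear_combination -hcf | linear_combination hcf | linear_combination 2*hcf | linear_combination -2*hcf
  have h1_3 : (4:ℂ)*f.coeff 4 = L1*((-1)*x11*x12*x13 + (-1)*x11*x12*x14 + (-1)*x11*x12*x15 + (-1)*x11*x12*x16 + (-1)*x11*x13*x14 + (-1)*x11*x13*x15 + (-1)*x11*x13*x16 + (-1)*x11*x14*x15 + (-1)*x11*x14*x16 + (-1)*x11*x15*x16 + (-1)*x12*x13*x14 + (-1)*x12*x13*x15 + (-1)*x12*x13*x16 + (-1)*x12*x14*x15 + (-1)*x12*x14*x16 + (-1)*x12*x15*x16 + (-1)*x13*x14*x15 + (-1)*x13*x14*x16 + (-1)*x13*x15*x16 + (-1)*x14*x15*x16) := by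
    have hcf := congrArg (fun p => Polynomial.coeff p 3) hfac1
    simp only [coeff_iterate_derivative, nsmul_eq_mul, coeff_C_mul, coeff_add, coeff_X_pow, coeff_C, coeff_sub, coeff_X, mul_one, mul_zero, add_zero, zero_add] at hcf
    norm_num at hcf
    first | linear_combination -hcf | linear_combination hcf | linear_combination 2*hcf | linear_combination -2*hcf
  have h1_4 : (5:ℂ)*f.coeff 5 = L1*(x11*x12 + x11*x13 + x11*x14 + x11*x15 + x11*x16 + x12*x13 + x12*x14 + x12*x15 + x12*x16 + x13*x14 + x13*x15 + x13*x16 + x14*x15 + x14*x16 + x15*x16) := by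
    have hcf := congrArg (fun p => Polynomial.coeff p 4) hfac1
    simp only [coeff_iterate_derivative, nsmul_eq_mul, coeff_C_mul, coeff_add, coeff_X_pow, coeff_C, coeff_sub, coeff_X, mul_one, mul_zero, add_zero, zero_add] at hcf
    norm_num at hcf
    first | linear_combination -hcf | linear_combination hcf | linear_combination 2*hcf | linear_combination -2*hcf
  have h1_5 : (6:ℂ)*f.coeff 6 = L1*((-1)*x11 + (-1)*x12 + (-1)*x13 + (-1)*x14 + (-1)*x15 + (-1)*x16) := by
    have hcf := congrArg (fun p => Polynomial.coeff p 5) hfac1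
    simp only [coeff_iterate_derivative, nsmul_eq_mul, coeff_C_mul, coeff_add, coeff_X_pow, coeff_C, coeff_sub, coeff_X, mul_one, mul_zero, add_zero, zero_add] at hcf
    norm_num at hcf
    first | linear_combination -hcf | linear_combination hcf | linear_combination 2*hcf | linear_combination -2*hcf
  have h1_6 : (7:ℂ)*f.coeff 7 = L1*(1) := by
    have hcf := congrArg (fun p => Polynomial.coeff p 6) hfac1
    simp only [coeff_iterate_derivative, nsmul_eq_mul, coeff_C_mul, coeff_add, coeff_X_pow, coeff_C, coeff_sub, coeff_X, mul_one, mul_zero, add_zero, zero_add] at hcf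
    norm_num at hcf
    first | linear_combination -hcf | linear_combination hcf | linear_combination 2*hcf | linear_combination -2*hcf
  have hphi1 : phi f 1 = (f.eval x11 + f.eval x12 + f.eval x13 + f.eval x14 + f.eval x15 + f.eval x16) / 6 := by
    rw [phi, hroots1, hd]
    norm_num
    try ring
  have hev11 : f.eval x11 = f.coeff 0 + f.coeff 1*x11^1 + f.coeff 2*x11^2 + f.coeff 3*x11^3 + f.coeff 4*x11^4 + f.coeff 5*x11^5 + f.coeff 6*x11^6 + f.coeff 7*x11^7 := by
    rw [eval_eq_sum_range, hd]
    simp [Finset.sum_range_succ]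
  have hev12 : f.eval x12 = f.coeff 0 + f.coeff 1*x12^1 + f.coeff 2*x12^2 + f.coeff 3*x12^3 + f.coeff 4*x12^4 + f.coeff 5*x12^5 + f.coeff 6*x12^6 + f.coeff 7*x12^7 := by
    rw [eval_eq_sum_range, hd]
    simp [Finset.sum_range_succ]
  have hev13 : f.eval x13 = f.coeff 0 + f.coeff 1*x13^1 + f.coeff 2*x13^2 + f.coeff 3*x13^3 + f.coeff 4*x13^4 + f.coeff 5*x13^5 + f.coeff 6*x13^6 + f.coeff 7*x13^7 := by
    rw [eval_eq_sum_range, hd]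
    simp [Finset.sum_range_succ]
  have hev14 : f.eval x14 = f.coeff 0 + f.coeff 1*x14^1 + f.coeff 2*x14^2 + f.coeff 3*x14^3 + f.coeff 4*x14^4 + f.coeff 5*x14^5 + f.coeff 6*x14^6 + f.coeff 7*x14^7 := by
    rw [eval_eq_sum_range, hd]
    simp [Finset.sum_range_succ]
  have hev15 : f.eval x15 = f.coeff 0 + f.coeff 1*x15^1 + f.coeff 2*x15^2 + f.coeff 3*x15^3 + f.coeff 4*x15^4 + f.coeff 5*x15^5 + f.coeff 6*x15^6 + f.coeff 7*x15^7 := by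
    rw [eval_eq_sum_range, hd]
    simp [Finset.sum_range_succ]
  have hev16 : f.eval x16 = f.coeff 0 + f.coeff 1*x16^1 + f.coeff 2*x16^2 + f.coeff 3*x16^3 + f.coeff 4*x16^4 + f.coeff 5*x16^5 + f.coeff 6*x16^6 + f.coeff 7*x16^7 := by
    rw [eval_eq_sum_range, hd]
    simp [Finset.sum_range_succ]
  -- ρ = 3
  have hg3 : (derivative^[3] f).natDegree = 4 := by
    refine natDegree_eq_of_le_of_coeff_ne_zero ((natDegree_iterate_derivative f 3).trans (by rw [hd])) ?_
    rw [coeff_iterate_derivative]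
    norm_num [hd]
    exact ha7
  have hc3 : (derivative^[3] f).roots.card = 4 := by
    rw [← hg3]
    exact splits_iff_card_roots.mp (IsAlgClosed.splits _)
  obtain ⟨x31, t31, ht31, htc31⟩ := exists_cons_of_card_succ _ 3 (hc3)
  obtain ⟨x32, t32, ht32, htc32⟩ := exists_cons_of_card_succ _ 2 (htc31)
  obtain ⟨x33, t33, ht33, htc33⟩ := exists_cons_of_card_succ _ 1 (htc32)
  obtain ⟨x34, t34, ht34, htc34⟩ := exists_cons_of_card_succ _ 0 (htc33)
  rw [Multiset.card_eq_zero] at htc34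
  rw [htc34] at ht34
  have hroots3 : (derivative^[3] f).roots = x31 ::ₘ (x32 ::ₘ (x33 ::ₘ (x34 ::ₘ 0))) := by
    rw [ht31, ht32, ht33, ht34]
  have hfac3 := C_leadingCoeff_mul_prod_multiset_X_sub_C (p := derivative^[3] f) (by rw [hc3, hg3])
  rw [hroots3] at hfac3
  simp only [Multiset.map_cons, Multiset.map_zero, Multiset.prod_cons, Multiset.prod_zero, mul_one] at hfac3
  rw [septic_prod3] at hfac3
  set L3 := (derivative^[3] f).leadingCoeff with hLdef3
  have h3_0 : (6:ℂ)*f.coeff 3 = L3*(x31*x32*x33*x34) := by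
    have hcf := congrArg (fun p => Polynomial.coeff p 0) hfac3
    simp only [coeff_iterate_derivative, nsmul_eq_mul, coeff_C_mul, coeff_add, coeff_X_pow, coeff_C, coeff_sub, coeff_X, mul_one, mul_zero, add_zero, zero_add] at hcf
    norm_num at hcf
    first | linear_combination -hcf | linear_combination hcf | linear_combination 2*hcf | linear_combination -2*hcf
  have h3_1 : (24:ℂ)*f.coeff 4 = L3*((-1)*x31*x32*x33 + (-1)*x31*x32*x34 + (-1)*x31*x33*x34 + (-1)*x32*x33*x34) := by
    have hcf := congrArg (fun p => Polynomial.coeff p 1) hfac3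
    simp only [coeff_iterate_derivative, nsmul_eq_mul, coeff_C_mul, coeff_add, coeff_X_pow, coeff_C, coeff_sub, coeff_X, mul_one, mul_zero, add_zero, zero_add] at hcf
    norm_num at hcf
    first | linear_combination -hcf | linear_combination hcf | linear_combination 2*hcf | linear_combination -2*hcf
  have h3_2 : (60:ℂ)*f.coeff 5 = L3*(x31*x32 + x31*x33 + x31*x34 + x32*x33 + x32*x34 + x33*x34) := by
    have hcf := congrArg (fun p => Polynomial.coeff p 2) hfac3
    simp only [coeff_iterate_derivative, nsmul_eq_mul, coeff_C_mul, coeff_add, coeff_X_pow, coeff_C, coeff_sub, coeff_X, mul_one, mul_zero, add_zero, zero_add] at hcf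
    norm_num at hcf
    first | linear_combination -hcf | linear_combination hcf | linear_combination 2*hcf | linear_combination -2*hcf
  have h3_3 : (120:ℂ)*f.coeff 6 = L3*((-1)*x31 + (-1)*x32 + (-1)*x33 + (-1)*x34) := by
    have hcf := congrArg (fun p => Polynomial.coeff p 3) hfac3
    simp only [coeff_iterate_derivative, nsmul_eq_mul, coeff_C_mul, coeff_add, coeff_X_pow, coeff_C, coeff_sub, coeff_X, mul_one, mul_zero, add_zero, zero_add] at hcf
    norm_num at hcf
    first | linear_combination -hcf | linear_combination hcf | linear_combination 2*hcf | linear_combination -2*hcf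
  have h3_4 : (210:ℂ)*f.coeff 7 = L3*(1) := by
    have hcf := congrArg (fun p => Polynomial.coeff p 4) hfac3
    simp only [coeff_iterate_derivative, nsmul_eq_mul, coeff_C_mul, coeff_add, coeff_X_pow, coeff_C, coeff_sub, coeff_X, mul_one, mul_zero, add_zero, zero_add] at hcf
    norm_num at hcf
    first | linear_combination -hcf | linear_combination hcf | linear_combination 2*hcf | linear_combination -2*hcf
  have hphi3 : phi f 3 = (f.eval x31 + f.eval x32 + f.eval x33 + f.eval x34) / 4 := by
    rw [phi, hroots3, hd]
    norm_num
    try ring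
  have hev31 : f.eval x31 = f.coeff 0 + f.coeff 1*x31^1 + f.coeff 2*x31^2 + f.coeff 3*x31^3 + f.coeff 4*x31^4 + f.coeff 5*x31^5 + f.coeff 6*x31^6 + f.coeff 7*x31^7 := by
    rw [eval_eq_sum_range, hd]
    simp [Finset.sum_range_succ]
  have hev32 : f.eval x32 = f.coeff 0 + f.coeff 1*x32^1 + f.coeff 2*x32^2 + f.coeff 3*x32^3 + f.coeff 4*x32^4 + f.coeff 5*x32^5 + f.coeff 6*x32^6 + f.coeff 7*x32^7 := by
    rw [eval_eq_sum_range, hd]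
    simp [Finset.sum_range_succ]
  have hev33 : f.eval x33 = f.coeff 0 + f.coeff 1*x33^1 + f.coeff 2*x33^2 + f.coeff 3*x33^3 + f.coeff 4*x33^4 + f.coeff 5*x33^5 + f.coeff 6*x33^6 + f.coeff 7*x33^7 := by
    rw [eval_eq_sum_range, hd]
    simp [Finset.sum_range_succ]
  have hev34 : f.eval x34 = f.coeff 0 + f.coeff 1*x34^1 + f.coeff 2*x34^2 + f.coeff 3*x34^3 + f.coeff 4*x34^4 + f.coeff 5*x34^5 + f.coeff 6*x34^6 + f.coeff 7*x34^7 := by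
    rw [eval_eq_sum_range, hd]
    simp [Finset.sum_range_succ]
  -- ρ = 4
  have hg4 : (derivative^[4] f).natDegree = 3 := by
    refine natDegree_eq_of_le_of_coeff_ne_zero ((natDegree_iterate_derivative f 4).trans (by rw [hd])) ?_
    rw [coeff_iterate_derivative]
    norm_num [hd]
    exact ha7
  have hc4 : (derivative^[4] f).roots.card = 3 := by
    rw [← hg4]
    exact splits_iff_card_roots.mp (IsAlgClosed.splits _)
  obtain ⟨x41, t41, ht41, htc41⟩ := exists_cons_of_card_succ _ 2 (hc4)
  obtain ⟨x42, t42, ht42, htc42⟩ := exists_cons_of_card_succ _ 1 (htc41)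
  obtain ⟨x43, t43, ht43, htc43⟩ := exists_cons_of_card_succ _ 0 (htc42)
  rw [Multiset.card_eq_zero] at htc43
  rw [htc43] at ht43
  have hroots4 : (derivative^[4] f).roots = x41 ::ₘ (x42 ::ₘ (x43 ::ₘ 0)) := by
    rw [ht41, ht42, ht43]
  have hfac4 := C_leadingCoeff_mul_prod_multiset_X_sub_C (p := derivative^[4] f) (by rw [hc4, hg4])
  rw [hroots4] at hfac4
  simp only [Multiset.map_cons, Multiset.map_zero, Multiset.prod_cons, Multiset.prod_zero, mul_one] at hfac4
  rw [septic_prod4] at hfac4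
  set L4 := (derivative^[4] f).leadingCoeff with hLdef4
  have h4_0 : (24:ℂ)*f.coeff 4 = L4*((-1)*x41*x42*x43) := by
    have hcf := congrArg (fun p => Polynomial.coeff p 0) hfac4
    simp only [coeff_iterate_derivative, nsmul_eq_mul, coeff_C_mul, coeff_add, coeff_X_pow, coeff_C, coeff_sub, coeff_X, mul_one, mul_zero, add_zero, zero_add] at hcf
    norm_num at hcf
    first | linear_combination -hcf | linear_combination hcf | linear_combination 2*hcf | linear_combination -2*hcf
  have h4_1 : (120:ℂ)*f.coeff 5 = L4*(x41*x42 + x41*x43 + x42*x43) := by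
    have hcf := congrArg (fun p => Polynomial.coeff p 1) hfac4
    simp only [coeff_iterate_derivative, nsmul_eq_mul, coeff_C_mul, coeff_add, coeff_X_pow, coeff_C, coeff_sub, coeff_X, mul_one, mul_zero, add_zero, zero_add] at hcf
    norm_num at hcf
    first | linear_combination -hcf | linear_combination hcf | linear_combination 2*hcf | linear_combination -2*hcf
  have h4_2 : (360:ℂ)*f.coeff 6 = L4*((-1)*x41 + (-1)*x42 + (-1)*x43) := by
    have hcf := congrArg (fun p => Polynomial.coeff p 2) hfac4
    simp only [coeff_iterate_derivative, nsmul_eq_mul, coeff_C_mul, coeff_add, coeff_X_pow, coeff_C, coeff_sub, coeff_X, mul_one, mul_zero, add_zero, zero_add] at hcf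
    norm_num at hcf
    first | linear_combination -hcf | linear_combination hcf | linear_combination 2*hcf | linear_combination -2*hcf
  have h4_3 : (840:ℂ)*f.coeff 7 = L4*(1) := by
    have hcf := congrArg (fun p => Polynomial.coeff p 3) hfac4
    simp only [coeff_iterate_derivative, nsmul_eq_mul, coeff_C_mul, coeff_add, coeff_X_pow, coeff_C, coeff_sub, coeff_X, mul_one, mul_zero, add_zero, zero_add] at hcf
    norm_num at hcf
    first | linear_combination -hcf | linear_combination hcf | linear_combination 2*hcf | linear_combination -2*hcf
  have hphi4 : phi f 4 = (f.eval x41 + f.eval x42 + f.eval x43) / 3 := by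
    rw [phi, hroots4, hd]
    norm_num
    try ring
  have hev41 : f.eval x41 = f.coeff 0 + f.coeff 1*x41^1 + f.coeff 2*x41^2 + f.coeff 3*x41^3 + f.coeff 4*x41^4 + f.coeff 5*x41^5 + f.coeff 6*x41^6 + f.coeff 7*x41^7 := by
    rw [eval_eq_sum_range, hd]
    simp [Finset.sum_range_succ]
  have hev42 : f.eval x42 = f.coeff 0 + f.coeff 1*x42^1 + f.coeff 2*x42^2 + f.coeff 3*x42^3 + f.coeff 4*x42^4 + f.coeff 5*x42^5 + f.coeff 6*x42^6 + f.coeff 7*x42^7 := by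
    rw [eval_eq_sum_range, hd]
    simp [Finset.sum_range_succ]
  have hev43 : f.eval x43 = f.coeff 0 + f.coeff 1*x43^1 + f.coeff 2*x43^2 + f.coeff 3*x43^3 + f.coeff 4*x43^4 + f.coeff 5*x43^5 + f.coeff 6*x43^6 + f.coeff 7*x43^7 := by
    rw [eval_eq_sum_range, hd]
    simp [Finset.sum_range_succ]
  -- ρ = 5
  have hg5 : (derivative^[5] f).natDegree = 2 := by
    refine natDegree_eq_of_le_of_coeff_ne_zero ((natDegree_iterate_derivative f 5).trans (by rw [hd])) ?_
    rw [coeff_iterate_derivative]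
    norm_num [hd]
    exact ha7
  have hc5 : (derivative^[5] f).roots.card = 2 := by
    rw [← hg5]
    exact splits_iff_card_roots.mp (IsAlgClosed.splits _)
  obtain ⟨x51, t51, ht51, htc51⟩ := exists_cons_of_card_succ _ 1 (hc5)
  obtain ⟨x52, t52, ht52, htc52⟩ := exists_cons_of_card_succ _ 0 (htc51)
  rw [Multiset.card_eq_zero] at htc52
  rw [htc52] at ht52
  have hroots5 : (derivative^[5] f).roots = x51 ::ₘ (x52 ::ₘ 0) := by
    rw [ht51, ht52]
  have hfac5 := C_leadingCoeff_mul_prod_multiset_X_sub_C (p := derivative^[5] f) (by rw [hc5, hg5])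
  rw [hroots5] at hfac5
  simp only [Multiset.map_cons, Multiset.map_zero, Multiset.prod_cons, Multiset.prod_zero, mul_one] at hfac5
  rw [septic_prod5] at hfac5
  set L5 := (derivative^[5] f).leadingCoeff with hLdef5
  have h5_0 : (120:ℂ)*f.coeff 5 = L5*(x51*x52) := by
    have hcf := congrArg (fun p => Polynomial.coeff p 0) hfac5
    simp only [coeff_iterate_derivative, nsmul_eq_mul, coeff_C_mul, coeff_add, coeff_X_pow, coeff_C, coeff_sub, coeff_X, mul_one, mul_zero, add_zero, zero_add] at hcf
    norm_num at hcf
    first | linear_combination -hcf | linear_combination hcf | linear_combination 2*hcf | linear_combination -2*hcf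
  have h5_1 : (720:ℂ)*f.coeff 6 = L5*((-1)*x51 + (-1)*x52) := by
    have hcf := congrArg (fun p => Polynomial.coeff p 1) hfac5
    simp only [coeff_iterate_derivative, nsmul_eq_mul, coeff_C_mul, coeff_add, coeff_X_pow, coeff_C, coeff_sub, coeff_X, mul_one, mul_zero, add_zero, zero_add] at hcf
    norm_num at hcf
    first | linear_combination -hcf | linear_combination hcf | linear_combination 2*hcf | linear_combination -2*hcf
  have h5_2 : (2520:ℂ)*f.coeff 7 = L5*(1) := by
    have hcf := congrArg (fun p => Polynomial.coeff p 2) hfac5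
    simp only [coeff_iterate_derivative, nsmul_eq_mul, coeff_C_mul, coeff_add, coeff_X_pow, coeff_C, coeff_sub, coeff_X, mul_one, mul_zero, add_zero, zero_add] at hcf
    norm_num at hcf
    first | linear_combination -hcf | linear_combination hcf | linear_combination 2*hcf | linear_combination -2*hcf
  have hphi5 : phi f 5 = (f.eval x51 + f.eval x52) / 2 := by
    rw [phi, hroots5, hd]
    norm_num
    try ring
  have hev51 : f.eval x51 = f.coeff 0 + f.coeff 1*x51^1 + f.coeff 2*x51^2 + f.coeff 3*x51^3 + f.coeff 4*x51^4 + f.coeff 5*x51^5 + f.coeff 6*x51^6 + f.coeff 7*x51^7 := by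
    rw [eval_eq_sum_range, hd]
    simp [Finset.sum_range_succ]
  have hev52 : f.eval x52 = f.coeff 0 + f.coeff 1*x52^1 + f.coeff 2*x52^2 + f.coeff 3*x52^3 + f.coeff 4*x52^4 + f.coeff 5*x52^5 + f.coeff 6*x52^6 + f.coeff 7*x52^7 := by
    rw [eval_eq_sum_range, hd]
    simp [Finset.sum_range_succ]
  -- ρ = 6
  have hg6 : (derivative^[6] f).natDegree = 1 := by
    refine natDegree_eq_of_le_of_coeff_ne_zero ((natDegree_iterate_derivative f 6).trans (by rw [hd])) ?_
    rw [coeff_iterate_derivative]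
    norm_num [hd]
    exact ha7
  have hc6 : (derivative^[6] f).roots.card = 1 := by
    rw [← hg6]
    exact splits_iff_card_roots.mp (IsAlgClosed.splits _)
  obtain ⟨x61, t61, ht61, htc61⟩ := exists_cons_of_card_succ _ 0 (hc6)
  rw [Multiset.card_eq_zero] at htc61
  rw [htc61] at ht61
  have hroots6 : (derivative^[6] f).roots = x61 ::ₘ 0 := by
    rw [ht61]
  have hfac6 := C_leadingCoeff_mul_prod_multiset_X_sub_C (p := derivative^[6] f) (by rw [hc6, hg6])
  rw [hroots6] at hfac6
  simp only [Multiset.map_cons, Multiset.map_zero, Multiset.prod_cons, Multiset.prod_zero, mul_one] at hfac6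
  -- n=1
  set L6 := (derivative^[6] f).leadingCoeff with hLdef6
  have h6_0 : (720:ℂ)*f.coeff 6 = L6*((-1)*x61) := by
    have hcf := congrArg (fun p => Polynomial.coeff p 0) hfac6
    simp only [coeff_iterate_derivative, nsmul_eq_mul, coeff_C_mul, coeff_add, coeff_X_pow, coeff_C, coeff_sub, coeff_X, mul_one, mul_zero, add_zero, zero_add] at hcf
    norm_num at hcf
    first | linear_combination -hcf | linear_combination hcf | linear_combination 2*hcf | linear_combination -2*hcf
  have h6_1 : (5040:ℂ)*f.coeff 7 = L6*(1) := by
    have hcf := congrArg (fun p => Polynomial.coeff p 1) hfac6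
    simp only [coeff_iterate_derivative, nsmul_eq_mul, coeff_C_mul, coeff_add, coeff_X_pow, coeff_C, coeff_sub, coeff_X, mul_one, mul_zero, add_zero, zero_add] at hcf
    norm_num at hcf
    first | linear_combination -hcf | linear_combination hcf | linear_combination 2*hcf | linear_combination -2*hcf
  have hphi6 : phi f 6 = (f.eval x61) / 1 := by
    rw [phi, hroots6, hd]
    norm_num
    try ring
  have hev61 : f.eval x61 = f.coeff 0 + f.coeff 1*x61^1 + f.coeff 2*x61^2 + f.coeff 3*x61^3 + f.coeff 4*x61^4 + f.coeff 5*x61^5 + f.coeff 6*x61^6 + f.coeff 7*x61^7 := by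
    rw [eval_eq_sum_range, hd]
    simp [Finset.sum_range_succ]
  have key : (f.coeff 7)^7 * (37 * phi f 1 - 150 * phi f 3 + 200 * phi f 4 - 135 * phi f 5 + 48 * phi f 6) = 0 := by
    rw [hphi1, hphi3, hphi4, hphi5, hphi6, hev11, hev12, hev13, hev14, hev15, hev16, hev31, hev32, hev33, hev34, hev41, hev42, hev43, hev51, hev52, hev61]
    linear_combination (37/6 : ℂ)*(septic_aux1 (f.coeff 0) (f.coeff 1) (f.coeff 2) (f.coeff 3) (f.coeff 4) (f.coeff 5) (f.coeff 6) (f.coeff 7) L1 x11 x12 x13 x14 x15 x16 h1_0 h1_1 h1_2 h1_3 h1_4 h1_5 h1_6) - (150/4 : ℂ)*(septic_aux3 (f.coeff 0) (f.coeff 1) (f.coeff 2) (f.coeff 3) (f.coeff 4) (f.coeff 5) (f.coeff 6) (f.coeff 7) L3 x31 x32 x33 x34 h3_0 h3_1 h3_2 h3_3 h3_4) + (200/3 : ℂ)*(septic_aux4 (f.coeff 0) (f.coeff 1) (f.coeff 2) (f.coeff 3) (f.coeff 4) (f.coeff 5) (f.coeff 6) (f.coeff 7) L4 x41 x42 x43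 h4_0 h4_1 h4_2 h4_3) - (135/2 : ℂ)*(septic_aux5 (f.coeff 0) (f.coeff 1) (f.coeff 2) (f.coeff 3) (f.coeff 4) (f.coeff 5) (f.coeff 6) (f.coeff 7) L5 x51 x52 h5_0 h5_1 h5_2) + 48*(septic_aux6 (f.coeff 0) (f.coeff 1) (f.coeff 2) (f.coeff 3) (f.coeff 4) (f.coeff 5) (f.coeff 6) (f.coeff 7) L6 x61 h6_0 h6_1)
  exact (mul_eq_zero.mp key).resolve_left (pow_ne_zero 7 ha7)
end

section
/- Let f be a polynomial over ℂ of degree 7, and for 1 ≤ ρ ≤ 6 let φ_ρ denote the average of f over the multiset of the (7−ρ) roots of the ρ-th derivative f^(ρ) (counted with multiplicity). Then 1·φ₁ − 3·φ₂ + 5·φ₃ − 5·φ₄ + 3·φ₅ − 1·φ₆ = 0; i.e., the alternating binomial combination ∑_{0<ρ<7} (−1)^ρ·C(7,ρ)·φ_ρ vanishes (after dividing by 7). -/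
/-!
Each `φ_ρ` is invariant under translation of the variable and linear under scaling of `f`, so we
may take `f = X^7 + a₅X^5 + ⋯ + a₀` monic and depressed. The roots of every `f^(ρ)` then sum to
zero, Vieta gives their elementary symmetric functions `e_j = ± (7-j)_ρ / (7)_ρ · a_{7-j}`,
Newton's identities turn these into power sums `p_k`, and `∑ f(r) = ∑ a_k p_k`. Each `φ_ρ`
becomes `a₀ + α_ρ a₂a₅ + β_ρ a₃a₄ + γ_ρ a₄a₅²` with explicit rationals, and the alternating
combination of these six rows vanishes identically.
-/

open Polynomial

open Finset

namespace Multiset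

variable {R : Type*}

def psum [CommSemiring R] (s : Multiset R) (k : ℕ) : R := (s.map (· ^ k)).sum

theorem psum_zero [CommSemiring R] (s : Multiset R) : s.psum 0 = s.card := by
  simp [psum]

theorem exists_fin_map_eq {α : Type*} (s : Multiset α) :
    ∃ (n : ℕ) (x : Fin n → α), univ.val.map x = s :=
  ⟨_, s.toList.get, by rw [Fin.univ_val_map, List.ofFn_get, coe_toList]⟩

theorem _root_.MvPolynomial.aeval_psum {σ S : Type*} [Fintype σ] [CommSemiring R]
    [CommSemiring S] [Algebra R S] (x : σ → S) (k : ℕ) :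
    MvPolynomial.aeval x (MvPolynomial.psum σ R k) = (univ.val.map x).psum k := by
  rw [MvPolynomial.psum, map_sum, psum, map_map, ← Finset.sum_eq_multiset_sum]
  simp

theorem psum_eq_mul_esymm_sub_sum [CommRing R] (s : Multiset R) {k : ℕ} (hk : 0 < k) :
    s.psum k = (-1) ^ (k + 1) * k * s.esymm k -
      ∑ a ∈ HasAntidiagonal.antidiagonal k with a.1 ∈ Set.Ioo 0 k,
        (-1) ^ a.1 * s.esymm a.1 * s.psum a.2 := by
  obtain ⟨n, x, rfl⟩ := s.exists_fin_map_eq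
  simpa only [map_sub, map_mul, map_sum, map_pow, map_neg, map_one, map_natCast,
    MvPolynomial.aeval_esymm_eq_multiset_esymm, MvPolynomial.aeval_psum] using
    congrArg (MvPolynomial.aeval x) (MvPolynomial.psum_eq_mul_esymm_sub_sum (Fin n) R k hk)

theorem psum_eq_mul_esymm_add_sum_range [CommRing R] (s : Multiset R) {k : ℕ} (hk : 0 < k) :
    s.psum k = (-1) ^ (k + 1) * k * s.esymm k +
      ∑ i ∈ Finset.range (k - 1), (-1) ^ i * s.esymm (i + 1) * s.psum (k - 1 - i) := by
  obtain ⟨m, rfl⟩ : ∃ m, k = m + 1 := ⟨k - 1, by omega⟩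
  rw [s.psum_eq_mul_esymm_sub_sum hk, sum_filter, Nat.sum_antidiagonal_eq_sum_range_succ_mk,
    sum_range_succ', sum_range_succ]
  simp only [Set.mem_Ioo, lt_self_iff_false, and_false, false_and, ↓reduceIte, add_zero,
    add_lt_add_iff_right, Nat.zero_lt_succ, true_and, sub_eq_add_neg, Nat.add_sub_add_right,
    Nat.add_sub_cancel, ← sum_neg_distrib]
  congr 1
  refine sum_congr rfl fun i hi => ?_
  rw [if_pos (mem_range.mp hi)]
  ring

theorem sum_map_eval_eq_sum_coeff_mul_psum [CommSemiring R] (s : Multiset R) (p : R[X]) :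
    (s.map p.eval).sum = ∑ k ∈ Finset.range (p.natDegree + 1), p.coeff k * s.psum k := by
  induction s using Multiset.induction with
  | empty => simp [psum]
  | cons x t ih =>
    rw [map_cons, sum_cons, ih, eval_eq_sum_range, ← Finset.sum_add_distrib]
    simp [psum, mul_add]

end Multiset
namespace Polynomial

theorem derivative_taylor {R : Type*} [CommSemiring R] (f : R[X]) (c : R) :
    derivative (taylor c f) = taylor c (derivative f) := by
  simp [taylor_apply, derivative_comp]

theorem iterate_derivative_taylor {R : Type*} [CommSemiring R] (f : R[X]) (c : R) (k : ℕ) :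
    derivative^[k] (taylor c f) = taylor c (derivative^[k] f) := by
  induction k with
  | zero => rfl
  | succ k ih => rw [Function.iterate_succ_apply', ih, derivative_taylor,
      Function.iterate_succ_apply']

theorem roots_taylor {R : Type*} [CommRing R] [IsDomain R] (p : R[X]) (c : R) :
    (taylor c p).roots = p.roots.map (· - c) := by
  classical
  ext x
  have hid : ((· + c) ∘ (· - c) : R → R) = id := _root_.funext fun y => sub_add_cancel y c
  rw [count_roots, rootMultiplicity_eq_rootMultiplicity, ← taylor_apply, taylor_taylor,
    ← Multiset.count_map_eq_count' (· + c) _ (add_left_injective c), Multiset.map_map, hid,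
    Multiset.map_id, count_roots, rootMultiplicity_eq_rootMultiplicity (p := p), taylor_apply]

theorem natDegree_iterate_derivative_eq {R : Type*} [Semiring R] [IsAddTorsionFree R]
    (p : R[X]) (k : ℕ) : (derivative^[k] p).natDegree = p.natDegree - k := by
  induction k with
  | zero => rfl
  | succ k ih => rw [Function.iterate_succ_apply', natDegree_derivative, ih, Nat.sub_sub]

theorem coeff_taylor_natDegree_sub_one {R : Type*} [CommSemiring R] {f : R[X]}
    (hf : 0 < f.natDegree) (c : R) :
    (taylor c f).coeff (f.natDegree - 1) =
      f.coeff (f.natDegree - 1) + f.natDegree * f.leadingCoeff * c := by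
  have hdeg : (hasseDeriv (f.natDegree - 1) f).natDegree < 2 :=
    (natDegree_hasseDeriv_le f _).trans_lt (by omega)
  rw [taylor_coeff, eval_eq_sum_range' hdeg]
  have hchoose : f.natDegree.choose (f.natDegree - 1) = f.natDegree := by
    rw [Nat.choose_symm hf, Nat.choose_one_right]
  simp only [Finset.sum_range_succ, Finset.sum_range_zero, hasseDeriv_coeff, zero_add,
    add_comm 1, Nat.sub_add_cancel hf, Nat.choose_self, hchoose, coeff_natDegree]
  ring

theorem esymm_roots_iterate_derivative {K : Type*} [Field K] [CharZero K] [IsAlgClosed K]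
    {f : K[X]} (hf : f ≠ 0) {ρ j : ℕ} (hρ : ρ ≤ f.natDegree) (hj : j ≤ f.natDegree) :
    (derivative^[ρ] f).roots.esymm j = (-1) ^ j *
      ((f.natDegree - j).descFactorial ρ / f.natDegree.descFactorial ρ : K) *
        (f.coeff (f.natDegree - j) / f.leadingCoeff) := by
  set n := f.natDegree
  set g := derivative^[ρ] f
  have hdeg : g.natDegree = n - ρ := natDegree_iterate_derivative_eq f ρ
  have hcard : g.roots.card = g.natDegree := splits_iff_card_roots.mp (IsAlgClosed.splits g)
  have hcoeff (i : ℕ) : g.coeff i = (i + ρ).descFactorial ρ * f.coeff (i + ρ) := by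
    rw [coeff_iterate_derivative, nsmul_eq_mul]
  have hlead : f.leadingCoeff ≠ 0 := leadingCoeff_ne_zero.mpr hf
  have hdesc : (n.descFactorial ρ : K) ≠ 0 := by
    rw [Nat.cast_ne_zero, Ne, Nat.descFactorial_eq_zero_iff_lt]; omega
  rcases le_or_gt j (n - ρ) with hjm | hjm
  · have h := coeff_eq_esymm_roots_of_card hcard (k := n - ρ - j) (by omega)
    rw [hdeg, Nat.sub_sub_self hjm, hcoeff, leadingCoeff, hdeg, hcoeff,
      show n - ρ - j + ρ = n - j by omega, Nat.sub_add_cancel hρ, coeff_natDegree] at h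
    have hsq : ((-1 : K) ^ j) ^ 2 = 1 := by rw [← pow_mul, mul_comm, pow_mul]; simp
    field_simp
    linear_combination (-(-1) ^ j) * h - g.roots.esymm j * n.descFactorial ρ * f.leadingCoeff * hsq
  · have hzero : (n - j).descFactorial ρ = 0 := Nat.descFactorial_eq_zero_iff_lt.mpr (by omega)
    rw [hzero, Multiset.esymm, Multiset.powersetCard_eq_empty _ (by omega)]
    simp

end Polynomial

theorem sum_map_eval_depressed_septic {R : Type*} [CommRing R] {f : R[X]} (hmon : f.Monic)
    (hdeg : f.natDegree = 7) (hcoeff : f.coeff 6 = 0) {s : Multiset R} (hs : s.esymm 1 = 0) :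
    (s.map f.eval).sum = s.card * f.coeff 0 - 2 * s.esymm 2 * f.coeff 2
      + 3 * s.esymm 3 * f.coeff 3 + (2 * s.esymm 2 ^ 2 - 4 * s.esymm 4) * f.coeff 4
      + 5 * (s.esymm 5 - s.esymm 2 * s.esymm 3) * f.coeff 5
      + 7 * (s.esymm 2 ^ 2 * s.esymm 3 - s.esymm 3 * s.esymm 4 - s.esymm 2 * s.esymm 5
        + s.esymm 7) := by
  rw [s.sum_map_eval_eq_sum_coeff_mul_psum, hdeg]
  simp (disch := omega) only [sum_range_succ, sum_range_zero, s.psum_eq_mul_esymm_add_sum_range,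
    s.psum_zero, hs, hcoeff, show f.coeff 7 = 1 by rw [← hdeg]; exact hmon]
  ring

theorem phi_taylor (f : ℂ[X]) (c : ℂ) (ρ : ℕ) : phi (taylor c f) ρ = phi f ρ := by
  simp [phi, iterate_derivative_taylor, roots_taylor, natDegree_taylor, taylor_eval]

theorem phi_C_mul (f : ℂ[X]) {a : ℂ} (ha : a ≠ 0) (ρ : ℕ) :
    phi (C a * f) ρ = a * phi f ρ := by
  simp [phi, iterate_derivative_C_mul, roots_C_mul _ ha, natDegree_C_mul ha,
    Multiset.sum_map_mul_left, mul_div_assoc]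

theorem exists_monic_phi_eq (f : ℂ[X]) (hf : 0 < f.natDegree) :
    ∃ (a : ℂ) (g : ℂ[X]), g.Monic ∧ g.natDegree = f.natDegree ∧
      g.coeff (f.natDegree - 1) = 0 ∧ ∀ ρ, phi f ρ = a * phi g ρ := by
  have hlead : f.leadingCoeff ≠ 0 := leadingCoeff_ne_zero.mpr (ne_zero_of_natDegree_gt hf)
  set c := -f.coeff (f.natDegree - 1) / (f.natDegree * f.leadingCoeff)
  refine ⟨f.leadingCoeff, C f.leadingCoeff⁻¹ * taylor c f, ?_, ?_, ?_, fun ρ => ?_⟩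
  · rw [Monic.def, leadingCoeff_mul, leadingCoeff_C, leadingCoeff_taylor, inv_mul_cancel₀ hlead]
  · rw [natDegree_C_mul (inv_ne_zero hlead), natDegree_taylor]
  · rw [coeff_C_mul, coeff_taylor_natDegree_sub_one hf]
    have hn : (f.natDegree : ℂ) ≠ 0 := Nat.cast_ne_zero.mpr hf.ne'
    simp only [c]
    field_simp
    ring
  · rw [phi_C_mul _ (inv_ne_zero hlead), phi_taylor, mul_inv_cancel_left₀ hlead]

theorem mul_phi_eq_sum (f : ℂ[X]) {ρ : ℕ} (hρ : ρ < f.natDegree) :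
    ((f.natDegree - ρ : ℕ) : ℂ) * phi f ρ = ((derivative^[ρ] f).roots.map f.eval).sum :=
  mul_div_cancel₀ _ (by norm_cast; omega)

theorem mul_phi_depressed_septic {g : ℂ[X]} (hmon : g.Monic) (hdeg : g.natDegree = 7)
    (hcoeff : g.coeff 6 = 0) {ρ : ℕ} (hρ : ρ < 7) :
    ((7 - ρ : ℕ) : ℂ) * phi g ρ = ((7 - ρ : ℕ) : ℂ) * g.coeff 0
      - 2 * (derivative^[ρ] g).roots.esymm 2 * g.coeff 2
      + 3 * (derivative^[ρ] g).roots.esymm 3 * g.coeff 3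
      + (2 * (derivative^[ρ] g).roots.esymm 2 ^ 2 - 4 * (derivative^[ρ] g).roots.esymm 4)
        * g.coeff 4
      + 5 * ((derivative^[ρ] g).roots.esymm 5
        - (derivative^[ρ] g).roots.esymm 2 * (derivative^[ρ] g).roots.esymm 3) * g.coeff 5
      + 7 * ((derivative^[ρ] g).roots.esymm 2 ^ 2 * (derivative^[ρ] g).roots.esymm 3
        - (derivative^[ρ] g).roots.esymm 3 * (derivative^[ρ] g).roots.esymm 4
        - (derivative^[ρ] g).roots.esymm 2 * (derivative^[ρ] g).roots.esymm 5
        + (derivative^[ρ] g).roots.esymm 7) := by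
  have hcard : (derivative^[ρ] g).roots.card = 7 - ρ := by
    rw [splits_iff_card_roots.mp (IsAlgClosed.splits _), natDegree_iterate_derivative_eq, hdeg]
  have he1 : (derivative^[ρ] g).roots.esymm 1 = 0 := by
    rw [esymm_roots_iterate_derivative hmon.ne_zero (by omega) (by omega), hdeg, hcoeff]
    simp
  have hsum := mul_phi_eq_sum g (hdeg ▸ hρ)
  rw [hdeg] at hsum
  rw [hsum, sum_map_eval_depressed_septic hmon hdeg hcoeff he1, hcard]

/-- In any septic, `1·φ₁ − 3·φ₂ + 5·φ₃ − 5·φ₄ + 3·φ₅ − 1·φ₆ = 0`. -/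
theorem septic_alternating_binomial_relation (f : Polynomial ℂ) (hf : f.degree = 7) :
    1 * phi f 1 - 3 * phi f 2 + 5 * phi f 3 - 5 * phi f 4 + 3 * phi f 5 - 1 * phi f 6
      = 0 := by
  have hdeg : f.natDegree = 7 := natDegree_eq_of_degree_eq_some hf
  obtain ⟨a, g, hmon, hgdeg, hg6, hφ⟩ := exists_monic_phi_eq f (by omega)
  rw [hdeg] at hgdeg hg6
  norm_num at hg6
  have he (ρ j : ℕ) (hρ : ρ ≤ 7) (hj : j ≤ 7) :=
    esymm_roots_iterate_derivative hmon.ne_zero (hgdeg ▸ hρ) (hgdeg ▸ hj)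
  have row (ρ : ℕ) (hρ : ρ < 7) := mul_phi_depressed_septic hmon hgdeg hg6 hρ
  have h1 := row 1 (by norm_num)
  have h2 := row 2 (by norm_num)
  have h3 := row 3 (by norm_num)
  have h4 := row 4 (by norm_num)
  have h5 := row 5 (by norm_num)
  have h6 := row 6 (by norm_num)
  simp (disch := omega) only [he, hgdeg, hmon.leadingCoeff] at h1 h2 h3 h4 h5 h6
  norm_num [Nat.descFactorial] at h1 h2 h3 h4 h5 h6
  rw [hφ 1, hφ 2, hφ 3, hφ 4, hφ 5, hφ 6]
  linear_combination (a / 6) * h1 - (3 * a / 5) * h2 + (5 * a / 4) * h3 - (5 * a / 3) * h4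
    + (3 * a / 2) * h5 - a * h6
end

section
/- Let f be a polynomial over ℂ of degree 4. Then the average of f' over the multiset of the 4 roots of f (counted with multiplicity) equals −2 times the value of f' at the unique root of f'''; equivalently, (1/4)·∑_{r ∈ roots(f)} f'(r) + 2·f'(z) = 0 where z is the root of f'''. Moreover, the average of f' over the 2 roots of f'' also equals f'(z). -/
/-!
Write `f = a (X - r₁)(X - r₂)(X - r₃)(X - r₄)`. Then `f'''(z) = 0` says that `z` is the mean of the
`rᵢ`, and the first relation becomes a polynomial identity in the `rᵢ`. For the second, `f'` is a
cubic whose inflection point is `z`, so it is point-symmetric about `z`: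
`f'(z + w) + f'(z - w) = 2 f'(z)`; and the two roots of the quadratic `f''` are symmetric about the
root `z` of its derivative.
-/

open Polynomial

namespace Polynomial

variable {K : Type*} [Field K]

theorem exists_roots_eq_pair_of_natDegree_eq_two [IsAlgClosed K] {q : K[X]}
    (hq : q.natDegree = 2) :
    ∃ s₁ s₂, q.roots = {s₁, s₂} ∧ q = C q.leadingCoeff * ((X - C s₁) * (X - C s₂)) := by
  obtain ⟨s₁, s₂, hs⟩ := Multiset.card_eq_two.mp (IsAlgClosed.card_roots_eq_natDegree.trans hq)
  refine ⟨s₁, s₂, hs, ?_⟩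
  conv_lhs =>
    rw [← C_leadingCoeff_mul_prod_multiset_X_sub_C (p := q) IsAlgClosed.card_roots_eq_natDegree, hs]
  simp

theorem exists_roots_eq_quadruple_of_natDegree_eq_four [IsAlgClosed K] {f : K[X]}
    (hf : f.natDegree = 4) :
    ∃ r₁ r₂ r₃ r₄, f.roots = {r₁, r₂, r₃, r₄} ∧
      f = C f.leadingCoeff * ((X - C r₁) * ((X - C r₂) * ((X - C r₃) * (X - C r₄)))) := by
  obtain ⟨r₁, r₂, r₃, r₄, hr⟩ :=
    Multiset.card_eq_four.mp (IsAlgClosed.card_roots_eq_natDegree.trans hf)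
  refine ⟨r₁, r₂, r₃, r₄, hr, ?_⟩
  conv_lhs =>
    rw [← C_leadingCoeff_mul_prod_multiset_X_sub_C (p := f) IsAlgClosed.card_roots_eq_natDegree, hr]
  simp

theorem add_eq_two_mul_of_eval_derivative_C_mul_X_sub_C_mul_X_sub_C_eq_zero {a s₁ s₂ z : K}
    (ha : a ≠ 0) (hz : (derivative (C a * ((X - C s₁) * (X - C s₂)))).eval z = 0) :
    s₁ + s₂ = 2 * z := by
  simp only [derivative_mul, derivative_C, derivative_sub, derivative_X, eval_add, eval_mul,
    eval_sub, eval_C, eval_X, eval_one, zero_mul, zero_add, sub_zero, mul_one] at hz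
  linear_combination -(mul_eq_zero.mp hz).resolve_left ha

theorem eval_add_eval_eq_two_mul_eval_of_natDegree_le_three {p : K[X]} (hp : p.natDegree ≤ 3)
    {z : K} (hz : (derivative (derivative p)).eval z = 0) {s₁ s₂ : K} (hs : s₁ + s₂ = 2 * z) :
    p.eval s₁ + p.eval s₂ = 2 * p.eval z := by
  obtain rfl : s₂ = 2 * z - s₁ := by linear_combination hs
  rw [as_sum_range_C_mul_X_pow' p (n := 4) (by omega)] at hz ⊢
  simp only [Finset.sum_range_succ, Finset.sum_range_zero, derivative_add, derivative_mul,
    derivative_C, derivative_X_pow, derivative_zero, eval_add, eval_mul, eval_C, eval_pow, eval_X,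
    eval_zero] at hz ⊢
  linear_combination (s₁ - z) ^ 2 * hz

theorem sum_eval_derivative_roots_eq_neg_eight_mul [CharZero K] {a r₁ r₂ r₃ r₄ z : K}
    (ha : a ≠ 0) {f : K[X]}
    (hf : f = C a * ((X - C r₁) * ((X - C r₂) * ((X - C r₃) * (X - C r₄)))))
    (hz : (derivative (derivative (derivative f))).eval z = 0) :
    (derivative f).eval r₁ + (derivative f).eval r₂ + (derivative f).eval r₃
      + (derivative f).eval r₄ = -8 * (derivative f).eval z := by
  subst hf
  simp only [derivative_mul, derivative_add, derivative_sub, derivative_X, derivative_C,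
    derivative_one, derivative_zero, eval_mul, eval_add, eval_sub, eval_C, eval_X, eval_one,
    eval_zero] at hz ⊢
  have hmean : z = (r₁ + r₂ + r₃ + r₄) / 4 := by
    have h : a * (24 * z - 6 * (r₁ + r₂ + r₃ + r₄)) = 0 := by linear_combination hz
    linear_combination (mul_eq_zero.mp h).resolve_left ha / 24
  subst hmean
  ring

end Polynomial

/-- For any quartic `f` over `ℂ`, with `z` the root of `f'''`: the average of `f'`
over the 4 roots of `f` equals `−2·f'(z)`, and the average of `f'` over the 2 roots
of `f''` equals `f'(z)`. -/
theorem quartic_mean_slope_relations (f : Polynomial ℂ) (hf : f.degree = 4)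
    (z : ℂ) (hz : (derivative (derivative (derivative f))).eval z = 0) :
    (f.roots.map (fun r => (derivative f).eval r)).sum / 4
        + 2 * (derivative f).eval z = 0 ∧
      ((derivative (derivative f)).roots.map (fun s => (derivative f).eval s)).sum / 2
        = (derivative f).eval z := by
  have hdeg : f.natDegree = 4 := natDegree_eq_of_degree_eq_some hf
  have hdeg'' : (derivative (derivative f)).natDegree = 2 := by simp [hdeg]
  obtain ⟨r₁, r₂, r₃, r₄, hroots, hf_eq⟩ := exists_roots_eq_quadruple_of_natDegree_eq_four hdeg
  obtain ⟨s₁, s₂, hcrit, hf''_eq⟩ := exists_roots_eq_pair_of_natDegree_eq_two hdeg''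
  have hlc : f.leadingCoeff ≠ 0 :=
    leadingCoeff_ne_zero.mpr (ne_zero_of_natDegree_gt (n := 0) (by omega))
  have hlc'' : (derivative (derivative f)).leadingCoeff ≠ 0 :=
    leadingCoeff_ne_zero.mpr (ne_zero_of_natDegree_gt (n := 0) (by omega))
  have hsum := sum_eval_derivative_roots_eq_neg_eight_mul hlc hf_eq hz
  have hmid : s₁ + s₂ = 2 * z :=
    add_eq_two_mul_of_eval_derivative_C_mul_X_sub_C_mul_X_sub_C_eq_zero hlc'' (hf''_eq ▸ hz)
  have hsym := eval_add_eval_eq_two_mul_eval_of_natDegree_le_three (p := derivative f)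
    (by simp [hdeg]) hz hmid
  rw [hroots, hcrit]
  simp only [Multiset.insert_eq_cons, Multiset.map_cons, Multiset.map_singleton,
    Multiset.sum_cons, Multiset.sum_singleton]
  exact ⟨by linear_combination hsum / 4, by linear_combination hsym / 2⟩
end

section
/- Let f be a polynomial over ℂ of degree 3 and let F be any polynomial over ℂ with F' = f (an antiderivative of f, of degree 4). Then 5·(the average of F over the 3 roots of f) − 6·(the average of F over the 2 roots of f') + 1·(the value of F at the unique root of f'') = 0, where all roots are counted with multiplicity; in particular this relation holds for every choice of the constant of integration. -/
/-!
Write `f = a (X - r₁)(X - r₂)(X - r₃)`. Then `F = a G + c`, where `G` is the primitive of the monic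
cubic vanishing at `0`, and the constant `c` drops out because `5 - 6 + 1 = 0`. By Vieta the
critical points satisfy `t₁ + t₂ = 2e₁/3`, `t₁t₂ = e₂/3`, and the inflection point is `e₁/3`.
Since `G(t₁) + G(t₂)` is symmetric in `t₁, t₂`, it is a polynomial in `t₁ + t₂` and `t₁t₂`, so the
relation becomes a polynomial identity in `r₁, r₂, r₃`.
-/

open Polynomial

section

variable {K : Type*} [Field K]

theorem exists_eq_C_mul_prod_X_sub_C_of_degree_eq_three [IsAlgClosed K] {f : K[X]}
    (hf : f.degree = 3) :
    ∃ a r₁ r₂ r₃ : K, a ≠ 0 ∧ f.roots = {r₁, r₂, r₃} ∧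
      f = C a * ((X - C r₁) * (X - C r₂) * (X - C r₃)) := by
  have hf0 : f ≠ 0 := ne_zero_of_degree_gt (n := 0) (by rw [hf]; decide)
  have hcard : f.roots.card = 3 := by
    rw [IsAlgClosed.card_roots_eq_natDegree, natDegree_eq_of_degree_eq_some hf]
  obtain ⟨r₁, r₂, r₃, hroots⟩ := Multiset.card_eq_three.mp hcard
  refine ⟨f.leadingCoeff, r₁, r₂, r₃, leadingCoeff_ne_zero.mpr hf0, hroots, ?_⟩
  conv_lhs => rw [(IsAlgClosed.splits f).eq_prod_roots, hroots]
  simp [mul_assoc]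

theorem derivative_C_mul_prod_X_sub_C (a r₁ r₂ r₃ : K) :
    derivative (C a * ((X - C r₁) * (X - C r₂) * (X - C r₃))) =
      C (3 * a) * X ^ 2 + C (-(2 * a * (r₁ + r₂ + r₃))) * X
        + C (a * (r₁ * r₂ + r₁ * r₃ + r₂ * r₃)) := by
  simp only [derivative_mul, derivative_C, derivative_sub, derivative_X, map_mul, map_neg,
    map_add, map_ofNat]
  ring

variable [CharZero K]

noncomputable def cubicPrimitive (r₁ r₂ r₃ : K) : K[X] :=
  C (1 / 4) * X ^ 4 - C ((r₁ + r₂ + r₃) / 3) * X ^ 3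
    + C ((r₁ * r₂ + r₁ * r₃ + r₂ * r₃) / 2) * X ^ 2 - C (r₁ * r₂ * r₃) * X

theorem derivative_cubicPrimitive (r₁ r₂ r₃ : K) :
    derivative (cubicPrimitive r₁ r₂ r₃) = (X - C r₁) * (X - C r₂) * (X - C r₃) := by
  simp only [cubicPrimitive, derivative_sub, derivative_add, derivative_C_mul_X_pow,
    derivative_C_mul_X]
  norm_num
  ring

theorem exists_eq_C_mul_cubicPrimitive_add_C {F : K[X]} {a r₁ r₂ r₃ : K}
    (hF : derivative F = C a * ((X - C r₁) * (X - C r₂) * (X - C r₃))) :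
    ∃ c, F = C a * cubicPrimitive r₁ r₂ r₃ + C c := by
  have hconst : derivative (F - C a * cubicPrimitive r₁ r₂ r₃) = 0 := by
    rw [derivative_sub, derivative_C_mul, derivative_cubicPrimitive, hF, sub_self]
  refine ⟨(F - C a * cubicPrimitive r₁ r₂ r₃).coeff 0, ?_⟩
  rw [← eq_C_of_natDegree_eq_zero (derivative_eq_zero.mp hconst)]
  ring

theorem exists_roots_derivative_eq_pair [IsAlgClosed K] {a : K} (ha : a ≠ 0) (r₁ r₂ r₃ : K) :
    ∃ t₁ t₂ : K,
      (derivative (C a * ((X - C r₁) * (X - C r₂) * (X - C r₃)))).roots = {t₁, t₂} ∧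
      t₁ + t₂ = 2 * (r₁ + r₂ + r₃) / 3 ∧ t₁ * t₂ = (r₁ * r₂ + r₁ * r₃ + r₂ * r₃) / 3 := by
  rw [derivative_C_mul_prod_X_sub_C]
  have h3a : 3 * a ≠ 0 := mul_ne_zero three_ne_zero ha
  have hcard : (C (3 * a) * X ^ 2 + C (-(2 * a * (r₁ + r₂ + r₃))) * X
      + C (a * (r₁ * r₂ + r₁ * r₃ + r₂ * r₃))).roots.card = 2 := by
    rw [IsAlgClosed.card_roots_eq_natDegree, natDegree_quadratic h3a]
  obtain ⟨t₁, t₂, hroots⟩ := Multiset.card_eq_two.mp hcard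
  obtain ⟨hsum, hprod⟩ := (roots_quadratic_eq_pair_iff_of_ne_zero h3a).mp hroots
  refine ⟨t₁, t₂, hroots, ?_, ?_⟩
  · field_simp
    exact mul_left_cancel₀ ha (by linear_combination hsum)
  · field_simp
    exact mul_left_cancel₀ ha (by linear_combination -hprod)

theorem cubicPrimitive_relation {r₁ r₂ r₃ t₁ t₂ z : K}
    (hsum : t₁ + t₂ = 2 * (r₁ + r₂ + r₃) / 3)
    (hprod : t₁ * t₂ = (r₁ * r₂ + r₁ * r₃ + r₂ * r₃) / 3) (hz : z = (r₁ + r₂ + r₃) / 3) :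
    let g := (cubicPrimitive r₁ r₂ r₃).eval
    5 * ((g r₁ + g r₂ + g r₃) / 3) - 6 * ((g t₁ + g t₂) / 2) + g z = 0 := by
  intro g
  have power_sums : g t₁ + g t₂ =
      ((t₁ + t₂) ^ 4 - 4 * (t₁ + t₂) ^ 2 * (t₁ * t₂) + 2 * (t₁ * t₂) ^ 2) / 4
      - (r₁ + r₂ + r₃) / 3 * ((t₁ + t₂) ^ 3 - 3 * (t₁ + t₂) * (t₁ * t₂))
      + (r₁ * r₂ + r₁ * r₃ + r₂ * r₃) / 2 * ((t₁ + t₂) ^ 2 - 2 * (t₁ * t₂))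
      - r₁ * r₂ * r₃ * (t₁ + t₂) := by
    simp only [g, cubicPrimitive, eval_sub, eval_add, eval_mul, eval_C, eval_pow, eval_X]
    ring
  rw [power_sums, hsum, hprod, hz]
  simp only [g, cubicPrimitive, eval_sub, eval_add, eval_mul, eval_C, eval_pow, eval_X]
  ring

end

/-- For any cubic `f` over `ℂ` and any antiderivative `F` of `f` (any constant of
integration), `5·(average of F over roots of f) − 6·(average of F over roots of f')
+ 1·F(z) = 0`, where `z` is the root of `f''`. -/
theorem cubic_antiderivative_relation (f : Polynomial ℂ) (hf : f.degree = 3)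
    (F : Polynomial ℂ) (hF : derivative F = f)
    (z : ℂ) (hz : (derivative (derivative f)).eval z = 0) :
    5 * ((f.roots.map (fun r => F.eval r)).sum / 3)
      - 6 * (((derivative f).roots.map (fun t => F.eval t)).sum / 2)
      + 1 * F.eval z = 0 := by
  obtain ⟨a, r₁, r₂, r₃, ha, hroots, rfl⟩ := exists_eq_C_mul_prod_X_sub_C_of_degree_eq_three hf
  obtain ⟨c, rfl⟩ := exists_eq_C_mul_cubicPrimitive_add_C hF
  obtain ⟨t₁, t₂, hcrit, hsum, hprod⟩ := exists_roots_derivative_eq_pair ha r₁ r₂ r₃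
  have hinfl : z = (r₁ + r₂ + r₃) / 3 := by
    norm_num [ha] at hz
    linear_combination hz / 6
  rw [hroots, hcrit]
  simp only [Multiset.insert_eq_cons, Multiset.map_cons, Multiset.map_singleton,
    Multiset.sum_cons, Multiset.sum_singleton, eval_add, eval_mul, eval_C]
  linear_combination a * cubicPrimitive_relation hsum hprod hinfl
end
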